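/- arXiv:math/0611860 — 3 statements merged into one kernel-verified Lean document; each statement's English description precedes it below -/
import Mathlib

section
/- Let α ∈ (0,1] with α ≠ 1/2, and set γ(α) = ∫₀^∞ log x dν_α(x). Then ∫_{[0,1]} log x dν_α(x) = ((α+1)(1−α)/(1−2α))·γ(α) and ∫_{[1,∞)} log x dν_α(x) = (α(α−2)/(1−2α))·γ(α). -/
open MeasureTheory Filter Set Topology

noncomputable section

/-- Endpoints (as pairs of nonnegative integers, `(a,b)` representing `a/b`, with `1/0 = ∞`)
of the Stern-Brocot interval obtained from `[0/1, 1/0]` by following the list of choices `w`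
(`true` = left sub-interval, `false` = right sub-interval). -/
def sbGo : (ℕ × ℕ) × (ℕ × ℕ) → List Bool → (ℕ × ℕ) × (ℕ × ℕ)
  | I, [] => I
  | ((a, b), (c, d)), (lft :: w) =>
      if lft then sbGo ((a, b), (a + c, b + d)) w else sbGo ((a + c, b + d), (c, d)) w

/-- The Stern-Brocot interval of rank `w.length` indexed by the list of choices `w`. -/
def sb (w : List Bool) : (ℕ × ℕ) × (ℕ × ℕ) := sbGo ((0, 1), (1, 0)) w

/-- The intersection of a Stern-Brocot interval with `[0, ∞)`, as a subset of `ℝ`. -/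
def sbSet : (ℕ × ℕ) × (ℕ × ℕ) → Set ℝ
  | ((a, b), (c, d)) =>
      if d = 0 then Set.Ici ((a : ℝ) / (b : ℝ))
      else Set.Icc ((a : ℝ) / (b : ℝ)) ((c : ℝ) / (d : ℝ))

-- one-step children
def sbL : (ℕ × ℕ) × (ℕ × ℕ) → (ℕ × ℕ) × (ℕ × ℕ)
  | ((a, b), (c, d)) => ((a, b), (a + c, b + d))
def sbR : (ℕ × ℕ) × (ℕ × ℕ) → (ℕ × ℕ) × (ℕ × ℕ)
  | ((a, b), (c, d)) => ((a + c, b + d), (c, d))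

def sbDet (I : (ℕ × ℕ) × (ℕ × ℕ)) : Prop := I.1.1 * I.2.2 + 1 = I.1.2 * I.2.1

lemma sbGo_cons (I : (ℕ × ℕ) × (ℕ × ℕ)) (x : Bool) (w : List Bool) :
    sbGo I (x :: w) = sbGo (if x then sbL I else sbR I) w := by
  obtain ⟨⟨a, b⟩, ⟨c, d⟩⟩ := I
  cases x <;> simp [sbGo, sbL, sbR]

lemma sbGo_append (I : (ℕ × ℕ) × (ℕ × ℕ)) (w w' : List Bool) :
    sbGo I (w ++ w') = sbGo (sbGo I w) w' := by
  induction w generalizing I with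
  | nil => simp [sbGo]
  | cons x w ih => rw [List.cons_append, sbGo_cons, sbGo_cons, ih]

lemma sb_append (w w' : List Bool) : sb (w ++ w') = sbGo (sb w) w' := sbGo_append _ _ _

lemma sbGo_snoc (I : (ℕ × ℕ) × (ℕ × ℕ)) (w : List Bool) (x : Bool) :
    sbGo I (w ++ [x]) = if x then sbL (sbGo I w) else sbR (sbGo I w) := by
  rw [sbGo_append, sbGo_cons]
  rcases sbGo I w with ⟨⟨a, b⟩, ⟨c, d⟩⟩
  cases x <;> simp [sbGo, sbL, sbR]

lemma sb_snoc (w : List Bool) (x : Bool) :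
    sb (w ++ [x]) = if x then sbL (sb w) else sbR (sb w) := sbGo_snoc _ _ _

lemma sbDet_sbL {I} (h : sbDet I) : sbDet (sbL I) := by
  obtain ⟨⟨a, b⟩, ⟨c, d⟩⟩ := I
  simp only [sbDet, sbL] at *
  calc a * (b + d) + 1 = a * b + (a * d + 1) := by ring
    _ = a * b + b * c := by rw [h]
    _ = b * (a + c) := by ring

lemma sbDet_sbR {I} (h : sbDet I) : sbDet (sbR I) := by
  obtain ⟨⟨a, b⟩, ⟨c, d⟩⟩ := I
  simp only [sbDet, sbR] at *
  calc (a + c) * d + 1 = (a * d + 1) + c * d := by ring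
    _ = b * c + c * d := by rw [h]
    _ = (b + d) * c := by ring

lemma sbDet_sbGo {I} (h : sbDet I) (w : List Bool) : sbDet (sbGo I w) := by
  induction w generalizing I with
  | nil => simpa [sbGo]
  | cons x w ih =>
      rw [sbGo_cons]
      cases x <;> simp only [if_true, if_false, Bool.false_eq_true] <;>
        [exact ih (sbDet_sbR h); exact ih (sbDet_sbL h)]

lemma sbDet_sb (w : List Bool) : sbDet (sb w) := sbDet_sbGo (by simp [sbDet]) w

lemma sbDet.b_pos {I} (h : sbDet I) : 1 ≤ I.1.2 := by
  obtain ⟨⟨a, b⟩, ⟨c, d⟩⟩ := I; simp [sbDet] at h; by_contra hb; push_neg at hb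
  interval_cases b <;> omega

lemma sbDet.c_pos {I} (h : sbDet I) : 1 ≤ I.2.1 := by
  obtain ⟨⟨a, b⟩, ⟨c, d⟩⟩ := I; simp [sbDet] at h; by_contra hb; push_neg at hb
  interval_cases c <;> omega

/-- left endpoint as a real -/
def lep (I : (ℕ × ℕ) × (ℕ × ℕ)) : ℝ := (I.1.1 : ℝ) / (I.1.2 : ℝ)
/-- mediant as a real -/
def med (I : (ℕ × ℕ) × (ℕ × ℕ)) : ℝ := ((I.1.1 + I.2.1 : ℕ) : ℝ) / ((I.1.2 + I.2.2 : ℕ) : ℝ)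

lemma sbSet_eq (I : (ℕ × ℕ) × (ℕ × ℕ)) :
    sbSet I = if I.2.2 = 0 then Set.Ici (lep I)
      else Set.Icc (lep I) ((I.2.1 : ℝ) / (I.2.2 : ℝ)) := by
  rcases I with ⟨⟨a, b⟩, ⟨c, d⟩⟩; rfl

namespace sbDet

variable {I : (ℕ × ℕ) × (ℕ × ℕ)} (h : sbDet I)

/-- the key real inequality: a*d < b*c as reals -/
lemma real_det (h : sbDet I) : (I.1.1 : ℝ) * I.2.2 + 1 = I.1.2 * I.2.1 := by
  have := h; unfold sbDet at this
  exact_mod_cast congrArg (Nat.cast : ℕ → ℝ) this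

lemma b_posR (h : sbDet I) : (0 : ℝ) < I.1.2 := by exact_mod_cast h.b_pos
lemma c_posR (h : sbDet I) : (0 : ℝ) < I.2.1 := by exact_mod_cast h.c_pos
lemma bd_posR (h : sbDet I) : (0 : ℝ) < I.1.2 + I.2.2 := by
  have := h.b_posR; have : (0:ℝ) ≤ (I.2.2 : ℝ) := Nat.cast_nonneg _
  linarith [h.b_posR]

lemma lep_lt_med (h : sbDet I) : lep I < med I := by
  rw [lep, med, div_lt_div_iff₀ h.b_posR (by exact_mod_cast h.bd_posR)]
  push_cast
  nlinarith [h.real_det]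

lemma med_lt_rep (h : sbDet I) (hd : I.2.2 ≠ 0) :
    med I < (I.2.1 : ℝ) / (I.2.2 : ℝ) := by
  have hd' : (0:ℝ) < (I.2.2 : ℝ) := by exact_mod_cast Nat.pos_of_ne_zero hd
  rw [med, div_lt_div_iff₀ (by exact_mod_cast h.bd_posR) hd']
  push_cast
  nlinarith [h.real_det]

lemma lep_lt_rep (h : sbDet I) (hd : I.2.2 ≠ 0) :
    lep I < (I.2.1 : ℝ) / (I.2.2 : ℝ) :=
  (h.lep_lt_med).trans (h.med_lt_rep hd)

lemma lep_mem (h : sbDet I) : lep I ∈ sbSet I := by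
  rw [sbSet_eq]
  split
  · exact self_mem_Ici
  · exact ⟨le_refl _, (h.lep_lt_rep (by assumption)).le⟩

lemma rep_sub_lep (h : sbDet I) (hd : I.2.2 ≠ 0) :
    (I.2.1 : ℝ) / (I.2.2 : ℝ) - lep I = 1 / (I.1.2 * I.2.2) := by
  have hd' : (0:ℝ) < (I.2.2 : ℝ) := by exact_mod_cast Nat.pos_of_ne_zero hd
  have hb := h.b_posR
  rw [lep, div_sub_div _ _ (ne_of_gt hd') (ne_of_gt hb), eq_div_iff (by positivity)]
  field_simp
  linear_combination (-1 : ℝ) * h.real_det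

end sbDet

lemma mem_sbSet_iff {I : (ℕ × ℕ) × (ℕ × ℕ)} {y : ℝ} :
    y ∈ sbSet I ↔ (lep I ≤ y ∧ (I.2.2 = 0 ∨ y ≤ (I.2.1 : ℝ) / (I.2.2 : ℝ))) := by
  rw [sbSet_eq]; split
  · simp_all [Set.mem_Ici]
  · simp_all [Set.mem_Icc]

lemma lep_sbL (I : (ℕ × ℕ) × (ℕ × ℕ)) : lep (sbL I) = lep I := by
  rcases I with ⟨⟨a, b⟩, ⟨c, d⟩⟩; rfl

lemma lep_sbR (I : (ℕ × ℕ) × (ℕ × ℕ)) : lep (sbR I) = med I := by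
  rcases I with ⟨⟨a, b⟩, ⟨c, d⟩⟩; rfl

lemma sbSet_sbL {I : (ℕ × ℕ) × (ℕ × ℕ)} (h : sbDet I) :
    sbSet (sbL I) = Set.Icc (lep I) (med I) := by
  rcases I with ⟨⟨a, b⟩, ⟨c, d⟩⟩
  have hb1 : 1 ≤ b := h.b_pos
  show sbSet ((a,b),(a+c,b+d)) = _
  rw [sbSet_eq]
  have : b + d ≠ 0 := by omega
  simp only [this, if_neg]
  rfl

lemma sbSet_sbR {I : (ℕ × ℕ) × (ℕ × ℕ)} (h : sbDet I) :
    sbSet (sbR I) = if I.2.2 = 0 then Set.Ici (med I)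
      else Set.Icc (med I) ((I.2.1 : ℝ) / (I.2.2 : ℝ)) := by
  rcases I with ⟨⟨a, b⟩, ⟨c, d⟩⟩
  show sbSet ((a+c,b+d),(c,d)) = _
  rw [sbSet_eq]
  rfl

lemma sbSet_union {I : (ℕ × ℕ) × (ℕ × ℕ)} (h : sbDet I) :
    sbSet (sbL I) ∪ sbSet (sbR I) = sbSet I := by
  rw [sbSet_sbL h, sbSet_sbR h, sbSet_eq]
  split
  · exact Set.Icc_union_Ici_eq_Ici h.lep_lt_med.le
  · exact Set.Icc_union_Icc_eq_Icc h.lep_lt_med.le (h.med_lt_rep (by assumption)).le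

lemma sbSet_inter {I : (ℕ × ℕ) × (ℕ × ℕ)} (h : sbDet I) :
    sbSet (sbL I) ∩ sbSet (sbR I) = {med I} := by
  rw [sbSet_sbL h, sbSet_sbR h]
  split
  · ext y
    simp only [Set.mem_inter_iff, Set.mem_Icc, Set.mem_Ici, Set.mem_singleton_iff]
    constructor
    · rintro ⟨⟨_, h2⟩, h3⟩; linarith
    · rintro rfl; exact ⟨⟨h.lep_lt_med.le, le_refl _⟩, le_refl _⟩
  · rw [Set.Icc_inter_Icc]
    simp [max_eq_right h.lep_lt_med.le, min_eq_left (h.med_lt_rep (by assumption)).le]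

lemma sbSet_subset {I : (ℕ × ℕ) × (ℕ × ℕ)} (h : sbDet I) (w : List Bool) :
    sbSet (sbGo I w) ⊆ sbSet I := by
  induction w generalizing I with
  | nil => simp [sbGo]
  | cons x w ih =>
      rw [sbGo_cons]
      have hL : sbSet (sbL I) ⊆ sbSet I := by
        rw [← sbSet_union h]; exact Set.subset_union_left
      have hR : sbSet (sbR I) ⊆ sbSet I := by
        rw [← sbSet_union h]; exact Set.subset_union_right
      cases x
      · simpa using (ih (sbDet_sbR h)).trans hR
      · simpa using (ih (sbDet_sbL h)).trans hL

lemma sbSet_nonneg {I : (ℕ × ℕ) × (ℕ × ℕ)} : sbSet I ⊆ Set.Ici (0:ℝ) := by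
  rcases I with ⟨⟨a, b⟩, ⟨c, d⟩⟩
  intro y hy
  rw [mem_sbSet_iff] at hy
  have h0 : (0:ℝ) ≤ lep ((a,b),(c,d)) := by
    unfold lep; positivity
  exact Set.mem_Ici.mpr (le_trans h0 hy.1)

lemma measurableSet_sbSet (I : (ℕ × ℕ) × (ℕ × ℕ)) : MeasurableSet (sbSet I) := by
  rw [sbSet_eq]
  split
  · exact measurableSet_Ici
  · exact measurableSet_Icc

section Weights
variable (α : ℝ)

/-- proportion of mass the child indexed by `b` receives from its rank-`r` parent -/
def fct (r : ℕ) (b : Bool) : ℝ := if (Even r ↔ b = true) then 1 - α else α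

/-- weight of a word starting at rank `r` -/
def wt : ℕ → List Bool → ℝ
  | _, [] => 1
  | r, b :: w => fct α r b * wt (r + 1) w

variable {α}

lemma fct_nonneg (h0 : 0 ≤ α) (h1 : α ≤ 1) (r : ℕ) (b : Bool) : 0 ≤ fct α r b := by
  unfold fct; split <;> linarith

lemma fct_le_one (h0 : 0 ≤ α) (h1 : α ≤ 1) (r : ℕ) (b : Bool) : fct α r b ≤ 1 := by
  unfold fct; split <;> linarith

lemma fct_succ (r : ℕ) (b : Bool) : fct α (r + 1) b = fct α r (!b) := by
  unfold fct
  by_cases he : Even r <;> cases b <;>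
    simp [Nat.even_add_one, he]

lemma fct_add_fct (r : ℕ) : fct α r true + fct α r false = 1 := by
  unfold fct; by_cases he : Even r <;> simp [he] <;> ring

lemma fct_mul_fct_same (r : ℕ) (b : Bool) : fct α r b * fct α (r + 1) b = α * (1 - α) := by
  rw [fct_succ]; unfold fct
  by_cases he : Even r <;> cases b <;> simp [he] <;> ring

lemma wt_nonneg (h0 : 0 ≤ α) (h1 : α ≤ 1) (r : ℕ) (w : List Bool) : 0 ≤ wt α r w := by
  induction w generalizing r with
  | nil => norm_num [wt]
  | cons b w ih => exact mul_nonneg (fct_nonneg h0 h1 _ _) (ih _)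

lemma wt_le_one (h0 : 0 ≤ α) (h1 : α ≤ 1) (r : ℕ) (w : List Bool) : wt α r w ≤ 1 := by
  induction w generalizing r with
  | nil => norm_num [wt]
  | cons b w ih =>
      calc fct α r b * wt α (r + 1) w ≤ 1 * 1 :=
        mul_le_mul (fct_le_one h0 h1 _ _) (ih _) (wt_nonneg h0 h1 _ _) one_pos.le
      _ = 1 := one_mul 1

lemma wt_succ_eq_map_not (r : ℕ) (w : List Bool) :
    wt α (r + 1) w = wt α r (w.map (fun b => !b)) := by
  induction w generalizing r with
  | nil => rfl
  | cons b w ih => simp only [wt, List.map_cons, fct_succ, ih]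

lemma wt_snoc (r : ℕ) (w : List Bool) (b : Bool) :
    wt α r (w ++ [b]) = wt α r w * fct α (r + w.length) b := by
  induction w generalizing r with
  | nil => simp [wt]
  | cons x w ih =>
      simp only [List.cons_append, wt, List.append_eq, ih, List.length_cons, mul_assoc]
      rw [show r + (w.length + 1) = r + 1 + w.length from by omega]

lemma wt_replicate_pairs (h0 : 0 ≤ α) (h1 : α ≤ 1) (r k : ℕ) (b : Bool) :
    wt α r (List.replicate (2 * k) b) ≤ (1 / 4) ^ k := by
  induction k generalizing r with
  | zero => norm_num [wt]
  | succ k ih =>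
      have : List.replicate (2 * (k + 1)) b = b :: b :: List.replicate (2 * k) b := by
        rw [show 2 * (k + 1) = (2 * k + 1) + 1 by ring]
        simp [List.replicate_succ]
      rw [this]
      show fct α r b * (fct α (r + 1) b * wt α (r + 1 + 1) (List.replicate (2 * k) b)) ≤ _
      rw [← mul_assoc, fct_mul_fct_same]
      have h4 : α * (1 - α) ≤ 1 / 4 := by nlinarith [sq_nonneg (α - 1/2)]
      calc α * (1 - α) * wt α (r + 2) (List.replicate (2 * k) b)
          ≤ (1 / 4) * (1 / 4) ^ k := by
            apply mul_le_mul h4 (ih _) (wt_nonneg h0 h1 _ _) (by norm_num)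
      _ = (1 / 4) ^ (k + 1) := by ring

lemma wt_replicate_le (h0 : 0 ≤ α) (h1 : α ≤ 1) (r m : ℕ) (b : Bool) :
    wt α r (List.replicate m b) ≤ 2 * (1 / 2) ^ m := by
  rcases Nat.even_or_odd m with ⟨k, hk⟩ | ⟨k, hk⟩
  · subst hk
    calc wt α r (List.replicate (k + k) b) ≤ (1/4) ^ k := by
          rw [show k + k = 2 * k by ring]; exact wt_replicate_pairs h0 h1 r k b
    _ ≤ 2 * (1 / 2) ^ (k + k) := by
        rw [show ((1:ℝ)/2) ^ (k + k) = (1/4)^k by rw [pow_add, ← mul_pow]; norm_num]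
        nlinarith [pow_nonneg (by norm_num : (0:ℝ) ≤ 1/4) k]
  · subst hk
    have : List.replicate (2 * k + 1) b = b :: List.replicate (2 * k) b := rfl
    rw [this]
    show fct α r b * wt α (r + 1) (List.replicate (2 * k) b) ≤ _
    have h1' := wt_replicate_pairs h0 h1 (r + 1) k b
    have hf := fct_le_one h0 h1 r b
    have hf0 := fct_nonneg h0 h1 r b
    have hw0 := wt_nonneg h0 h1 (r + 1) (List.replicate (2 * k) b)
    calc fct α r b * wt α (r + 1) (List.replicate (2 * k) b) ≤ 1 * (1/4) ^ k := by
          apply mul_le_mul hf h1' hw0 one_pos.le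
    _ ≤ 2 * (1 / 2) ^ (2 * k + 1) := by
        rw [show ((1:ℝ)/2) ^ (2 * k + 1) = (1/2) * ((1/4)^k) by
          rw [pow_succ', two_mul, pow_add, ← mul_pow]; norm_num]
        nlinarith [pow_nonneg (by norm_num : (0:ℝ) ≤ 1/4) k]

end Weights

section Transforms

/-- conjugation taking the main tree to the right subtree via x ↦ (x+1)/x -/
def trF (I : (ℕ × ℕ) × (ℕ × ℕ)) : (ℕ × ℕ) × (ℕ × ℕ) :=
  ((I.2.1 + I.2.2, I.2.1), (I.1.1 + I.1.2, I.1.1))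

/-- conjugation taking the main tree to the left subtree via x ↦ 1/(x+1) -/
def trG (I : (ℕ × ℕ) × (ℕ × ℕ)) : (ℕ × ℕ) × (ℕ × ℕ) :=
  ((I.2.2, I.2.1 + I.2.2), (I.1.2, I.1.1 + I.1.2))

lemma trF_sbL (I) : trF (sbL I) = sbR (trF I) := by
  rcases I with ⟨⟨a, b⟩, ⟨c, d⟩⟩
  simp only [trF, sbL, sbR, Prod.mk.injEq, and_true, true_and, eq_self_iff_true]
  omega

lemma trF_sbR (I) : trF (sbR I) = sbL (trF I) := by
  rcases I with ⟨⟨a, b⟩, ⟨c, d⟩⟩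
  simp only [trF, sbL, sbR, Prod.mk.injEq, and_true, true_and, eq_self_iff_true]
  omega

lemma trG_sbL (I) : trG (sbL I) = sbR (trG I) := by
  rcases I with ⟨⟨a, b⟩, ⟨c, d⟩⟩
  simp only [trG, sbL, sbR, Prod.mk.injEq, and_true, true_and, eq_self_iff_true]
  omega

lemma trG_sbR (I) : trG (sbR I) = sbL (trG I) := by
  rcases I with ⟨⟨a, b⟩, ⟨c, d⟩⟩
  simp only [trG, sbL, sbR, Prod.mk.injEq, and_true, true_and, eq_self_iff_true]
  omega

lemma sbGo_trF (I) (w : List Bool) :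
    sbGo (trF I) (w.map (fun b => !b)) = trF (sbGo I w) := by
  induction w generalizing I with
  | nil => rfl
  | cons x w ih =>
      rw [List.map_cons, sbGo_cons, sbGo_cons]
      cases x
      · simp only [Bool.not_false, if_true, if_false, Bool.false_eq_true]
        rw [← trF_sbR]; exact ih _
      · simp only [Bool.not_true, if_true, if_false, Bool.false_eq_true]
        rw [← trF_sbL]; exact ih _

lemma sbGo_trG (I) (w : List Bool) :
    sbGo (trG I) (w.map (fun b => !b)) = trG (sbGo I w) := by
  induction w generalizing I with
  | nil => rfl
  | cons x w ih =>
      rw [List.map_cons, sbGo_cons, sbGo_cons]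
      cases x
      · simp only [Bool.not_false, if_true, if_false, Bool.false_eq_true]
        rw [← trG_sbR]; exact ih _
      · simp only [Bool.not_true, if_true, if_false, Bool.false_eq_true]
        rw [← trG_sbL]; exact ih _

lemma sb_false_cons (u : List Bool) :
    sb (false :: u) = trF (sb (u.map (fun b => !b))) := by
  have h0 : sbGo ((0,1),(1,0)) [false] = trF ((0,1),(1,0)) := by
    simp [sbGo, trF]
  calc sb (false :: u) = sbGo (trF ((0,1),(1,0))) u := by
        rw [sb, show (false :: u) = [false] ++ u by rfl, sbGo_append, h0]
  _ = trF (sb (u.map (fun b => !b))) := by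
      rw [sb, ← sbGo_trF]
      congr 1
      simp [List.map_map, Function.comp_def]

lemma sb_true_cons (u : List Bool) :
    sb (true :: u) = trG (sb (u.map (fun b => !b))) := by
  have h0 : sbGo ((0,1),(1,0)) [true] = trG ((0,1),(1,0)) := by
    simp [sbGo, trG]
  calc sb (true :: u) = sbGo (trG ((0,1),(1,0))) u := by
        rw [sb, show (true :: u) = [true] ++ u by rfl, sbGo_append, h0]
  _ = trG (sb (u.map (fun b => !b))) := by
      rw [sb, ← sbGo_trG]
      congr 1
      simp [List.map_map, Function.comp_def]

end Transforms

section Chain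

/-- the canonical nested chain of Stern-Brocot words around `y` -/
def word (y : ℝ) : ℕ → List Bool
  | 0 => []
  | n + 1 => word y n ++ [decide (y ≤ med (sb (word y n)))]

lemma sb_word_succ (y : ℝ) (n : ℕ) :
    sb (word y (n + 1)) =
      if y ≤ med (sb (word y n)) then sbL (sb (word y n)) else sbR (sb (word y n)) := by
  rw [word, sb_snoc]
  by_cases h : y ≤ med (sb (word y n)) <;> simp [h]

lemma mem_sbL {I : (ℕ × ℕ) × (ℕ × ℕ)} (h : sbDet I) {y : ℝ}
    (hy : y ∈ sbSet I) (hm : y ≤ med I) : y ∈ sbSet (sbL I) := by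
  rw [sbSet_sbL h]
  exact ⟨(mem_sbSet_iff.mp hy).1, hm⟩

lemma mem_sbR {I : (ℕ × ℕ) × (ℕ × ℕ)} (h : sbDet I) {y : ℝ}
    (hy : y ∈ sbSet I) (hm : ¬ y ≤ med I) : y ∈ sbSet (sbR I) := by
  rw [sbSet_sbR h]
  rcases (mem_sbSet_iff.mp hy) with ⟨h1, h2⟩
  split
  · exact Set.mem_Ici.mpr (le_of_lt (lt_of_not_ge hm))
  · rcases h2 with h2 | h2
    · exact absurd h2 (by assumption)
    · exact ⟨le_of_lt (lt_of_not_ge hm), h2⟩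

lemma mem_word {y : ℝ} (hy : 0 ≤ y) (n : ℕ) : y ∈ sbSet (sb (word y n)) := by
  induction n with
  | zero =>
      rw [mem_sbSet_iff]
      constructor
      · rw [show lep (sb (word y 0)) = ((0:ℕ):ℝ)/((1:ℕ):ℝ) from rfl]
        simpa using hy
      · left; rfl
  | succ n ih =>
      rw [sb_word_succ]
      split
      · exact mem_sbL (sbDet_sb _) ih (by assumption)
      · exact mem_sbR (sbDet_sb _) ih (by assumption)

lemma sbGo_replicate_true (a b c d k : ℕ) :
    sbGo ((a, b), (c, d)) (List.replicate k true) = ((a, b), (k * a + c, k * b + d)) := by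
  induction k generalizing c d with
  | zero => simp [sbGo]
  | succ k ih =>
      rw [List.replicate_succ, sbGo_cons]
      simp only [if_true]
      show sbGo ((a, b), (a + c, b + d)) (List.replicate k true) = _
      rw [ih, show k * a + (a + c) = (k+1) * a + c from by ring,
        show k * b + (b + d) = (k+1) * b + d from by ring]

lemma sbGo_replicate_false (a b c d k : ℕ) :
    sbGo ((a, b), (c, d)) (List.replicate k false) = ((k * c + a, k * d + b), (c, d)) := by
  induction k generalizing a b with
  | zero => simp [sbGo]
  | succ k ih =>
      rw [List.replicate_succ, sbGo_cons]
      simp only [Bool.false_eq_true, if_false]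
      show sbGo ((a + c, b + d), (c, d)) (List.replicate k false) = _
      rw [ih, show k * c + (a + c) = (k+1) * c + a from by ring,
        show k * d + (b + d) = (k+1) * d + b from by ring]

lemma word_add_replicate {y : ℝ} {N : ℕ} {v : Bool}
    (h : ∀ n, N ≤ n → ((y ≤ med (sb (word y n))) ↔ v = true)) (k : ℕ) :
    word y (N + k) = word y N ++ List.replicate k v := by
  induction k with
  | zero => simp
  | succ k ih =>
      have hstep : word y (N + (k + 1)) =
          word y (N + k) ++ [decide (y ≤ med (sb (word y (N + k))))] := rfl
      have hv : decide (y ≤ med (sb (word y (N + k)))) = v := by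
        cases v
        · simp only [decide_eq_false_iff_not]
          intro hc
          exact absurd ((h (N + k) (by omega)).mp hc) (by simp)
        · simp only [decide_eq_true_eq]
          exact (h (N + k) (by omega)).mpr rfl
      rw [hstep, hv, ih, List.append_assoc, ← List.replicate_succ']

lemma word_bd_mono {y : ℝ} {m n : ℕ} (h : m ≤ n) :
    (sb (word y m)).1.2 ≤ (sb (word y n)).1.2 ∧ (sb (word y m)).2.2 ≤ (sb (word y n)).2.2 := by
  induction n with
  | zero => simp_all
  | succ n ih =>
      rcases Nat.lt_or_ge m (n + 1) with hm | hm
      · have H := ih (by omega)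
        rw [sb_word_succ]
        rcases hsb : sb (word y n) with ⟨⟨a, b⟩, ⟨c, d⟩⟩
        rw [hsb] at H
        split
        · exact ⟨H.1, le_trans H.2 (by show d ≤ b + d; omega)⟩
        · exact ⟨le_trans H.1 (by show b ≤ b + d; omega), H.2⟩
      · have : m = n + 1 := by omega
        subst this; exact ⟨le_refl _, le_refl _⟩

lemma sb_word_zero (y : ℝ) : sb (word y 0) = ((0, 1), (1, 0)) := rfl

/-- main chain lemma: any `y > t ≥ 0` lies in a Stern-Brocot interval
with left endpoint `> t` -/
lemma exists_word_gt {t y : ℝ} (ht : 0 ≤ t) (hty : t < y) :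
    ∃ w : List Bool, y ∈ sbSet (sb w) ∧ t < lep (sb w) := by
  have hy0 : 0 ≤ y := le_of_lt (lt_of_le_of_lt ht hty)
  by_contra hcon
  push_neg at hcon
  have hlep : ∀ n, lep (sb (word y n)) ≤ t := fun n => hcon _ (mem_word hy0 n)
  by_cases hinfL : ∀ N, ∃ n, N ≤ n ∧ y ≤ med (sb (word y n))
  · by_cases hinfR : ∀ N, ∃ n, N ≤ n ∧ ¬ y ≤ med (sb (word y n))
    · -- infinitely many of both: denominators blow up
      have grow : ∀ M : ℕ, ∃ n, M ≤ (sb (word y n)).1.2 ∧ M ≤ (sb (word y n)).2.2 := by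
        intro M
        induction M with
        | zero => exact ⟨0, by omega, by omega⟩
        | succ M ihM =>
            obtain ⟨n₀, hb0, hd0⟩ := ihM
            obtain ⟨n₁, hn₁, hL⟩ := hinfL n₀
            have hb1 : 1 ≤ (sb (word y n₁)).1.2 := by
              have := (word_bd_mono (y := y) (Nat.zero_le n₁)).1
              rw [sb_word_zero] at this; exact this
            have hbM : M ≤ (sb (word y n₁)).1.2 := le_trans hb0 (word_bd_mono hn₁).1
            have hdM : M ≤ (sb (word y n₁)).2.2 := le_trans hd0 (word_bd_mono hn₁).2
            have hd1 : M + 1 ≤ (sb (word y (n₁ + 1))).2.2 := by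
              rw [sb_word_succ, if_pos hL]
              rcases hsb : sb (word y n₁) with ⟨⟨a, b⟩, ⟨c, d⟩⟩
              rw [hsb] at hb1 hdM
              show M + 1 ≤ b + d
              simp only at hb1 hdM; omega
            obtain ⟨n₂, hn₂, hR⟩ := hinfR (n₁ + 1)
            have hd2 : M + 1 ≤ (sb (word y n₂)).2.2 := le_trans hd1 (word_bd_mono hn₂).2
            refine ⟨n₂ + 1, ?_, ?_⟩
            · rw [sb_word_succ, if_neg hR]
              rcases hsb : sb (word y n₂) with ⟨⟨a, b⟩, ⟨c, d⟩⟩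
              rw [hsb] at hd2
              show M + 1 ≤ b + d
              simp only at hd2; omega
            · rw [sb_word_succ, if_neg hR]
              rcases hsb : sb (word y n₂) with ⟨⟨a, b⟩, ⟨c, d⟩⟩
              rw [hsb] at hd2
              exact hd2
      obtain ⟨M, hM⟩ := exists_nat_gt (1 / (y - t))
      have hytpos : (0:ℝ) < y - t := by linarith
      have hM1 : 1 ≤ M := by
        by_contra hM0
        have : M = 0 := by omega
        subst this
        simp only [Nat.cast_zero] at hM
        have : 0 < 1 / (y - t) := by positivity
        linarith
      obtain ⟨n, hbn, hdn⟩ := grow M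
      have hdet := sbDet_sb (word y n)
      have hmem := mem_word hy0 n
      have hlepn := hlep n
      rcases hsb : sb (word y n) with ⟨⟨a, b⟩, ⟨c, d⟩⟩
      rw [hsb] at hdet hbn hdn hmem hlepn
      simp only at hbn hdn
      have hd0 : d ≠ 0 := by omega
      rw [mem_sbSet_iff] at hmem
      have hyc : y ≤ (c : ℝ) / d := by
        rcases hmem.2 with h | h
        · exact absurd h hd0
        · exact h
      have hsub := hdet.rep_sub_lep hd0
      have hbd : (M : ℝ) ≤ (b : ℝ) * d := by
        have h1 : (M : ℝ) ≤ (d : ℝ) := by exact_mod_cast hdn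
        have hb1 : (1 : ℝ) ≤ (b : ℝ) := by exact_mod_cast (by omega : 1 ≤ b)
        nlinarith
      have hMpos : (0:ℝ) < M := by exact_mod_cast hM1
      have h1bd : 1 / ((b:ℝ) * d) ≤ 1 / M := one_div_le_one_div_of_le hMpos hbd
      have h1M : 1 / (M : ℝ) < y - t := by
        rw [div_lt_iff₀ hMpos]
        rw [div_lt_iff₀ hytpos] at hM
        nlinarith
      have hlepval : lep ((a,b),(c,d)) = (c:ℝ)/d - 1/((b:ℝ)*d) := by
        have h' : ((c:ℝ)/d) - lep ((a,b),(c,d)) = 1/((b:ℝ)*d) := hsub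
        linarith
      rw [hlepval] at hlepn
      linarith
    · -- eventually always left
      push_neg at hinfR
      obtain ⟨N, hN⟩ := hinfR
      have hplus : ∀ n, N ≤ n → ((y ≤ med (sb (word y n))) ↔ true = true) := by
        intro n hn; simpa using hN n hn
      have hword : ∀ k, sb (word y (N + k)) = sbGo (sb (word y N)) (List.replicate k true) :=
        fun k => by rw [word_add_replicate hplus k, sb_append]
      have hdet := sbDet_sb (word y N)
      have hlepN := hlep N
      rcases hsb : sb (word y N) with ⟨⟨a, b⟩, ⟨c, d⟩⟩
      rw [hsb] at hdet hlepN
      have hb : 1 ≤ b := hdet.b_pos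
      have hbR : (0:ℝ) < (b:ℝ) := by exact_mod_cast hb
      have hlepN' : (a:ℝ)/b ≤ t := hlepN
      have hya : (a:ℝ) < y * b := by
        rw [div_le_iff₀ hbR] at hlepN'
        nlinarith
      obtain ⟨k₀, hk₀⟩ := exists_nat_gt (((c:ℝ) - y * d) / (y * (b:ℝ) - (a:ℝ)))
      set K := k₀ + 1 with hK
      have hkK : (k₀ : ℝ) ≤ K := by rw [hK]; push_cast; linarith
      have hk2 : (c:ℝ) - y * d < K * (y * b - a) := by
        rw [div_lt_iff₀ (by linarith)] at hk₀
        nlinarith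
      have hmem := mem_word hy0 (N + K)
      rw [hword K, hsb, sbGo_replicate_true, mem_sbSet_iff] at hmem
      have hKb : K * b + d ≠ 0 := by
        have : 1 ≤ K * b := Nat.one_le_iff_ne_zero.mpr (Nat.mul_ne_zero (by omega) (by omega))
        omega
      have hyK : y ≤ ((K * a + c : ℕ) : ℝ) / ((K * b + d : ℕ) : ℝ) := by
        rcases hmem.2 with h | h
        · exact absurd h hKb
        · exact h
      have hKbd : (0:ℝ) < ((K * b + d : ℕ) : ℝ) := by
        exact_mod_cast Nat.pos_of_ne_zero hKb
      rw [le_div_iff₀ hKbd] at hyK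
      push_cast at hyK hk2
      nlinarith
  · -- eventually always right
    push_neg at hinfL
    obtain ⟨N, hN⟩ := hinfL
    have hplus : ∀ n, N ≤ n → ((y ≤ med (sb (word y n))) ↔ false = true) := by
      intro n hn
      constructor
      · intro hc; exact absurd hc (not_le.mpr (hN n hn))
      · intro hc; exact absurd hc (by simp)
    have hword : ∀ k, sb (word y (N + k)) = sbGo (sb (word y N)) (List.replicate k false) :=
      fun k => by rw [word_add_replicate hplus k, sb_append]
    have hdet := sbDet_sb (word y N)
    have hmemN := mem_word hy0 N
    rcases hsb : sb (word y N) with ⟨⟨a, b⟩, ⟨c, d⟩⟩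
    rw [hsb] at hdet hmemN
    have hb : 1 ≤ b := hdet.b_pos
    have hc : 1 ≤ c := hdet.c_pos
    have hlepk : ∀ k : ℕ, ((k * c + a : ℕ) : ℝ) / ((k * d + b : ℕ) : ℝ) ≤ t := by
      intro k
      have := hlep (N + k)
      rw [hword k, hsb, sbGo_replicate_false] at this
      exact this
    rcases Nat.eq_zero_or_pos d with hd | hd
    · -- d = 0: b = c = 1, lep = k + a → ∞
      subst hd
      have hbc : b * c = 1 := by
        have h' := hdet
        unfold sbDet at h'
        simp only at h'
        omega
      have hb1 : b = 1 := by nlinarith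
      have hc1 : c = 1 := by nlinarith
      obtain ⟨k, hk⟩ := exists_nat_gt t
      have := hlepk k
      rw [hb1, hc1] at this
      simp only [Nat.mul_one, Nat.mul_zero, Nat.zero_add] at this
      push_cast at this
      have ha : (0:ℝ) ≤ (a:ℝ) := Nat.cast_nonneg a
      rw [div_one] at this
      linarith
    · -- d ≥ 1: lep increases to c/d > t
      have hdR : (0:ℝ) < (d:ℝ) := by exact_mod_cast hd
      have hyc : y ≤ (c:ℝ)/d := by
        rw [mem_sbSet_iff] at hmemN
        rcases hmemN.2 with h | h
        · have : d = 0 := h; omega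
        · exact h
      have hcd : t * d < c := by
        rw [le_div_iff₀ hdR] at hyc
        nlinarith
      obtain ⟨k, hk⟩ := exists_nat_gt ((t * b - (a:ℝ)) / ((c:ℝ) - t * d))
      have hk2 : t * b - (a:ℝ) < k * ((c:ℝ) - t * d) := by
        rw [div_lt_iff₀ (by linarith)] at hk
        linarith
      have := hlepk k
      have hkdb : (0:ℝ) < ((k * d + b : ℕ) : ℝ) := by
        have : 1 ≤ k * d + b := by omega
        exact_mod_cast this
      rw [div_le_iff₀ hkdb] at this
      push_cast at this hk2
      nlinarith

end Chain

section PiSystem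

/-- the π-system: Stern-Brocot sets, singletons at left endpoints, negative rays, ∅ -/
def sbC : Set (Set ℝ) :=
  {s | (∃ w : List Bool, s = sbSet (sb w)) ∨ (∃ w : List Bool, s = {lep (sb w)}) ∨
    (∃ t : ℝ, t < 0 ∧ s = Set.Iic t) ∨ s = ∅}

lemma lep_nonneg (w : List Bool) : 0 ≤ lep (sb w) := by
  unfold lep; positivity

lemma sbSet_prefix (u v : List Bool) : sbSet (sb (u ++ v)) ⊆ sbSet (sb u) := by
  rw [sb_append]; exact sbSet_subset (sbDet_sb u) v

lemma sb_inter_mem (w : List Bool) : ∀ (w' u : List Bool),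
    sbSet (sb (u ++ w)) ∩ sbSet (sb (u ++ w')) ∈ sbC := by
  induction w with
  | nil =>
      intro w' u
      simp only [List.append_nil]
      rw [Set.inter_eq_self_of_subset_right (sbSet_prefix u w')]
      exact Or.inl ⟨u ++ w', rfl⟩
  | cons x w2 ih =>
      intro w' u
      cases w' with
      | nil =>
          simp only [List.append_nil]
          rw [Set.inter_eq_self_of_subset_left (sbSet_prefix u (x :: w2))]
          exact Or.inl ⟨u ++ x :: w2, rfl⟩
      | cons x' w2' =>
          by_cases hxx : x = x'
          · subst hxx
            rw [List.append_cons u x w2, List.append_cons u x w2']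
            exact ih w2' (u ++ [x])
          · -- diverging: intersection inside {med (sb u)}
            have hsub : sbSet (sb (u ++ x :: w2)) ∩ sbSet (sb (u ++ x' :: w2')) ⊆
                {med (sb u)} := by
              have h1 : sbSet (sb (u ++ x :: w2)) ⊆ sbSet (sb (u ++ [x])) := by
                rw [List.append_cons u x w2]; exact sbSet_prefix _ _
              have h2 : sbSet (sb (u ++ x' :: w2')) ⊆ sbSet (sb (u ++ [x'])) := by
                rw [List.append_cons u x' w2']; exact sbSet_prefix _ _
              have hLR : sbSet (sb (u ++ [x])) ∩ sbSet (sb (u ++ [x'])) = {med (sb u)} := by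
                cases x <;> cases x'
                · simp at hxx
                · -- x = false, x' = true
                  rw [sb_snoc, sb_snoc]
                  simp only [if_true, Bool.false_eq_true, if_false]
                  rw [Set.inter_comm]
                  exact sbSet_inter (sbDet_sb u)
                · -- x = true, x' = false
                  rw [sb_snoc, sb_snoc]
                  simp only [if_true, Bool.false_eq_true, if_false]
                  exact sbSet_inter (sbDet_sb u)
                · simp at hxx
              exact (Set.inter_subset_inter h1 h2).trans hLR.subset
            rcases Set.subset_singleton_iff_eq.mp hsub with h | h
            · exact Or.inr (Or.inr (Or.inr h))
            · refine Or.inr (Or.inl ⟨u ++ [false], ?_⟩)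
              rw [h, sb_snoc]
              simp only [Bool.false_eq_true, if_false]
              rw [lep_sbR]

lemma isPiSystem_sbC : IsPiSystem sbC := by
  rintro s hs t hta hne
  have hsing : ∀ (p : ℝ) (S : Set ℝ), p ∈ S → {p} ∩ S = {p} := fun p S hp =>
    Set.inter_eq_left.mpr (Set.singleton_subset_iff.mpr hp)
  rcases hs with ⟨w, rfl⟩ | ⟨w, rfl⟩ | ⟨r, hr, rfl⟩ | rfl
  · rcases hta with ⟨w', rfl⟩ | ⟨w', rfl⟩ | ⟨r', hr', rfl⟩ | rfl
    · have := sb_inter_mem w w' []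
      simpa using this
    · -- sbSet ∩ singleton
      rcases hne with ⟨z, hz1, hz2⟩
      have hz : z = lep (sb w') := hz2
      subst hz
      rw [Set.inter_comm, hsing _ _ hz1]
      exact Or.inr (Or.inl ⟨w', rfl⟩)
    · exfalso
      rcases hne with ⟨z, hz1, hz2⟩
      have h0 : (0:ℝ) ≤ z := sbSet_nonneg hz1
      have : z ≤ r' := hz2
      linarith
    · simp at hne
  · rcases hne with ⟨z, hz1, hz2⟩
    have hz : z = lep (sb w) := hz1
    subst hz
    rw [hsing _ _ hz2]
    exact Or.inr (Or.inl ⟨w, rfl⟩)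
  · rcases hta with ⟨w', rfl⟩ | ⟨w', rfl⟩ | ⟨r', hr', rfl⟩ | rfl
    · exfalso
      rcases hne with ⟨z, hz1, hz2⟩
      have h0 : (0:ℝ) ≤ z := sbSet_nonneg hz2
      have : z ≤ r := hz1
      linarith
    · exfalso
      rcases hne with ⟨z, hz1, hz2⟩
      have hz : z = lep (sb w') := hz2
      subst hz
      have := lep_nonneg w'
      have : lep (sb w') ≤ r := hz1
      linarith [lep_nonneg w']
    · rw [Set.Iic_inter_Iic]
      exact Or.inr (Or.inr (Or.inl ⟨min r r', lt_of_le_of_lt (min_le_left r r') hr, rfl⟩))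
    · simp at hne
  · simp at hne

lemma measurableSet_of_mem_sbC {s : Set ℝ} (hs : s ∈ sbC) : MeasurableSet s := by
  rcases hs with ⟨w, rfl⟩ | ⟨w, rfl⟩ | ⟨r, hr, rfl⟩ | rfl
  · exact measurableSet_sbSet _
  · exact measurableSet_singleton _
  · exact measurableSet_Iic
  · exact MeasurableSet.empty

lemma generateFrom_sbC : (inferInstance : MeasurableSpace ℝ) = .generateFrom sbC := by
  apply le_antisymm
  · -- borel ≤ generated
    rw [(inferInstance : BorelSpace ℝ).measurable_eq, borel_eq_generateFrom_Iic ℝ]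
    apply MeasurableSpace.generateFrom_le
    rintro s ⟨t, rfl⟩
    -- show Iic t is measurable w.r.t. generateFrom sbC
    letI m : MeasurableSpace ℝ := .generateFrom sbC
    show MeasurableSet[MeasurableSpace.generateFrom sbC] (Set.Iic t)
    have hIio0 : MeasurableSet[MeasurableSpace.generateFrom sbC] (Set.Iio (0:ℝ)) := by
      have : Set.Iio (0:ℝ) = ⋃ n : ℕ, Set.Iic (-(1:ℝ)/(n+1)) := by
        ext z
        simp only [Set.mem_Iio, Set.mem_iUnion, Set.mem_Iic]
        constructor
        · intro hz
          obtain ⟨n, hn⟩ := exists_nat_gt (1 / (-z))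
          refine ⟨n, ?_⟩
          have hz' : 0 < -z := by linarith
          rw [div_lt_iff₀ hz'] at hn
          rw [le_div_iff₀ (by positivity : (0:ℝ) < (n:ℝ)+1)]
          nlinarith
        · rintro ⟨n, hn⟩
          have : -(1:ℝ)/(n+1) < 0 := by
            apply div_neg_of_neg_of_pos <;> [linarith; positivity]
          linarith
      rw [this]
      refine MeasurableSet.iUnion fun n =>
        MeasurableSpace.measurableSet_generateFrom
          (Or.inr (Or.inr (Or.inl ⟨-(1:ℝ)/(n+1), ?_, rfl⟩)))
      apply div_neg_of_neg_of_pos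
      · norm_num
      · positivity
    rcases lt_or_ge t 0 with ht | ht
    · exact MeasurableSpace.measurableSet_generateFrom (Or.inr (Or.inr (Or.inl ⟨t, ht, rfl⟩)))
    · -- t ≥ 0
      have hU : MeasurableSet[MeasurableSpace.generateFrom sbC]
          (⋃ w ∈ {w : List Bool | t < lep (sb w)}, sbSet (sb w)) :=
        MeasurableSet.biUnion (Set.to_countable _)
          (fun w _ => MeasurableSpace.measurableSet_generateFrom (Or.inl ⟨w, rfl⟩))
      have hIcc : Set.Icc (0:ℝ) t =
          (Set.Iio (0:ℝ))ᶜ \ (⋃ w ∈ {w : List Bool | t < lep (sb w)}, sbSet (sb w)) := by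
        ext y
        simp only [Set.mem_Icc, Set.mem_diff, Set.mem_compl_iff, Set.mem_Iio, not_lt,
          Set.mem_iUnion, Set.mem_setOf_eq, not_exists]
        constructor
        · rintro ⟨hy0, hyt⟩
          refine ⟨hy0, fun w hw hmem => ?_⟩
          have := (mem_sbSet_iff.mp hmem).1
          linarith
        · rintro ⟨hy0, hnw⟩
          refine ⟨hy0, ?_⟩
          by_contra hyt
          push_neg at hyt
          obtain ⟨w, hw1, hw2⟩ := exists_word_gt ht hyt
          exact hnw w hw2 hw1
      have : Set.Iic t = Set.Iio 0 ∪ Set.Icc 0 t := by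
        ext y
        simp only [Set.mem_Iic, Set.mem_union, Set.mem_Iio, Set.mem_Icc]
        constructor
        · intro hy
          rcases lt_or_ge y 0 with h | h
          · exact Or.inl h
          · exact Or.inr ⟨h, hy⟩
        · rintro (h | ⟨h1, h2⟩)
          · linarith
          · exact h2
      rw [this, hIcc]
      exact hIio0.union ((hIio0.compl).diff hU)
  · -- generated ≤ borel
    exact MeasurableSpace.generateFrom_le fun s hs => measurableSet_of_mem_sbC hs

end PiSystem

section MeasureBasics

variable {α : ℝ} {ν : Measure ℝ}

lemma factor_eq (hα0 : 0 ≤ α) (hα1 : α ≤ 1) (r : ℕ) :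
    (if Odd r then ENNReal.ofReal α else ENNReal.ofReal (1 - α)) =
      ENNReal.ofReal (fct α r true) := by
  unfold fct
  by_cases h : Even r
  · have hno : ¬ Odd r := by simp [Nat.not_odd_iff_even, h]
    rw [if_neg hno, if_pos (by simp [h])]
  · have ho : Odd r := Nat.not_even_iff_odd.mp h
    rw [if_pos ho, if_neg (by simp [h])]

variable (hprob : IsProbabilityMeasure ν)
    (h2 : ν (Set.Iio 0) = 0)
    (h3 : ν (Set.Icc 0 1) = ENNReal.ofReal (1 - α))
    (h5 : ∀ w : List Bool, 1 ≤ w.length →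
      ν (sbSet (sb (w ++ [true]))) =
        (if Odd w.length then ENNReal.ofReal α else ENNReal.ofReal (1 - α)) * ν (sbSet (sb w)))
    (hα0 : 0 ≤ α) (hα1 : α ≤ 1)

include hprob h5 hα0 hα1 in
lemma nu_atom (u : List Bool) : ν {lep (sb u)} = 0 := by
  have hsubJ : ∀ n, ({lep (sb u)} : Set ℝ) ⊆ sbSet (sb (u ++ List.replicate n true)) := by
    intro n
    rw [Set.singleton_subset_iff]
    have hl : lep (sb (u ++ List.replicate n true)) = lep (sb u) := by
      rw [sb_append]
      rcases hsb : sb u with ⟨⟨a, b⟩, ⟨c, d⟩⟩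
      rw [sbGo_replicate_true]
      rfl
    rw [← hl]
    exact (sbDet_sb _).lep_mem
  have hstep : ∀ n, 1 ≤ u.length + n →
      ν (sbSet (sb (u ++ List.replicate (n+1) true))) =
        ENNReal.ofReal (fct α (u.length + n) true) *
          ν (sbSet (sb (u ++ List.replicate n true))) := by
    intro n hn
    have h' := h5 (u ++ List.replicate n true) (by simpa using hn)
    rw [List.append_assoc, ← List.replicate_succ'] at h'
    rw [h', List.length_append, List.length_replicate, factor_eq hα0 hα1]
  have hpair : ∀ n, 1 ≤ u.length + n →
      ν (sbSet (sb (u ++ List.replicate (n+2) true))) ≤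
        ENNReal.ofReal (1/4) * ν (sbSet (sb (u ++ List.replicate n true))) := by
    intro n hn
    rw [show n + 2 = (n + 1) + 1 from rfl, hstep (n+1) (by omega), hstep n hn, ← mul_assoc]
    have hh : ENNReal.ofReal (fct α (u.length + (n+1)) true) *
        ENNReal.ofReal (fct α (u.length + n) true) = ENNReal.ofReal (α * (1 - α)) := by
      rw [← ENNReal.ofReal_mul (fct_nonneg hα0 hα1 _ _)]
      congr 1
      rw [show u.length + (n + 1) = (u.length + n) + 1 from rfl, mul_comm]
      exact fct_mul_fct_same _ _
    rw [hh]
    apply mul_le_mul_left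
    apply ENNReal.ofReal_le_ofReal
    nlinarith [sq_nonneg (α - 1/2)]
  have hmono : ∀ k, ν {lep (sb u)} ≤ ENNReal.ofReal (1/4) ^ k := by
    intro k
    have hchain : ∀ k, ν (sbSet (sb (u ++ List.replicate (1 + 2*k) true))) ≤
        ENNReal.ofReal (1/4) ^ k := by
      intro k
      induction k with
      | zero =>
          simpa using measure_mono (Set.subset_univ _) |>.trans (le_of_eq measure_univ)
      | succ k ih =>
          have : 1 + 2*(k+1) = (1 + 2*k) + 2 := by ring
          rw [this]
          calc ν (sbSet (sb (u ++ List.replicate ((1 + 2*k) + 2) true))) ≤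
              ENNReal.ofReal (1/4) * ν (sbSet (sb (u ++ List.replicate (1 + 2*k) true))) :=
                hpair _ (by omega)
          _ ≤ ENNReal.ofReal (1/4) * ENNReal.ofReal (1/4) ^ k := mul_le_mul_right ih _
          _ = ENNReal.ofReal (1/4) ^ (k + 1) := by rw [pow_succ, mul_comm]
    exact (measure_mono (hsubJ (1 + 2*k))).trans (hchain k)
  have hlim : Filter.Tendsto (fun k : ℕ => ENNReal.ofReal (1/4) ^ k)
      Filter.atTop (nhds 0) :=
    ENNReal.tendsto_pow_atTop_nhds_zero_of_lt_one (ENNReal.ofReal_lt_one.mpr (by norm_num))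
  exact le_antisymm (ge_of_tendsto hlim (Filter.Eventually.of_forall hmono)) (zero_le)

include hprob h2 h5 hα0 hα1 in
lemma nu_Iic_zero : ν (Set.Iic 0) = 0 := by
  have h0 : ν {(0:ℝ)} = 0 := by
    have : lep (sb []) = 0 := by
      show ((0:ℕ):ℝ) / ((1:ℕ):ℝ) = 0
      norm_num
    rw [← this]
    exact nu_atom hprob h5 hα0 hα1 []
  have : Set.Iic (0:ℝ) = Set.Iio 0 ∪ {0} := by
    ext z; simp [le_iff_lt_or_eq]
  rw [this]
  exact le_antisymm ((measure_union_le _ _).trans (by rw [h2, h0]; simp)) (zero_le)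

include hprob h2 h5 hα0 hα1 in
lemma nu_inter_Ioi (S : Set ℝ) : ν S = ν (S ∩ Set.Ioi 0) := by
  apply le_antisymm
  · calc ν S = ν ((S ∩ Set.Ioi 0) ∪ (S ∩ Set.Iic 0)) := by
          rw [← Set.inter_union_distrib_left,
            show Set.Ioi (0:ℝ) ∪ Set.Iic 0 = Set.univ from by
              rw [Set.union_comm, Set.Iic_union_Ioi], Set.inter_univ]
    _ ≤ ν (S ∩ Set.Ioi 0) + ν (S ∩ Set.Iic 0) := measure_union_le _ _
    _ ≤ ν (S ∩ Set.Ioi 0) + 0 := by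
          apply add_le_add_right
          exact (measure_mono Set.inter_subset_right).trans
            (le_of_eq (nu_Iic_zero hprob h2 h5 hα0 hα1))
    _ = ν (S ∩ Set.Ioi 0) := by simp
  · exact measure_mono Set.inter_subset_left

include hprob h2 h3 h5 hα0 hα1 in
lemma nu_sbSet (w : List Bool) : ν (sbSet (sb w)) = ENNReal.ofReal (wt α 0 w) := by
  induction w using List.reverseRecOn with
  | nil =>
      have hIci : sbSet (sb []) = Set.Ici (0:ℝ) := by
        show Set.Ici (((0:ℕ):ℝ)/((1:ℕ):ℝ)) = Set.Ici 0
        norm_num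
      rw [hIci, ← Set.compl_Iio,
        measure_compl measurableSet_Iio (measure_ne_top ν _), h2, measure_univ]
      simp [wt]
  | append_singleton w b ih =>
      have htrue : ν (sbSet (sb (w ++ [true]))) = ENNReal.ofReal (wt α 0 (w ++ [true])) := by
        rcases Nat.eq_zero_or_pos w.length with hw | hw
        · have : w = [] := List.length_eq_zero_iff.mp hw
          subst this
          have hIcc : sbSet (sb [true]) = Set.Icc (0:ℝ) 1 := by
            show Set.Icc (((0:ℕ):ℝ)/((1:ℕ):ℝ)) (((1:ℕ):ℝ)/((1:ℕ):ℝ)) = Set.Icc 0 1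
            norm_num
          rw [show ([] : List Bool) ++ [true] = [true] from rfl, hIcc, h3]
          congr 1
          show 1 - α = fct α 0 true * 1
          simp [fct]
        · rw [h5 w hw, factor_eq hα0 hα1, ih, wt_snoc,
            ← ENNReal.ofReal_mul (fct_nonneg hα0 hα1 _ _)]
          congr 1
          rw [Nat.zero_add]
          ring
      cases b
      · -- right child
        have hdet := sbDet_sb w
        have hL : sbSet (sb (w ++ [true])) = sbSet (sbL (sb w)) := by rw [sb_snoc]; simp
        have hR : sbSet (sb (w ++ [false])) = sbSet (sbR (sb w)) := by rw [sb_snoc]; simp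
        have hmed : ν {med (sb w)} = 0 := by
          have : med (sb w) = lep (sb (w ++ [false])) := by
            rw [sb_snoc]; simp [lep_sbR]
          rw [this]
          exact nu_atom hprob h5 hα0 hα1 _
        have hsum : ν (sbSet (sbL (sb w))) + ν (sbSet (sbR (sb w))) = ν (sbSet (sb w)) := by
          have := measure_union_add_inter (μ := ν) (s := sbSet (sbL (sb w)))
            (t := sbSet (sbR (sb w))) (measurableSet_sbSet _)
          rw [sbSet_union hdet, sbSet_inter hdet, hmed, add_zero] at this
          exact this.symm
        rw [hL] at htrue
        rw [hR]
        have hwt : ENNReal.ofReal (wt α 0 (w ++ [true])) +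
            ENNReal.ofReal (wt α 0 (w ++ [false])) = ENNReal.ofReal (wt α 0 w) := by
          rw [wt_snoc, wt_snoc, ← ENNReal.ofReal_add (by
              exact mul_nonneg (wt_nonneg hα0 hα1 _ _) (fct_nonneg hα0 hα1 _ _))
            (by exact mul_nonneg (wt_nonneg hα0 hα1 _ _) (fct_nonneg hα0 hα1 _ _))]
          congr 1
          rw [← mul_add, fct_add_fct, mul_one]
        rw [htrue, ih, ← hwt] at hsum
        exact (ENNReal.add_right_inj ENNReal.ofReal_ne_top).mp hsum
      · exact htrue

end MeasureBasics

section PushforwardPrep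

/-- the conjugating map onto `[1,∞]` -/
def fF : ℝ → ℝ := fun x => (x + 1) / x
/-- the conjugating map onto `[0,1]` -/
def gG : ℝ → ℝ := fun x => (x + 1)⁻¹

lemma measurable_fF : Measurable fF := by
  unfold fF
  simp only [div_eq_mul_inv]
  exact (measurable_id.add_const 1).mul measurable_inv

lemma measurable_gG : Measurable gG := (measurable_id.add_const 1).inv

lemma one_lt_fF {x : ℝ} (hx : 0 < x) : 1 < fF x := by
  unfold fF
  rw [lt_div_iff₀ hx]
  linarith

lemma gG_pos {x : ℝ} (hx : 0 < x) : 0 < gG x := by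
  unfold gG; positivity

lemma gG_lt_one {x : ℝ} (hx : 0 < x) : gG x < 1 := by
  unfold gG
  rw [inv_lt_one_iff₀]
  right; linarith

lemma sbDet_trF {J} (h : sbDet J) : sbDet (trF J) := by
  rcases J with ⟨⟨a, b⟩, ⟨c, d⟩⟩
  unfold sbDet trF at *
  simp only at *
  calc (c + d) * a + 1 = c * a + (a * d + 1) := by ring
    _ = c * a + b * c := by rw [h]
    _ = c * (a + b) := by ring

lemma sbDet_trG {J} (h : sbDet J) : sbDet (trG J) := by
  rcases J with ⟨⟨a, b⟩, ⟨c, d⟩⟩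
  unfold sbDet trG at *
  simp only at *
  calc d * (a + b) + 1 = d * b + (a * d + 1) := by ring
    _ = d * b + b * c := by rw [h]
    _ = (c + d) * b := by ring

lemma mem_sbSet_iff'' {I : (ℕ × ℕ) × (ℕ × ℕ)} (h : sbDet I) (x : ℝ) :
    x ∈ sbSet I ↔ ((I.1.1 : ℝ) ≤ I.1.2 * x ∧ (I.2.2 : ℝ) * x ≤ I.2.1) := by
  rw [mem_sbSet_iff]
  have hb : (0:ℝ) < I.1.2 := h.b_posR
  apply and_congr
  · rw [lep, div_le_iff₀ hb, mul_comm]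
  · by_cases hd : I.2.2 = 0
    · simp only [hd, Nat.cast_zero, zero_mul]
      simp [Nat.cast_nonneg]
    · have hdp : (0:ℝ) < I.2.2 := by exact_mod_cast Nat.pos_of_ne_zero hd
      constructor
      · rintro (h' | h')
        · exact absurd h' hd
        · rw [le_div_iff₀ hdp] at h'; linarith
      · intro h'
        right
        rw [le_div_iff₀ hdp]; linarith

lemma fF_mem_trF {J : (ℕ × ℕ) × (ℕ × ℕ)} (h : sbDet J) {x : ℝ} (hx : 0 < x) :
    fF x ∈ sbSet (trF J) ↔ x ∈ sbSet J := by
  rw [mem_sbSet_iff'' (sbDet_trF h), mem_sbSet_iff'' h]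
  rcases J with ⟨⟨a, b⟩, ⟨c, d⟩⟩
  show ((c + d : ℕ) : ℝ) ≤ (c:ℕ) * fF x ∧ ((a:ℕ):ℝ) * fF x ≤ (a + b : ℕ) ↔ _
  unfold fF
  push_cast
  rw [← mul_div_assoc, le_div_iff₀ hx, ← mul_div_assoc, div_le_iff₀ hx]
  constructor <;> rintro ⟨h1, h2⟩ <;> constructor <;> nlinarith

lemma gG_mem_trG {J : (ℕ × ℕ) × (ℕ × ℕ)} (h : sbDet J) {x : ℝ} (hx : 0 < x) :
    gG x ∈ sbSet (trG J) ↔ x ∈ sbSet J := by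
  rw [mem_sbSet_iff'' (sbDet_trG h), mem_sbSet_iff'' h]
  rcases J with ⟨⟨a, b⟩, ⟨c, d⟩⟩
  show ((d : ℕ) : ℝ) ≤ ((c + d : ℕ)) * gG x ∧ ((a + b : ℕ) : ℝ) * gG x ≤ (b : ℕ) ↔ _
  unfold gG
  push_cast
  have hx1 : (0:ℝ) < x + 1 := by linarith
  rw [← div_eq_mul_inv, ← div_eq_mul_inv, le_div_iff₀ hx1, div_le_iff₀ hx1]
  constructor <;> rintro ⟨h1, h2⟩ <;> constructor <;> nlinarith

lemma sbSet_nil : sbSet (sb []) = Set.Ici (0:ℝ) := by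
  show Set.Ici (((0:ℕ):ℝ)/((1:ℕ):ℝ)) = Set.Ici 0
  norm_num

lemma sbSet_single_true : sbSet (sb [true]) = Set.Icc (0:ℝ) 1 := by
  show Set.Icc (((0:ℕ):ℝ)/((1:ℕ):ℝ)) (((1:ℕ):ℝ)/((1:ℕ):ℝ)) = Set.Icc 0 1
  norm_num

lemma sbSet_single_false : sbSet (sb [false]) = Set.Ici (1:ℝ) := by
  show Set.Ici (((1:ℕ):ℝ)/((1:ℕ):ℝ)) = Set.Ici 1
  norm_num

lemma sbSet_true_cons_subset (u : List Bool) : sbSet (sb (true :: u)) ⊆ Set.Icc (0:ℝ) 1 := by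
  rw [← sbSet_single_true]
  exact sbSet_prefix [true] u

lemma sbSet_false_cons_subset (u : List Bool) : sbSet (sb (false :: u)) ⊆ Set.Ici (1:ℝ) := by
  rw [← sbSet_single_false]
  exact sbSet_prefix [false] u

lemma lep_one : lep (sb [false]) = 1 := by
  show ((1:ℕ):ℝ)/((1:ℕ):ℝ) = 1
  norm_num

lemma lep_zero : lep (sb []) = 0 := by
  show ((0:ℕ):ℝ)/((1:ℕ):ℝ) = 0
  norm_num

/-- every finite right endpoint is a left endpoint of some Stern-Brocot interval -/
lemma exists_lep_eq_rep (u : List Bool) (hd : (sb u).2.2 ≠ 0) :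
    ∃ v : List Bool, (sb v).1 = (sb u).2 := by
  induction u using List.reverseRecOn with
  | nil => exact absurd rfl hd
  | append_singleton w x ih =>
      cases x
      · -- appended false
        rw [sb_snoc] at hd ⊢
        simp only [Bool.false_eq_true, if_false] at hd ⊢
        rcases hsb : sb w with ⟨⟨a, b⟩, ⟨c, d⟩⟩
        rw [hsb] at hd ih
        obtain ⟨v, hv⟩ := ih hd
        exact ⟨v, hv⟩
      · -- appended true
        refine ⟨w ++ [false], ?_⟩
        rw [sb_snoc, sb_snoc]
        simp only [if_true, Bool.false_eq_true, if_false]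
        rcases sb w with ⟨⟨a, b⟩, ⟨c, d⟩⟩
        rfl

end PushforwardPrep

section Pushforward

variable {α : ℝ} {ν : Measure ℝ}
variable (hprob : IsProbabilityMeasure ν)
    (h2 : ν (Set.Iio 0) = 0)
    (h3 : ν (Set.Icc 0 1) = ENNReal.ofReal (1 - α))
    (h4 : ν (Set.Ici 1) = ENNReal.ofReal α)
    (h5 : ∀ w : List Bool, 1 ≤ w.length →
      ν (sbSet (sb (w ++ [true]))) =
        (if Odd w.length then ENNReal.ofReal α else ENNReal.ofReal (1 - α)) * ν (sbSet (sb w)))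
    (hα0 : 0 ≤ α) (hα1 : α ≤ 1)

include hprob h2 h5 hα0 hα1 in
lemma nu_Ioi_one : ν (Set.Ioi 0) = 1 := by
  have := nu_inter_Ioi hprob h2 h5 hα0 hα1 Set.univ
  rw [Set.univ_inter, measure_univ] at this
  exact this.symm

include hprob h5 hα0 hα1 in
lemma nu_one : ν ({(1:ℝ)} : Set ℝ) = 0 := by
  rw [← lep_one]; exact nu_atom hprob h5 hα0 hα1 [false]

include hprob h5 hα0 hα1 in
lemma nu_rep (u : List Bool) : ν {((sb u).2.1 : ℝ) / ((sb u).2.2 : ℝ)} = 0 := by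
  by_cases hd : (sb u).2.2 = 0
  · rw [hd]
    simp only [Nat.cast_zero, div_zero]
    rw [← lep_zero]
    exact nu_atom hprob h5 hα0 hα1 []
  · obtain ⟨v, hv⟩ := exists_lep_eq_rep u hd
    have : lep (sb v) = ((sb u).2.1 : ℝ) / ((sb u).2.2 : ℝ) := by rw [lep, hv]
    rw [← this]
    exact nu_atom hprob h5 hα0 hα1 v

lemma fct_zero_false : fct α 0 false = α := by simp [fct]
lemma fct_zero_true : fct α 0 true = 1 - α := by simp [fct]

include hprob h2 h3 h4 h5 hα0 hα1 in
theorem nu_restrict_Ici_one :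
    ν.restrict (Set.Ici 1) = Measure.map fF (ENNReal.ofReal α • ν) := by
  have hmap : ∀ s : Set ℝ, MeasurableSet s →
      Measure.map fF (ENNReal.ofReal α • ν) s = ENNReal.ofReal α * ν (fF ⁻¹' s ∩ Set.Ioi 0) := by
    intro s hs
    rw [Measure.map_apply measurable_fF hs, Measure.smul_apply, smul_eq_mul,
      nu_inter_Ioi hprob h2 h5 hα0 hα1 (fF ⁻¹' s)]
  haveI hfin : IsFiniteMeasure (ν.restrict (Set.Ici 1)) := inferInstance
  apply MeasureTheory.ext_of_generate_finite sbC generateFrom_sbC isPiSystem_sbC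
  · rintro s (⟨w, rfl⟩ | ⟨v, rfl⟩ | ⟨r, hr, rfl⟩ | rfl)
    · -- Stern-Brocot sets
      rw [Measure.restrict_apply (measurableSet_sbSet _), hmap _ (measurableSet_sbSet _)]
      cases w with
      | nil =>
          rw [sbSet_nil, Set.Ici_inter_Ici, show max (0:ℝ) 1 = 1 from by norm_num, h4]
          have hpre : fF ⁻¹' Set.Ici (0:ℝ) ∩ Set.Ioi 0 = Set.Ioi 0 := by
            ext x
            simp only [Set.mem_inter_iff, Set.mem_preimage, Set.mem_Ici, Set.mem_Ioi]
            exact ⟨fun h => h.2, fun h => ⟨le_of_lt (lt_trans one_pos (one_lt_fF h)), h⟩⟩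
          rw [hpre, nu_Ioi_one hprob h2 h5 hα0 hα1, mul_one]
      | cons x u =>
          cases x
          · -- false :: u  (inside [1,∞))
            rw [Set.inter_eq_left.mpr (sbSet_false_cons_subset u),
              nu_sbSet hprob h2 h3 h5 hα0 hα1]
            have hpre : fF ⁻¹' (sbSet (sb (false :: u))) ∩ Set.Ioi 0 =
                sbSet (sb (u.map (fun b => !b))) ∩ Set.Ioi 0 := by
              ext x
              simp only [Set.mem_inter_iff, Set.mem_preimage, Set.mem_Ioi]
              constructor
              · rintro ⟨h1, hx⟩
                rw [sb_false_cons] at h1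
                exact ⟨(fF_mem_trF (sbDet_sb _) hx).mp h1, hx⟩
              · rintro ⟨h1, hx⟩
                refine ⟨?_, hx⟩
                rw [sb_false_cons]
                exact (fF_mem_trF (sbDet_sb _) hx).mpr h1
            rw [hpre, ← nu_inter_Ioi hprob h2 h5 hα0 hα1, nu_sbSet hprob h2 h3 h5 hα0 hα1]
            rw [show wt α 0 (false :: u) = fct α 0 false * wt α 1 u from rfl, fct_zero_false,
              ← wt_succ_eq_map_not, ← ENNReal.ofReal_mul hα0]
          · -- true :: u  (inside [0,1])
            have hsub : sbSet (sb (true :: u)) ∩ Set.Ici 1 ⊆ {(1:ℝ)} := by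
              rintro y ⟨hy1, hy2⟩
              have := (sbSet_true_cons_subset u hy1).2
              simp only [Set.mem_singleton_iff]
              linarith [Set.mem_Ici.mp hy2]
            rw [measure_mono_null hsub (nu_one hprob h5 hα0 hα1)]
            have hpre : fF ⁻¹' (sbSet (sb (true :: u))) ∩ Set.Ioi 0 = ∅ := by
              ext x
              simp only [Set.mem_inter_iff, Set.mem_preimage, Set.mem_Ioi, Set.mem_empty_iff_false,
                iff_false, not_and]
              intro h1 hx
              have := (sbSet_true_cons_subset u h1).2
              linarith [one_lt_fF hx]
            rw [hpre, measure_empty, mul_zero]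
    · -- singletons
      rw [Measure.restrict_apply (measurableSet_singleton _), hmap _ (measurableSet_singleton _),
        measure_mono_null Set.inter_subset_left (nu_atom hprob h5 hα0 hα1 v)]
      cases v with
      | nil =>
          have hpre : fF ⁻¹' {lep (sb [])} ∩ Set.Ioi 0 = ∅ := by
            ext x
            simp only [Set.mem_inter_iff, Set.mem_preimage, Set.mem_singleton_iff, Set.mem_Ioi,
              Set.mem_empty_iff_false, iff_false, not_and]
            intro h1 hx
            rw [lep_zero] at h1
            linarith [one_lt_fF hx]
          rw [hpre, measure_empty, mul_zero]
      | cons x u =>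
          cases x
          · -- false :: u
            have hdet := sbDet_sb (u.map (fun b => !b))
            rcases hsb : sb (u.map (fun b => !b)) with ⟨⟨a, b⟩, ⟨c, d⟩⟩
            rw [hsb] at hdet
            have hc : 1 ≤ c := hdet.c_pos
            have hcR : (0:ℝ) < c := by exact_mod_cast hc
            have hlepval : lep (sb (false :: u)) = ((c + d : ℕ) : ℝ) / ((c : ℕ) : ℝ) := by
              rw [sb_false_cons, hsb]
              rfl
            rcases Nat.eq_zero_or_pos d with hd | hd
            · -- q = 1
              have hpre : fF ⁻¹' {lep (sb (false :: u))} ∩ Set.Ioi 0 = ∅ := by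
                ext x
                simp only [Set.mem_inter_iff, Set.mem_preimage, Set.mem_singleton_iff,
                  Set.mem_Ioi, Set.mem_empty_iff_false, iff_false, not_and]
                intro h1 hx
                rw [hlepval, hd] at h1
                have : fF x = 1 := by
                  rw [h1]; push_cast; rw [add_zero, div_self (ne_of_gt hcR)]
                linarith [one_lt_fF hx]
              rw [hpre, measure_empty, mul_zero]
            · have hdR : (0:ℝ) < d := by exact_mod_cast hd
              have hpre : fF ⁻¹' {lep (sb (false :: u))} ∩ Set.Ioi 0 ⊆ {(c:ℝ)/(d:ℝ)} := by
                rintro x ⟨h1, hx⟩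
                have hx' : (0:ℝ) < x := hx
                have h1' : fF x = ((c + d : ℕ) : ℝ) / c := by
                  rw [Set.mem_preimage, Set.mem_singleton_iff, hlepval] at h1
                  exact h1
                unfold fF at h1'
                rw [div_eq_div_iff (ne_of_gt hx') (ne_of_gt hcR)] at h1'
                push_cast at h1'
                have hxcd : x = (c:ℝ)/d := by
                  rw [eq_div_iff (ne_of_gt hdR)]
                  nlinarith
                simp [hxcd]
              have h0 : ν {(c:ℝ)/(d:ℝ)} = 0 := by
                have := nu_rep hprob h5 hα0 hα1 (u.map (fun b => !b))
                rw [hsb] at this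
                exact this
              rw [measure_mono_null hpre h0, mul_zero]
          · -- true :: u : lep ≤ 1 < fF x
            have hq : lep (sb (true :: u)) ≤ 1 :=
              (sbSet_true_cons_subset u (sbDet_sb _).lep_mem).2
            have hpre : fF ⁻¹' {lep (sb (true :: u))} ∩ Set.Ioi 0 = ∅ := by
              ext x
              simp only [Set.mem_inter_iff, Set.mem_preimage, Set.mem_singleton_iff, Set.mem_Ioi,
                Set.mem_empty_iff_false, iff_false, not_and]
              intro h1 hx
              rw [← h1] at hq
              linarith [one_lt_fF hx]
            rw [hpre, measure_empty, mul_zero]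
    · -- negative rays
      rw [Measure.restrict_apply measurableSet_Iic, hmap _ measurableSet_Iic]
      have h1 : Set.Iic r ∩ Set.Ici (1:ℝ) = ∅ := by
        ext z
        simp only [Set.mem_inter_iff, Set.mem_Iic, Set.mem_Ici, Set.mem_empty_iff_false,
          iff_false, not_and]
        intro hz; linarith
      have h2' : fF ⁻¹' Set.Iic r ∩ Set.Ioi 0 = ∅ := by
        ext x
        simp only [Set.mem_inter_iff, Set.mem_preimage, Set.mem_Iic, Set.mem_Ioi,
          Set.mem_empty_iff_false, iff_false, not_and]
        intro h1 hx
        linarith [one_lt_fF hx]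
      rw [h1, h2', measure_empty, mul_zero]
    · rw [measure_empty, hmap _ MeasurableSet.empty, Set.preimage_empty, Set.empty_inter,
        measure_empty, mul_zero]
  · rw [Measure.restrict_apply MeasurableSet.univ, Set.univ_inter, h4,
      hmap _ MeasurableSet.univ, Set.preimage_univ, Set.univ_inter,
      nu_Ioi_one hprob h2 h5 hα0 hα1, mul_one]

end Pushforward

section Pushforward2

variable {α : ℝ} {ν : Measure ℝ}
variable (hprob : IsProbabilityMeasure ν)
    (h2 : ν (Set.Iio 0) = 0)
    (h3 : ν (Set.Icc 0 1) = ENNReal.ofReal (1 - α))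
    (h4 : ν (Set.Ici 1) = ENNReal.ofReal α)
    (h5 : ∀ w : List Bool, 1 ≤ w.length →
      ν (sbSet (sb (w ++ [true]))) =
        (if Odd w.length then ENNReal.ofReal α else ENNReal.ofReal (1 - α)) * ν (sbSet (sb w)))
    (hα0 : 0 ≤ α) (hα1 : α ≤ 1)

include hprob h2 h3 h4 h5 hα0 hα1 in
theorem nu_restrict_Icc_01 :
    ν.restrict (Set.Icc 0 1) = Measure.map gG (ENNReal.ofReal (1 - α) • ν) := by
  have hmap : ∀ s : Set ℝ, MeasurableSet s →
      Measure.map gG (ENNReal.ofReal (1 - α) • ν) s =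
        ENNReal.ofReal (1 - α) * ν (gG ⁻¹' s ∩ Set.Ioi 0) := by
    intro s hs
    rw [Measure.map_apply measurable_gG hs, Measure.smul_apply, smul_eq_mul,
      nu_inter_Ioi hprob h2 h5 hα0 hα1 (gG ⁻¹' s)]
  haveI hfin : IsFiniteMeasure (ν.restrict (Set.Icc 0 1)) := inferInstance
  apply MeasureTheory.ext_of_generate_finite sbC generateFrom_sbC isPiSystem_sbC
  · rintro s (⟨w, rfl⟩ | ⟨v, rfl⟩ | ⟨r, hr, rfl⟩ | rfl)
    · rw [Measure.restrict_apply (measurableSet_sbSet _), hmap _ (measurableSet_sbSet _)]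
      cases w with
      | nil =>
          rw [sbSet_nil, Set.inter_eq_right.mpr (fun y hy => Set.mem_Ici.mpr hy.1), h3]
          have hpre : gG ⁻¹' Set.Ici (0:ℝ) ∩ Set.Ioi 0 = Set.Ioi 0 := by
            ext x
            simp only [Set.mem_inter_iff, Set.mem_preimage, Set.mem_Ici, Set.mem_Ioi]
            exact ⟨fun h => h.2, fun h => ⟨le_of_lt (gG_pos h), h⟩⟩
          rw [hpre, nu_Ioi_one hprob h2 h5 hα0 hα1, mul_one]
      | cons x u =>
          cases x
          · -- false :: u  (inside [1,∞)): both sides vanish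
            have hsub : sbSet (sb (false :: u)) ∩ Set.Icc 0 1 ⊆ {(1:ℝ)} := by
              rintro y ⟨hy1, hy2⟩
              have := Set.mem_Ici.mp (sbSet_false_cons_subset u hy1)
              simp only [Set.mem_singleton_iff]
              linarith [hy2.2]
            rw [measure_mono_null hsub (nu_one hprob h5 hα0 hα1)]
            have hpre : gG ⁻¹' (sbSet (sb (false :: u))) ∩ Set.Ioi 0 = ∅ := by
              ext x
              simp only [Set.mem_inter_iff, Set.mem_preimage, Set.mem_Ioi,
                Set.mem_empty_iff_false, iff_false, not_and]
              intro h1 hx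
              have := Set.mem_Ici.mp (sbSet_false_cons_subset u h1)
              linarith [gG_lt_one hx]
            rw [hpre, measure_empty, mul_zero]
          · -- true :: u
            rw [Set.inter_eq_left.mpr (sbSet_true_cons_subset u),
              nu_sbSet hprob h2 h3 h5 hα0 hα1]
            have hpre : gG ⁻¹' (sbSet (sb (true :: u))) ∩ Set.Ioi 0 =
                sbSet (sb (u.map (fun b => !b))) ∩ Set.Ioi 0 := by
              ext x
              simp only [Set.mem_inter_iff, Set.mem_preimage, Set.mem_Ioi]
              constructor
              · rintro ⟨h1, hx⟩
                rw [sb_true_cons] at h1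
                exact ⟨(gG_mem_trG (sbDet_sb _) hx).mp h1, hx⟩
              · rintro ⟨h1, hx⟩
                refine ⟨?_, hx⟩
                rw [sb_true_cons]
                exact (gG_mem_trG (sbDet_sb _) hx).mpr h1
            rw [hpre, ← nu_inter_Ioi hprob h2 h5 hα0 hα1, nu_sbSet hprob h2 h3 h5 hα0 hα1]
            rw [show wt α 0 (true :: u) = fct α 0 true * wt α 1 u from rfl, fct_zero_true,
              ← wt_succ_eq_map_not, ← ENNReal.ofReal_mul (by linarith : (0:ℝ) ≤ 1 - α)]
    · -- singletons
      rw [Measure.restrict_apply (measurableSet_singleton _), hmap _ (measurableSet_singleton _),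
        measure_mono_null Set.inter_subset_left (nu_atom hprob h5 hα0 hα1 v)]
      cases v with
      | nil =>
          have hpre : gG ⁻¹' {lep (sb [])} ∩ Set.Ioi 0 = ∅ := by
            ext x
            simp only [Set.mem_inter_iff, Set.mem_preimage, Set.mem_singleton_iff, Set.mem_Ioi,
              Set.mem_empty_iff_false, iff_false, not_and]
            intro h1 hx
            rw [lep_zero] at h1
            linarith [gG_pos hx]
          rw [hpre, measure_empty, mul_zero]
      | cons x u =>
          cases x
          · -- false :: u : q ≥ 1 > gG x
            have hq : 1 ≤ lep (sb (false :: u)) :=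
              Set.mem_Ici.mp (sbSet_false_cons_subset u (sbDet_sb _).lep_mem)
            have hpre : gG ⁻¹' {lep (sb (false :: u))} ∩ Set.Ioi 0 = ∅ := by
              ext x
              simp only [Set.mem_inter_iff, Set.mem_preimage, Set.mem_singleton_iff, Set.mem_Ioi,
                Set.mem_empty_iff_false, iff_false, not_and]
              intro h1 hx
              rw [← h1] at hq
              linarith [gG_lt_one hx]
            rw [hpre, measure_empty, mul_zero]
          · -- true :: u
            have hdet := sbDet_sb (u.map (fun b => !b))
            rcases hsb : sb (u.map (fun b => !b)) with ⟨⟨a, b⟩, ⟨c, d⟩⟩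
            rw [hsb] at hdet
            have hc : 1 ≤ c := hdet.c_pos
            have hcR : (0:ℝ) < c := by exact_mod_cast hc
            have hlepval : lep (sb (true :: u)) = ((d : ℕ) : ℝ) / ((c + d : ℕ) : ℝ) := by
              rw [sb_true_cons, hsb]
              rfl
            rcases Nat.eq_zero_or_pos d with hd | hd
            · -- q = 0 but gG x > 0
              have hpre : gG ⁻¹' {lep (sb (true :: u))} ∩ Set.Ioi 0 = ∅ := by
                ext x
                simp only [Set.mem_inter_iff, Set.mem_preimage, Set.mem_singleton_iff,
                  Set.mem_Ioi, Set.mem_empty_iff_false, iff_false, not_and]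
                intro h1 hx
                rw [hlepval, hd] at h1
                simp only [Nat.cast_zero, zero_div] at h1
                linarith [gG_pos hx]
              rw [hpre, measure_empty, mul_zero]
            · have hdR : (0:ℝ) < d := by exact_mod_cast hd
              have hcdR : (0:ℝ) < ((c + d : ℕ) : ℝ) := by positivity
              have hpre : gG ⁻¹' {lep (sb (true :: u))} ∩ Set.Ioi 0 ⊆ {(c:ℝ)/(d:ℝ)} := by
                rintro x ⟨h1, hx⟩
                have hx' : (0:ℝ) < x := hx
                have h1' : gG x = ((d : ℕ) : ℝ) / ((c + d : ℕ) : ℝ) := by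
                  rw [Set.mem_preimage, Set.mem_singleton_iff, hlepval] at h1
                  exact h1
                unfold gG at h1'
                rw [inv_eq_iff_eq_inv, inv_div] at h1'
                push_cast at h1'
                have hxcd : x = (c:ℝ)/d := by
                  rw [eq_div_iff (ne_of_gt hdR)]
                  rw [eq_div_iff (ne_of_gt hdR)] at h1'
                  nlinarith
                simp [hxcd]
              have h0 : ν {(c:ℝ)/(d:ℝ)} = 0 := by
                have := nu_rep hprob h5 hα0 hα1 (u.map (fun b => !b))
                rw [hsb] at this
                exact this
              rw [measure_mono_null hpre h0, mul_zero]
    · -- negative rays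
      rw [Measure.restrict_apply measurableSet_Iic, hmap _ measurableSet_Iic]
      have h1 : Set.Iic r ∩ Set.Icc (0:ℝ) 1 = ∅ := by
        ext z
        simp only [Set.mem_inter_iff, Set.mem_Iic, Set.mem_Icc, Set.mem_empty_iff_false,
          iff_false, not_and]
        intro hz h02 h12
        linarith
      have h2' : gG ⁻¹' Set.Iic r ∩ Set.Ioi 0 = ∅ := by
        ext x
        simp only [Set.mem_inter_iff, Set.mem_preimage, Set.mem_Iic, Set.mem_Ioi,
          Set.mem_empty_iff_false, iff_false, not_and]
        intro h1 hx
        linarith [gG_pos hx]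
      rw [h1, h2', measure_empty, mul_zero]
    · rw [measure_empty, hmap _ MeasurableSet.empty, Set.preimage_empty, Set.empty_inter,
        measure_empty, mul_zero]
  · rw [Measure.restrict_apply MeasurableSet.univ, Set.univ_inter, h3,
      hmap _ MeasurableSet.univ, Set.preimage_univ, Set.univ_inter,
      nu_Ioi_one hprob h2 h5 hα0 hα1, mul_one]

end Pushforward2

section Integrability

variable {α : ℝ} {ν : Measure ℝ}
variable (hprob : IsProbabilityMeasure ν)
    (h2 : ν (Set.Iio 0) = 0)
    (h3 : ν (Set.Icc 0 1) = ENNReal.ofReal (1 - α))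
    (h5 : ∀ w : List Bool, 1 ≤ w.length →
      ν (sbSet (sb (w ++ [true]))) =
        (if Odd w.length then ENNReal.ofReal α else ENNReal.ofReal (1 - α)) * ν (sbSet (sb w)))
    (hα0 : 0 ≤ α) (hα1 : α ≤ 1)

lemma sbSet_rep_false (m : ℕ) : sbSet (sb (List.replicate m false)) = Set.Ici ((m:ℝ)) := by
  rw [sb, sbGo_replicate_false]
  show sbSet ((m * 1 + 0, m * 0 + 1), (1, 0)) = _
  simp only [Nat.mul_one, Nat.add_zero, Nat.mul_zero, Nat.zero_add]
  show Set.Ici (((m:ℕ):ℝ)/((1:ℕ):ℝ)) = _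
  norm_num

lemma sbSet_rep_true (m : ℕ) :
    sbSet (sb (List.replicate (m+1) true)) = Set.Icc 0 (1/((m:ℝ)+1)) := by
  rw [sb, sbGo_replicate_true]
  show sbSet ((0, 1), ((m+1) * 0 + 1, (m+1) * 1 + 0)) = _
  simp only [Nat.mul_zero, Nat.zero_add, Nat.mul_one, Nat.add_zero]
  show Set.Icc (((0:ℕ):ℝ)/((1:ℕ):ℝ)) (((1:ℕ):ℝ)/(((m+1:ℕ)):ℝ)) = _
  push_cast
  norm_num

include hprob h2 h3 h5 hα0 hα1 in
lemma nu_tail_right (n : ℕ) :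
    ν (Set.Ici ((n:ℝ)+1)) ≤ ENNReal.ofReal (2 * (1/2)^(n+1)) := by
  have : Set.Ici ((n:ℝ)+1) = sbSet (sb (List.replicate (n+1) false)) := by
    rw [sbSet_rep_false]; push_cast; ring_nf
  rw [this, nu_sbSet hprob h2 h3 h5 hα0 hα1]
  exact ENNReal.ofReal_le_ofReal (wt_replicate_le hα0 hα1 0 (n+1) false)

include hprob h2 h3 h5 hα0 hα1 in
lemma nu_tail_left (n : ℕ) :
    ν (Set.Icc 0 (1/((n:ℝ)+1))) ≤ ENNReal.ofReal (2 * (1/2)^(n+1)) := by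
  rw [← sbSet_rep_true, nu_sbSet hprob h2 h3 h5 hα0 hα1]
  exact ENNReal.ofReal_le_ofReal (wt_replicate_le hα0 hα1 0 (n+1) true)

/-- the dominating layered function -/
noncomputable def layer (n : ℕ) : ℝ → ENNReal := fun x =>
  (Set.Icc 0 (Real.exp (-(n:ℝ)))).indicator (fun _ => (1:ENNReal)) x +
    (Set.Ici (Real.exp (n:ℝ))).indicator (fun _ => (1:ENNReal)) x

lemma layer_meas (n : ℕ) : Measurable (layer n) :=
  ((measurable_const.indicator measurableSet_Icc).add
    (measurable_const.indicator measurableSet_Ici))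

lemma pointwise_log_le {x : ℝ} (hx : 0 ≤ x) :
    (‖Real.log x‖₊ : ENNReal) ≤ ∑' n : ℕ, layer n x := by
  rcases eq_or_lt_of_le hx with hx0 | hx0
  · rw [← hx0]
    simp [Real.log_zero]
  rcases le_or_gt 1 x with hx1 | hx1
  · -- x ≥ 1
    set m := ⌊Real.log x⌋₊ with hm
    have hlog0 : 0 ≤ Real.log x := Real.log_nonneg hx1
    have h1 : (‖Real.log x‖₊ : ENNReal) = ENNReal.ofReal (Real.log x) :=
      Real.enorm_eq_ofReal hlog0
    have h2' : ENNReal.ofReal (Real.log x) ≤ ((m+1 : ℕ) : ENNReal) := by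
      rw [← ENNReal.ofReal_natCast]
      apply ENNReal.ofReal_le_ofReal
      push_cast
      exact (Nat.lt_floor_add_one _).le
    have h3' : ((m+1 : ℕ) : ENNReal) ≤ ∑ n ∈ Finset.range (m+1), layer n x := by
      have hterm : ∀ n ∈ Finset.range (m+1), (1:ENNReal) ≤ layer n x := by
        intro n hn
        have hn' : (n:ℝ) ≤ Real.log x := by
          have : n ≤ m := by simpa using Nat.lt_succ_iff.mp (Finset.mem_range.mp hn)
          calc (n:ℝ) ≤ (m:ℝ) := by exact_mod_cast this
          _ ≤ Real.log x := Nat.floor_le hlog0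
        have hmem : x ∈ Set.Ici (Real.exp (n:ℝ)) := by
          rw [Set.mem_Ici, ← Real.exp_log hx0]
          exact Real.exp_le_exp.mpr hn'
        unfold layer
        rw [Set.indicator_of_mem hmem]
        exact le_add_self
      calc ((m+1 : ℕ) : ENNReal) = (Finset.range (m+1)).card • (1:ENNReal) := by
            simp
      _ ≤ _ := Finset.card_nsmul_le_sum _ _ _ hterm
    exact h1 ▸ (h2'.trans (h3'.trans (ENNReal.sum_le_tsum _)))
  · -- 0 < x < 1
    set m := ⌊-Real.log x⌋₊ with hm
    have hlog0 : 0 ≤ -Real.log x := by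
      have := Real.log_nonpos hx hx1.le
      linarith
    have h1 : (‖Real.log x‖₊ : ENNReal) = ENNReal.ofReal (-Real.log x) := by
      rw [← enorm_eq_nnnorm, Real.enorm_eq_ofReal_abs, abs_of_nonpos (by linarith)]
    have h2' : ENNReal.ofReal (-Real.log x) ≤ ((m+1 : ℕ) : ENNReal) := by
      rw [← ENNReal.ofReal_natCast]
      apply ENNReal.ofReal_le_ofReal
      push_cast
      exact (Nat.lt_floor_add_one _).le
    have h3' : ((m+1 : ℕ) : ENNReal) ≤ ∑ n ∈ Finset.range (m+1), layer n x := by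
      have hterm : ∀ n ∈ Finset.range (m+1), (1:ENNReal) ≤ layer n x := by
        intro n hn
        have hn' : (n:ℝ) ≤ -Real.log x := by
          have : n ≤ m := Nat.lt_succ_iff.mp (Finset.mem_range.mp hn)
          calc (n:ℝ) ≤ (m:ℝ) := by exact_mod_cast this
          _ ≤ -Real.log x := Nat.floor_le hlog0
        have hmem : x ∈ Set.Icc 0 (Real.exp (-(n:ℝ))) := by
          refine ⟨hx, ?_⟩
          rw [← Real.exp_log hx0]
          exact Real.exp_le_exp.mpr (by linarith)
        unfold layer
        rw [Set.indicator_of_mem hmem]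
        exact le_add_right (le_refl _)
      calc ((m+1 : ℕ) : ENNReal) = (Finset.range (m+1)).card • (1:ENNReal) := by
            simp
      _ ≤ _ := Finset.card_nsmul_le_sum _ _ _ hterm
    exact h1 ▸ (h2'.trans (h3'.trans (ENNReal.sum_le_tsum _)))

include hprob h2 h3 h5 hα0 hα1 in
lemma integrable_log : Integrable Real.log ν := by
  refine ⟨Real.measurable_log.aestronglyMeasurable, ?_⟩
  show (∫⁻ a, ‖Real.log a‖₊ ∂ν) < ⊤
  have hae : ∀ᵐ x ∂ν, (‖Real.log x‖₊ : ENNReal) ≤ ∑' n : ℕ, layer n x := by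
    have h0 : ν {x : ℝ | ¬ (0 ≤ x)} = 0 := by
      rw [show {x : ℝ | ¬ (0 ≤ x)} = Set.Iio 0 from by ext z; simp [not_le]]
      exact h2
    filter_upwards [(ae_iff).mpr h0] with x hx
    exact pointwise_log_le hx
  calc (∫⁻ a, ‖Real.log a‖₊ ∂ν) ≤ ∫⁻ a, ∑' n : ℕ, layer n a ∂ν := lintegral_mono_ae hae
  _ = ∑' n : ℕ, ∫⁻ a, layer n a ∂ν :=
      lintegral_tsum (fun n => (layer_meas n).aemeasurable)
  _ ≤ ∑' n : ℕ, ENNReal.ofReal (2 * (1/2)^n) := by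
      apply ENNReal.tsum_le_tsum
      intro n
      unfold layer
      rw [lintegral_add_left (measurable_const.indicator measurableSet_Icc),
        lintegral_indicator_const measurableSet_Icc, lintegral_indicator_const measurableSet_Ici,
        one_mul, one_mul]
      have hexp : (n:ℝ) + 1 ≤ Real.exp (n:ℝ) := Real.add_one_le_exp _
      have hb1 : ν (Set.Icc 0 (Real.exp (-(n:ℝ)))) ≤ ENNReal.ofReal (2 * (1/2)^(n+1)) := by
        refine (measure_mono ?_).trans (nu_tail_left hprob h2 h3 h5 hα0 hα1 n)
        apply Set.Icc_subset_Icc_right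
        rw [Real.exp_neg, one_div]
        exact inv_anti₀ (by positivity) hexp
      have hb2 : ν (Set.Ici (Real.exp (n:ℝ))) ≤ ENNReal.ofReal (2 * (1/2)^(n+1)) := by
        refine (measure_mono ?_).trans (nu_tail_right hprob h2 h3 h5 hα0 hα1 n)
        exact Set.Ici_subset_Ici.mpr hexp
      calc ν (Set.Icc 0 (Real.exp (-(n:ℝ)))) + ν (Set.Ici (Real.exp (n:ℝ)))
          ≤ ENNReal.ofReal (2 * (1/2)^(n+1)) + ENNReal.ofReal (2 * (1/2)^(n+1)) :=
            add_le_add hb1 hb2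
      _ = ENNReal.ofReal (2 * (1/2)^n) := by
            rw [← ENNReal.ofReal_add (by positivity) (by positivity)]
            congr 1
            ring
  _ < ⊤ := by
      have : ∀ n : ℕ, ENNReal.ofReal (2 * (1/2)^n) =
          ENNReal.ofReal 2 * (ENNReal.ofReal (1/2))^n := by
        intro n
        rw [ENNReal.ofReal_mul (by norm_num), ENNReal.ofReal_pow (by norm_num)]
      simp_rw [this]
      rw [ENNReal.tsum_mul_left, ENNReal.tsum_geometric]
      apply ENNReal.mul_lt_top ENNReal.ofReal_lt_top
      rw [lt_top_iff_ne_top, ENNReal.inv_ne_top, ne_eq, tsub_eq_zero_iff_le]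
      simp only [not_le]
      exact ENNReal.ofReal_lt_one.mpr (by norm_num)

include hprob h2 h3 h5 hα0 hα1 in
lemma integrable_log_add_one : Integrable (fun x => Real.log (x + 1)) ν := by
  apply Integrable.mono' ((integrable_const (Real.log 2)).add
    (integrable_log hprob h2 h3 h5 hα0 hα1).abs)
  · exact (Real.measurable_log.comp (measurable_id.add_const 1)).aestronglyMeasurable
  · have h0 : ν {x : ℝ | ¬ (0 ≤ x)} = 0 := by
      rw [show {x : ℝ | ¬ (0 ≤ x)} = Set.Iio 0 from by ext z; simp [not_le]]
      exact h2
    filter_upwards [(ae_iff).mpr h0] with x hx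
    show ‖Real.log (x + 1)‖ ≤ Real.log 2 + |Real.log x|
    have hx1 : (1:ℝ) ≤ x + 1 := by linarith
    rw [Real.norm_eq_abs, abs_of_nonneg (Real.log_nonneg hx1)]
    rcases le_or_gt 1 x with h | h
    · have : Real.log (x + 1) ≤ Real.log (2 * x) :=
        Real.log_le_log (by linarith) (by linarith)
      rw [Real.log_mul (by norm_num) (by linarith)] at this
      have := abs_of_nonneg (Real.log_nonneg h)
      calc Real.log (x + 1) ≤ Real.log 2 + Real.log x := by linarith
      _ ≤ Real.log 2 + |Real.log x| := by
          have := le_abs_self (Real.log x); linarith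
    · have : Real.log (x + 1) ≤ Real.log 2 :=
        Real.log_le_log (by linarith) (by linarith)
      have habs : 0 ≤ |Real.log x| := abs_nonneg _
      linarith

end Integrability

/-- `ν` is the measure `ν_α`: a Borel probability measure on `[0,∞)` (viewed as a measure on `ℝ`
giving no mass to `(-∞,0)`) with `ν([0,1]) = 1 - α`, `ν([1,∞)) = α`, and such that for every
Stern-Brocot interval `I` of rank `r ≥ 1`, the left sub-interval of `I` carries a proportion `α`
of the mass of `I` if `r` is odd and `1 - α` if `r` is even. -/
def IsSternBrocotMeasure (α : ℝ) (ν : Measure ℝ) : Prop :=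
  IsProbabilityMeasure ν ∧
  ν (Set.Iio 0) = 0 ∧
  ν (Set.Icc 0 1) = ENNReal.ofReal (1 - α) ∧
  ν (Set.Ici 1) = ENNReal.ofReal α ∧
  ∀ w : List Bool, 1 ≤ w.length →
    ν (sbSet (sb (w ++ [true]))) =
      (if Odd w.length then ENNReal.ofReal α else ENNReal.ofReal (1 - α)) * ν (sbSet (sb w))

/-- For `α ∈ (0,1]`, `α ≠ 1/2`, with `γ(α) = ∫ log x dν_α(x)`:
`∫_{[0,1]} log x dν_α = ((α+1)(1-α)/(1-2α))·γ(α)` and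
`∫_{[1,∞)} log x dν_α = (α(α-2)/(1-2α))·γ(α)`. -/
theorem sternBrocotMeasure_integral_log_parts
    (α : ℝ) (hα0 : 0 < α) (hα1 : α ≤ 1) (hαhalf : α ≠ 1 / 2) (ν : Measure ℝ)
    (hν : IsSternBrocotMeasure α ν) :
    (∫ x in Set.Icc (0 : ℝ) 1, Real.log x ∂ν =
      ((α + 1) * (1 - α) / (1 - 2 * α)) * ∫ x, Real.log x ∂ν) ∧
    (∫ x in Set.Ici (1 : ℝ), Real.log x ∂ν =
      (α * (α - 2) / (1 - 2 * α)) * ∫ x, Real.log x ∂ν) := by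
  obtain ⟨hprob, h2, h3, h4, h5⟩ := hν
  have hα0' : 0 ≤ α := hα0.le
  set γ : ℝ := ∫ x, Real.log x ∂ν with hγdef
  set L : ℝ := ∫ x, Real.log (x + 1) ∂ν with hLdef
  have hIntLog : Integrable Real.log ν := integrable_log hprob h2 h3 h5 hα0' hα1
  have hIntL1 : Integrable (fun x => Real.log (x + 1)) ν :=
    integrable_log_add_one hprob h2 h3 h5 hα0' hα1
  have haeIoi : ∀ᵐ x ∂ν, 0 < x := by
    have h0 : ν {x : ℝ | ¬ (0 < x)} = 0 := by
      rw [show {x : ℝ | ¬ (0 < x)} = Set.Iic 0 from by ext z; simp [not_lt]]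
      exact nu_Iic_zero hprob h2 h5 hα0' hα1
    exact (ae_iff).mpr h0
  -- B = α * (L - γ)
  have hB : (∫ x in Set.Ici (1:ℝ), Real.log x ∂ν) = α * (L - γ) := by
    rw [show ν.restrict (Set.Ici 1) = Measure.map fF (ENNReal.ofReal α • ν) from
        nu_restrict_Ici_one hprob h2 h3 h4 h5 hα0' hα1,
      integral_map measurable_fF.aemeasurable Real.measurable_log.aestronglyMeasurable,
      integral_smul_measure, ENNReal.toReal_ofReal hα0', smul_eq_mul]
    congr 1
    have hcong : ∫ x, Real.log (fF x) ∂ν = ∫ x, (Real.log (x+1) - Real.log x) ∂ν := by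
      apply integral_congr_ae
      filter_upwards [haeIoi] with x hx
      show Real.log (fF x) = _
      unfold fF
      rw [Real.log_div (by linarith) (ne_of_gt hx)]
    rw [hcong, integral_sub hIntL1 hIntLog]
  -- A = (1 - α) * (-L)
  have hA : (∫ x in Set.Icc (0:ℝ) 1, Real.log x ∂ν) = (1 - α) * (-L) := by
    rw [show ν.restrict (Set.Icc 0 1) = Measure.map gG (ENNReal.ofReal (1 - α) • ν) from
        nu_restrict_Icc_01 hprob h2 h3 h4 h5 hα0' hα1,
      integral_map measurable_gG.aemeasurable Real.measurable_log.aestronglyMeasurable,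
      integral_smul_measure, ENNReal.toReal_ofReal (by linarith), smul_eq_mul]
    congr 1
    have hcong : ∫ x, Real.log (gG x) ∂ν = ∫ x, -Real.log (x+1) ∂ν := by
      apply integral_congr_ae
      apply Filter.Eventually.of_forall
      intro x
      show Real.log (gG x) = _
      unfold gG
      rw [Real.log_inv]
    rw [hcong, integral_neg]
  -- γ = A + B
  have hsplit : γ = (∫ x in Set.Icc (0:ℝ) 1, Real.log x ∂ν) +
      (∫ x in Set.Ici (1:ℝ), Real.log x ∂ν) := by
    have hIio : (∫ x in Set.Iio (0:ℝ), Real.log x ∂ν) = 0 := by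
      rw [Measure.restrict_zero_set h2]
      exact integral_zero_measure _
    have h1 : γ = ∫ x in Set.Ici (0:ℝ), Real.log x ∂ν := by
      have := integral_add_compl (measurableSet_Iio (a := (0:ℝ))) hIntLog
      rw [hIio, zero_add, Set.compl_Iio] at this
      rw [hγdef, ← this]
    have h2' : Set.Ici (0:ℝ) = Set.Icc 0 1 ∪ Set.Ioi 1 := by
      ext y
      simp only [Set.mem_Ici, Set.mem_union, Set.mem_Icc, Set.mem_Ioi]
      constructor
      · intro hy
        rcases le_or_gt y 1 with h | h
        · exact Or.inl ⟨hy, h⟩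
        · exact Or.inr h
      · rintro (⟨h, _⟩ | h) <;> linarith
    have hdisj : Disjoint (Set.Icc (0:ℝ) 1) (Set.Ioi 1) := by
      rw [Set.disjoint_left]
      rintro y ⟨_, hy2⟩ hy3
      exact absurd hy3 (not_lt.mpr hy2)
    have hIoiIci : (∫ x in Set.Ioi (1:ℝ), Real.log x ∂ν) =
        ∫ x in Set.Ici (1:ℝ), Real.log x ∂ν := by
      apply setIntegral_congr_set
      have hd1 : ν (Set.Ioi 1 \ Set.Ici 1) = 0 := by
        rw [show Set.Ioi (1:ℝ) \ Set.Ici 1 = ∅ from by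
          ext z; simp only [Set.mem_diff, Set.mem_Ioi, Set.mem_Ici, Set.mem_empty_iff_false,
            iff_false, not_and, not_not]
          intro h; linarith]
        exact measure_empty
      have hd2 : ν (Set.Ici 1 \ Set.Ioi 1) = 0 := by
        rw [show Set.Ici (1:ℝ) \ Set.Ioi 1 = {1} from by
          ext z; simp only [Set.mem_diff, Set.mem_Ici, Set.mem_Ioi, not_lt,
            Set.mem_singleton_iff]
          constructor
          · rintro ⟨h1, h2⟩; linarith
          · rintro rfl; exact ⟨le_refl _, le_refl _⟩]
        exact nu_one hprob h5 hα0' hα1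
      rw [Filter.eventuallyEq_set]
      rw [ae_iff]
      have : {x : ℝ | ¬ (x ∈ Set.Ioi 1 ↔ x ∈ Set.Ici 1)} ⊆
          (Set.Ioi 1 \ Set.Ici 1) ∪ (Set.Ici 1 \ Set.Ioi 1) := by
        intro z hz
        simp only [Set.mem_setOf_eq, not_iff] at hz
        by_cases h1 : z ∈ Set.Ioi (1:ℝ)
        · exact Or.inl ⟨h1, by tauto⟩
        · exact Or.inr ⟨by tauto, h1⟩
      exact measure_mono_null this (by
        exact le_antisymm ((measure_union_le _ _).trans (by rw [hd1, hd2]; simp)) (zero_le))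
    rw [h1, h2', setIntegral_union hdisj measurableSet_Ioi
      hIntLog.integrableOn hIntLog.integrableOn, hIoiIci]
  -- final algebra
  have h2α : (1:ℝ) - 2 * α ≠ 0 := by
    intro h
    exact hαhalf (by linarith)
  rw [hA, hB] at hsplit
  have hL : (2*α - 1) * L = (1 + α) * γ := by linear_combination -hsplit
  constructor
  · rw [hA]
    rw [div_mul_eq_mul_div, eq_div_iff h2α]
    linear_combination (1 - α) * hL
  · rw [hB]
    rw [div_mul_eq_mul_div, eq_div_iff h2α]
    linear_combination (-α) * hL
end
end

section
/- For every α ∈ (1/2, 1], ∫₀^∞ log x dν_α(x) > 0. Consequently, the upper Lyapunov exponent γ_p = ∫₀^∞ log x dν_{α(p)}(x) of the linear random Fibonacci sequence, where α(p) = (3p − 2 + √(5p² − 8p + 4))/(2p), is strictly positive for every p ∈ (0,1). -/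
open MeasureTheory Filter Set Topology

noncomputable section

namespace SBAux

/-- step factor for going left after `n` steps -/
def g (α : ℝ) (n : ℕ) : ℝ := if Odd n then α else 1 - α

lemma g_succ (α : ℝ) (n : ℕ) : g α (n+1) = 1 - g α n := by
  simp only [g, Nat.odd_add_one]
  by_cases h : Odd n <;> simp [h] <;> ring

lemma g_nonneg {α : ℝ} (h1 : (1:ℝ)/2 ≤ α) (h2 : α ≤ 1) (n : ℕ) : 0 ≤ g α n := by
  unfold g; split <;> nlinarith

lemma g_le_one {α : ℝ} (h1 : (1:ℝ)/2 ≤ α) (h2 : α ≤ 1) (n : ℕ) : g α n ≤ 1 := by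
  unfold g; split <;> nlinarith

/-- cumulative combinatorial mass of words `≤` the given word (same length), weakly -/
def Ple (α : ℝ) : ℕ → List Bool → ℝ
  | _, [] => 1
  | n, x :: v => if x then g α n * Ple α (n+1) v else g α n + (1 - g α n) * Ple α (n+1) v

/-- cumulative combinatorial mass of words `<` the given word (same length), strictly -/
def Plt (α : ℝ) : ℕ → List Bool → ℝ
  | _, [] => 0
  | n, x :: v => if x then g α n * Plt α (n+1) v else g α n + (1 - g α n) * Plt α (n+1) v

lemma Ple_bounds {α : ℝ} (h1 : (1:ℝ)/2 ≤ α) (h2 : α ≤ 1) :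
    ∀ (v : List Bool) (n : ℕ), 0 ≤ Ple α n v ∧ Ple α n v ≤ 1 := by
  intro v
  induction v with
  | nil => intro n; simp [Ple]
  | cons x v ih =>
    intro n
    have hg0 := g_nonneg h1 h2 n
    have hg1 := g_le_one h1 h2 n
    obtain ⟨ih0, ih1⟩ := ih (n+1)
    cases x <;> simp only [Ple, if_true, if_false, Bool.false_eq_true] <;>
      constructor <;> nlinarith

lemma Plt_bounds {α : ℝ} (h1 : (1:ℝ)/2 ≤ α) (h2 : α ≤ 1) :
    ∀ (v : List Bool) (n : ℕ), 0 ≤ Plt α n v ∧ Plt α n v ≤ 1 := by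
  intro v
  induction v with
  | nil => intro n; simp [Plt]
  | cons x v ih =>
    intro n
    have hg0 := g_nonneg h1 h2 n
    have hg1 := g_le_one h1 h2 n
    obtain ⟨ih0, ih1⟩ := ih (n+1)
    cases x <;> simp only [Plt, if_true, if_false, Bool.false_eq_true] <;>
      constructor <;> nlinarith

/-- the key combinatorial (stochastic domination) inequalities -/
lemma comb {α : ℝ} (h1 : (1:ℝ)/2 ≤ α) (h2 : α ≤ 1) :
    ∀ (v : List Bool) (n : ℕ),
      (g α n ≤ 1/2 → Ple α n v + Plt α n (v.map not) ≤ 1) ∧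
      (1/2 ≤ g α n →
        (1 - g α n) * Ple α n v + g α n * Plt α n (v.map not) ≤ g α n ∧
        g α n * Ple α n v + (1 - g α n) * Plt α n (v.map not) ≤ g α n) := by
  intro v
  induction v with
  | nil =>
    intro n
    refine ⟨fun _ => by simp [Ple, Plt], fun hg => ?_⟩
    constructor <;> simp [Ple, Plt] <;> nlinarith
  | cons x v ih =>
    intro n
    have hg0 := g_nonneg h1 h2 n
    have hg1 := g_le_one h1 h2 n
    have hgs := g_succ α n
    obtain ⟨le0, le1⟩ := Ple_bounds h1 h2 v (n+1)
    obtain ⟨lt0, lt1⟩ := Plt_bounds h1 h2 (v.map not) (n+1)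
    obtain ⟨ihA, ihB⟩ := ih (n+1)
    constructor
    · -- A-case : g n ≤ 1/2, so g (n+1) = 1 - g n ≥ 1/2
      intro hg
      have hB := ihB (by rw [hgs]; linarith)
      obtain ⟨hB1, hB2⟩ := hB
      rw [hgs] at hB1 hB2
      cases x <;>
        simp only [List.map_cons, Bool.not_true, Bool.not_false, Ple, Plt,
          if_true, if_false, Bool.false_eq_true] <;> nlinarith
    · -- B-case : 1/2 ≤ g n, so g (n+1) = 1 - g n ≤ 1/2
      intro hg
      have hA := ihA (by rw [hgs]; linarith)
      set P := Ple α (n+1) v with hP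
      set Q := Plt α (n+1) (v.map not) with hQ
      set b := g α n with hb
      have key1 : 0 ≤ b * (1 - b) * (1 - P - Q) :=
        mul_nonneg (mul_nonneg hg0 (by linarith)) (by linarith)
      have key2 : 0 ≤ (2*b - 1) * (1 - Q) :=
        mul_nonneg (by linarith) (by linarith)
      have key2' : 0 ≤ (2*b - 1) * Q := mul_nonneg (by linarith) lt0
      have key3 : 0 ≤ (1-b) * (1-b) * (1 - P - Q) :=
        mul_nonneg (mul_nonneg (by linarith) (by linarith)) (by linarith)
      constructor <;>
        (cases x <;>
          simp only [List.map_cons, Bool.not_true, Bool.not_false, Ple, Plt,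
            if_true, if_false, Bool.false_eq_true] <;> nlinarith)

end SBAux

namespace SBAux

lemma sbGo_append (I : (ℕ × ℕ) × (ℕ × ℕ)) (w w' : List Bool) :
    sbGo I (w ++ w') = sbGo (sbGo I w) w' := by
  induction w generalizing I with
  | nil => rfl
  | cons x w ih =>
    obtain ⟨⟨a, b⟩, c, d⟩ := I
    cases x <;> simp only [List.cons_append, sbGo, if_true, if_false,
      Bool.false_eq_true] <;> exact ih _

lemma sbGo_nil (I : (ℕ × ℕ) × (ℕ × ℕ)) : sbGo I [] = I := by
  rcases I with ⟨⟨a,b⟩,c,d⟩; rfl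

lemma sbGo_cons_true (a b c d : ℕ) (w : List Bool) :
    sbGo ((a,b),(c,d)) (true :: w) = sbGo ((a,b),(a+c,b+d)) w := rfl

lemma sbGo_cons_false (a b c d : ℕ) (w : List Bool) :
    sbGo ((a,b),(c,d)) (false :: w) = sbGo ((a+c,b+d),(c,d)) w := rfl

lemma sbGo_true (a b c d : ℕ) : sbGo ((a,b),(c,d)) [true] = ((a,b),(a+c,b+d)) := rfl

lemma sbGo_false (a b c d : ℕ) : sbGo ((a,b),(c,d)) [false] = ((a+c,b+d),(c,d)) := rfl

lemma sb_append_true {w : List Bool} {a b c d : ℕ} (h : sb w = ((a,b),(c,d))) :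
    sb (w ++ [true]) = ((a,b),(a+c,b+d)) := by
  rw [sb, sbGo_append, ← sb, h, sbGo_true]

lemma sb_append_false {w : List Bool} {a b c d : ℕ} (h : sb w = ((a,b),(c,d))) :
    sb (w ++ [false]) = ((a+c,b+d),(c,d)) := by
  rw [sb, sbGo_append, ← sb, h, sbGo_false]

/-- validity invariant -/
def Inv (I : (ℕ × ℕ) × (ℕ × ℕ)) : Prop :=
  I.1.1 * I.2.2 + 1 = I.1.2 * I.2.1 ∧ 1 ≤ I.1.2 ∧ 1 ≤ I.2.1

lemma Inv_start : Inv ((0, 1), (1, 0)) := by simp [Inv]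

lemma Inv_left {a b c d : ℕ} (h : Inv ((a,b),(c,d))) : Inv ((a,b),(a+c,b+d)) := by
  obtain ⟨h1, h2, h3⟩ := h
  simp only [Inv] at *
  refine ⟨?_, h2, by omega⟩
  have : a * (b + d) + 1 = a*b + (a*d + 1) := by ring
  rw [this, h1]; ring

lemma Inv_right {a b c d : ℕ} (h : Inv ((a,b),(c,d))) : Inv ((a+c,b+d),(c,d)) := by
  obtain ⟨h1, h2, h3⟩ := h
  simp only [Inv] at *
  refine ⟨?_, by omega, h3⟩
  have : (a+c) * d + 1 = (a*d + 1) + c*d := by ring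
  rw [this, h1]; ring

lemma Inv_sbGo {I : (ℕ × ℕ) × (ℕ × ℕ)} (h : Inv I) (w : List Bool) : Inv (sbGo I w) := by
  induction w generalizing I with
  | nil => exact h
  | cons x w ih =>
    obtain ⟨⟨a, b⟩, c, d⟩ := I
    cases x <;> simp only [sbGo, if_true, if_false, Bool.false_eq_true]
    · exact ih (Inv_right h)
    · exact ih (Inv_left h)

lemma Inv_sb (w : List Bool) : Inv (sb w) := Inv_sbGo Inv_start w

lemma d_pos_sbGo {I : (ℕ × ℕ) × (ℕ × ℕ)} (hb : 1 ≤ I.1.2) (hd : 1 ≤ I.2.2) (w : List Bool) :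
    1 ≤ (sbGo I w).2.2 := by
  induction w generalizing I with
  | nil => exact hd
  | cons x w ih =>
    obtain ⟨⟨a, b⟩, c, d⟩ := I
    simp only at hb hd
    cases x <;> simp only [sbGo, if_true, if_false, Bool.false_eq_true]
    · exact ih (by simp only; omega) (by simp only; omega)
    · exact ih (by simp only; omega) (by simp only; omega)

lemma sb_d_pos {w : List Bool} (h : true ∈ w) : 1 ≤ (sb w).2.2 := by
  obtain ⟨u, u', rfl⟩ := List.append_of_mem h
  have he : u ++ true :: u' = (u ++ [true]) ++ u' := by simp
  rw [he, sb, sbGo_append, ← sb]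
  rcases hs : sb u with ⟨⟨a, b⟩, c, d⟩
  have hb : 1 ≤ b := by have := (Inv_sb u).2.1; rw [hs] at this; exact this
  rw [sb_append_true hs]
  exact d_pos_sbGo (by simpa using hb) (by show 1 ≤ b + d; omega) u'

/-- left endpoint, as a real -/
def eL (I : (ℕ × ℕ) × (ℕ × ℕ)) : ℝ := (I.1.1 : ℝ) / (I.1.2 : ℝ)

/-- right endpoint, as a real (only meaningful when `d ≠ 0`) -/
def eR (I : (ℕ × ℕ) × (ℕ × ℕ)) : ℝ := (I.2.1 : ℝ) / (I.2.2 : ℝ)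

lemma nat_div_le {a b c d : ℕ} (hb : 1 ≤ b) (hd : 1 ≤ d) (h : a * d ≤ c * b) :
    (a : ℝ) / b ≤ (c : ℝ) / d := by
  rw [div_le_div_iff₀ (by exact_mod_cast hb) (by exact_mod_cast hd)]
  exact_mod_cast h

lemma eL_le_eR {I : (ℕ × ℕ) × (ℕ × ℕ)} (h : Inv I) (hd : 1 ≤ I.2.2) : eL I ≤ eR I := by
  obtain ⟨⟨a, b⟩, c, d⟩ := I
  obtain ⟨h1, h2, h3⟩ := h
  simp only at h1 h2 h3 hd
  exact nat_div_le h2 hd (Nat.le.intro (by rw [h1, Nat.mul_comm]))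

lemma eL_le_med {a b c d : ℕ} (h : Inv ((a,b),(c,d))) :
    eL ((a,b),(c,d)) ≤ eL ((a+c,b+d),(c,d)) := by
  obtain ⟨h1, h2, h3⟩ := h
  simp only at h1 h2 h3
  have key : a * d ≤ b * c := Nat.le.intro h1
  show (a:ℝ)/b ≤ ((a+c : ℕ):ℝ)/((b+d : ℕ):ℝ)
  refine nat_div_le h2 (by omega) ?_
  calc a * (b+d) = a*b + a*d := by ring
    _ ≤ a*b + b*c := Nat.add_le_add_left key _
    _ = (a+c)*b := by ring

lemma med_le_eR {a b c d : ℕ} (h : Inv ((a,b),(c,d))) (hd : 1 ≤ d) :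
    eR ((a,b),(a+c,b+d)) ≤ eR ((a,b),(c,d)) := by
  obtain ⟨h1, h2, h3⟩ := h
  simp only at h1 h2 h3
  have key : a * d ≤ b * c := Nat.le.intro h1
  show ((a+c : ℕ):ℝ)/((b+d : ℕ):ℝ) ≤ (c:ℝ)/d
  refine nat_div_le (by omega) hd ?_
  calc (a+c) * d = a*d + c*d := by ring
    _ ≤ b*c + c*d := Nat.add_le_add_right key _
    _ = c*(b+d) := by ring

lemma eL_le_eL_sbGo {I : (ℕ × ℕ) × (ℕ × ℕ)} (h : Inv I) (w : List Bool) :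
    eL I ≤ eL (sbGo I w) := by
  induction w generalizing I with
  | nil => exact le_refl _
  | cons x w ih =>
    obtain ⟨⟨a, b⟩, c, d⟩ := I
    cases x <;> simp only [sbGo, if_true, if_false, Bool.false_eq_true]
    · exact le_trans (eL_le_med h) (ih (Inv_right h))
    · exact ih (Inv_left h)

lemma eR_sbGo_le {I : (ℕ × ℕ) × (ℕ × ℕ)} (h : Inv I) (hd : 1 ≤ I.2.2) (w : List Bool) :
    eR (sbGo I w) ≤ eR I := by
  induction w generalizing I with
  | nil => exact le_refl _
  | cons x w ih =>
    obtain ⟨⟨a, b⟩, c, d⟩ := I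
    simp only at hd
    cases x <;> simp only [sbGo, if_true, if_false, Bool.false_eq_true]
    · exact ih (Inv_right h) hd
    · exact le_trans (ih (Inv_left h) (by simp only; omega)) (med_le_eR h hd)

/-- width of a valid interval -/
lemma width {a b c d : ℕ} (h : Inv ((a,b),(c,d))) (hd : 1 ≤ d) :
    eR ((a,b),(c,d)) - eL ((a,b),(c,d)) = 1 / ((b:ℝ) * d) := by
  obtain ⟨h1, h2, h3⟩ := h
  simp only at h1 h2 h3
  have hb' : (0:ℝ) < b := by exact_mod_cast h2
  have hd' : (0:ℝ) < d := by exact_mod_cast hd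
  have key : (b:ℝ) * c = a * d + 1 := by exact_mod_cast h1.symm
  show (c:ℝ)/d - (a:ℝ)/b = 1 / ((b:ℝ)*d)
  have e1 : (c:ℝ)/d - (a:ℝ)/b = ((b:ℝ)*c - a*d)/(b*d) := by
    field_simp
  rw [e1, key]
  norm_num

/-- growth of the product of denominators -/
lemma bd_grow {I : (ℕ × ℕ) × (ℕ × ℕ)} (h : Inv I) (hd : 1 ≤ I.2.2) (w : List Bool) :
    I.1.2 * I.2.2 + w.length ≤ (sbGo I w).1.2 * (sbGo I w).2.2 := by
  induction w generalizing I with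
  | nil => simp [sbGo_nil]
  | cons x w ih =>
    obtain ⟨⟨a, b⟩, c, d⟩ := I
    have hb := h.2.1
    simp only at hb hd
    cases x <;> simp only [sbGo_cons_true, sbGo_cons_false, List.length_cons]
    · refine le_trans ?_ (ih (I := ((a+c,b+d),(c,d))) (Inv_right h) hd)
      simp only
      calc b * d + (w.length + 1) ≤ (b*d + d) + w.length := by omega
        _ ≤ (b+d)*d + w.length := by
            have : b*d + d ≤ (b+d)*d := by
              have : (b+d)*d = b*d + d*d := by ring
              rw [this]
              have : d ≤ d * d := Nat.le_mul_of_pos_left d hd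
              omega
            omega
    · refine le_trans ?_ (ih (I := ((a,b),(a+c,b+d))) (Inv_left h) (by simp only; omega))
      simp only
      calc b * d + (w.length + 1) ≤ (b*d + b) + w.length := by omega
        _ ≤ b*(b+d) + w.length := by
            have : b*d + b ≤ b*(b+d) := by
              have : b*(b+d) = b*b + b*d := by ring
              rw [this]
              have : b ≤ b * b := Nat.le_mul_of_pos_left b hb
              omega
            omega

lemma sb_nil : sb [] = ((0,1),(1,0)) := rfl
lemma sb_T : sb [true] = ((0,1),(1,1)) := rfl
lemma sb_F : sb [false] = ((1,1),(1,0)) := rfl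

lemma sb_repT (n : ℕ) : sb (List.replicate n true) = ((0,1),(1,n)) := by
  induction n with
  | zero => rfl
  | succ n ih =>
    rw [List.replicate_succ', sb_append_true ih]
    simp [Nat.add_comm]

lemma sb_repF (n : ℕ) : sb (List.replicate n false) = ((n,1),(1,0)) := by
  induction n with
  | zero => rfl
  | succ n ih =>
    rw [List.replicate_succ', sb_append_false ih]

/-- the swap operation corresponding to `x ↦ 1/x` -/
def swapI (I : (ℕ × ℕ) × (ℕ × ℕ)) : (ℕ × ℕ) × (ℕ × ℕ) := ((I.2.2, I.2.1), (I.1.2, I.1.1))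

lemma sbGo_flip (I : (ℕ × ℕ) × (ℕ × ℕ)) (w : List Bool) :
    sbGo (swapI I) (w.map not) = swapI (sbGo I w) := by
  induction w generalizing I with
  | nil => rfl
  | cons x w ih =>
    obtain ⟨⟨a, b⟩, c, d⟩ := I
    cases x
    · -- letter false ↦ not = true
      have step : sbGo (swapI ((a,b),(c,d))) ((false :: w).map not)
          = sbGo (swapI ((a+c,b+d),(c,d))) (w.map not) := by
        simp only [List.map_cons, Bool.not_false]
        show sbGo ((d,c),(d+b,c+a)) (w.map not) = sbGo ((d,c),(b+d,a+c)) (w.map not)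
        rw [Nat.add_comm d b, Nat.add_comm c a]
      rw [step, ih, sbGo_cons_false]
    · have step : sbGo (swapI ((a,b),(c,d))) ((true :: w).map not)
          = sbGo (swapI ((a,b),(a+c,b+d))) (w.map not) := by
        simp only [List.map_cons, Bool.not_true]
        show sbGo ((d+b,c+a),(b,a)) (w.map not) = sbGo ((b+d,a+c),(b,a)) (w.map not)
        rw [Nat.add_comm d b, Nat.add_comm c a]
      rw [step, ih, sbGo_cons_true]

lemma sb_flip (w : List Bool) : sb (w.map not) = swapI (sb w) := by
  rw [sb, sb, ← sbGo_flip]; rfl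

/-- membership of the left endpoint -/
lemma eL_mem_sbSet {I : (ℕ × ℕ) × (ℕ × ℕ)} (h : Inv I) : eL I ∈ sbSet I := by
  obtain ⟨⟨a, b⟩, c, d⟩ := I
  by_cases hd : d = 0
  · subst hd
    simp only [sbSet, if_true]
    exact self_mem_Ici
  · have : sbSet ((a,b),(c,d)) = Set.Icc ((a:ℝ)/b) ((c:ℝ)/d) := by
      simp [sbSet, hd]
    rw [this]
    exact left_mem_Icc.2 (eL_le_eR h (by show 1 ≤ d; omega))

lemma sbSet_eq_Icc {I : (ℕ × ℕ) × (ℕ × ℕ)} (hd : I.2.2 ≠ 0) :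
    sbSet I = Set.Icc (eL I) (eR I) := by
  obtain ⟨⟨a, b⟩, c, d⟩ := I
  simp only at hd
  simp [sbSet, hd, eL, eR]

lemma sbSet_eq_Ici {I : (ℕ × ℕ) × (ℕ × ℕ)} (hd : I.2.2 = 0) :
    sbSet I = Set.Ici (eL I) := by
  obtain ⟨⟨a, b⟩, c, d⟩ := I
  simp only at hd
  simp [sbSet, hd, eL]

end SBAux

namespace SBAux

/- ### basic set helpers -/

lemma disj_Ico_Icc {a b c : ℝ} : Disjoint (Set.Ico a b) (Set.Icc b c) :=
  Set.disjoint_left.2 fun _ hx hx' => absurd (lt_of_lt_of_le hx.2 hx'.1) (lt_irrefl _)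

lemma disj_Ico_Ico {a b c : ℝ} : Disjoint (Set.Ico a b) (Set.Ico b c) :=
  Set.disjoint_left.2 fun _ hx hx' => absurd (lt_of_lt_of_le hx.2 hx'.1) (lt_irrefl _)

lemma disj_Ico_Ici {a b : ℝ} : Disjoint (Set.Ico a b) (Set.Ici b) :=
  Set.disjoint_left.2 fun _ hx hx' => absurd (lt_of_lt_of_le hx.2 hx') (lt_irrefl _)

lemma meas_Icc_eq_Ico {ν : Measure ℝ} {a b : ℝ} (h : ν {b} = 0) :
    ν (Set.Icc a b) = ν (Set.Ico a b) := by
  refine le_antisymm ?_ (measure_mono Set.Ico_subset_Icc_self)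
  calc ν (Set.Icc a b) ≤ ν (Set.Ico a b ∪ {b}) := by
        refine measure_mono fun x hx => ?_
        rcases lt_or_eq_of_le hx.2 with h' | h'
        · exact Or.inl ⟨hx.1, h'⟩
        · exact Or.inr (by simp [h'])
    _ ≤ ν (Set.Ico a b) + ν {b} := measure_union_le _ _
    _ = ν (Set.Ico a b) := by rw [h, add_zero]

/- ### endpoint bookkeeping -/

lemma sb_append (w v : List Bool) : sb (w ++ v) = sbGo (sb w) v := by
  simp only [sb, sbGo_append]

lemma eL_append (w v : List Bool) : eL (sb w) ≤ eL (sb (w ++ v)) := by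
  rw [sb_append]
  exact eL_le_eL_sbGo (Inv_sb w) v

lemma eL_le_eR_sb {w : List Bool} (h : true ∈ w) : eL (sb w) ≤ eR (sb w) :=
  eL_le_eR (Inv_sb w) (sb_d_pos h)

lemma eL_append_true (w : List Bool) : eL (sb (w ++ [true])) = eL (sb w) := by
  rcases hs : sb w with ⟨⟨a, b⟩, c, d⟩
  simp [sb_append_true hs, hs, eL]

lemma eR_append_false (w : List Bool) : eR (sb (w ++ [false])) = eR (sb w) := by
  rcases hs : sb w with ⟨⟨a, b⟩, c, d⟩
  simp [sb_append_false hs, hs, eR]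

lemma eR_true_eq_eL_false (w : List Bool) :
    eR (sb (w ++ [true])) = eL (sb (w ++ [false])) := by
  rcases hs : sb w with ⟨⟨a, b⟩, c, d⟩
  simp [sb_append_true hs, sb_append_false hs, eR, eL]

lemma dT_pos (w : List Bool) : (sb (w ++ [true])).2.2 ≠ 0 := by
  rcases hs : sb w with ⟨⟨a, b⟩, c, d⟩
  have hb : 1 ≤ b := by have := (Inv_sb w).2.1; rw [hs] at this; exact this
  rw [sb_append_true hs]
  show b + d ≠ 0
  omega

lemma sbSetT_eq (w : List Bool) :
    sbSet (sb (w ++ [true])) = Set.Icc (eL (sb w)) (eL (sb (w ++ [false]))) := by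
  rw [sbSet_eq_Icc (dT_pos w), eL_append_true, eR_true_eq_eL_false]

/- ### measure facts -/

variable {α : ℝ} {ν : Measure ℝ}

lemma nu_Ici0 (hν : IsSternBrocotMeasure α ν) : ν (Set.Ici (0:ℝ)) = 1 := by
  haveI := hν.1
  have : ν Set.univ = 1 := measure_univ
  rw [show (Set.univ : Set ℝ) = Set.Iio 0 ∪ Set.Ici 0 by simp [Set.Iio_union_Ici]] at this
  rw [measure_union (by exact Set.Iio_disjoint_Ici (le_refl _)) measurableSet_Ici,
    hν.2.1, zero_add] at this
  exact this

lemma mass_nil (hν : IsSternBrocotMeasure α ν) : ν (sbSet (sb [])) = 1 := by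
  have : sbSet (sb []) = Set.Ici (0:ℝ) := by
    rw [sb_nil, sbSet_eq_Ici rfl]
    norm_num [eL]
  rw [this]; exact nu_Ici0 hν

lemma mass_T (hν : IsSternBrocotMeasure α ν) (w : List Bool) :
    ν (sbSet (sb (w ++ [true]))) = ENNReal.ofReal (g α w.length) * ν (sbSet (sb w)) := by
  rcases w with _ | ⟨x, u⟩
  · -- w = []
    have h1 : sbSet (sb [true]) = Set.Icc (0:ℝ) 1 := by
      rw [show ([true] : List Bool) = [] ++ [true] by rfl, sbSetT_eq]
      have e1 : eL (sb []) = 0 := by rw [sb_nil]; norm_num [eL]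
      have e2 : eL (sb ([] ++ [false])) = 1 := by
        rw [show ([] : List Bool) ++ [false] = [false] by rfl, sb_F]
        norm_num [eL]
      rw [e1, e2]
    rw [show ([] : List Bool) ++ [true] = [true] by rfl, h1, mass_nil hν, mul_one,
      hν.2.2.1]
    norm_num [g]
  · have hlen : 1 ≤ (x :: u).length := by simp
    rw [hν.2.2.2.2 (x :: u) hlen]
    congr 1
    unfold g
    split <;> rfl

lemma mass_le_one (hν : IsSternBrocotMeasure α ν) (s : Set ℝ) : ν s ≤ 1 := by
  haveI := hν.1
  exact prob_le_one

lemma mass_ne_top (hν : IsSternBrocotMeasure α ν) (s : Set ℝ) : ν s ≠ ⊤ :=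
  (lt_of_le_of_lt (mass_le_one hν s) ENNReal.one_lt_top).ne

/-- singletons at left endpoints are null -/
lemma null_eL (hν : IsSternBrocotMeasure α ν) (h1 : 1/2 ≤ α) (h2 : α ≤ 1) (w : List Bool) :
    ν {eL (sb w)} = 0 := by
  -- mass of w ++ 2k trues
  have hTT : ∀ u : List Bool, ν (sbSet (sb (u ++ [true, true])))
      = ENNReal.ofReal (α * (1 - α)) * ν (sbSet (sb u)) := by
    intro u
    have : u ++ [true, true] = (u ++ [true]) ++ [true] := by simp
    rw [this, mass_T hν, mass_T hν, ← mul_assoc, ← ENNReal.ofReal_mul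
      (by have := g_nonneg h1 h2 ((u ++ [true]).length); linarith)]
    have hlen : (u ++ [true]).length = u.length + 1 := by simp
    have hgg : g α (u ++ [true]).length * g α u.length = α * (1 - α) := by
      rw [hlen, g_succ]
      unfold g
      split
      · ring
      · ring
    rw [hgg]
  have hrep : ∀ k : ℕ, ν (sbSet (sb (w ++ List.replicate (2*k) true)))
      ≤ ENNReal.ofReal ((α * (1-α))^k) := by
    intro k
    induction k with
    | zero => simpa using mass_le_one hν _
    | succ k ih =>
      have e1 : w ++ List.replicate (2*(k+1)) true
          = (w ++ List.replicate (2*k) true) ++ [true, true] := by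
        rw [show 2*(k+1) = 2*k + 2 by ring, List.replicate_add, ← List.append_assoc]
        rfl
      rw [e1, hTT]
      calc ENNReal.ofReal (α*(1-α)) * ν (sbSet (sb (w ++ List.replicate (2*k) true)))
          ≤ ENNReal.ofReal (α*(1-α)) * ENNReal.ofReal ((α*(1-α))^k) := by
            exact mul_le_mul_right ih _
        _ = ENNReal.ofReal ((α*(1-α))^(k+1)) := by
            rw [← ENNReal.ofReal_mul (by nlinarith)]
            congr 1
            ring
  have hmem : ∀ k : ℕ, eL (sb w) ∈ sbSet (sb (w ++ List.replicate (2*k) true)) := by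
    intro k
    have he : eL (sb (w ++ List.replicate (2*k) true)) = eL (sb w) := by
      induction (2*k) with
      | zero => simp
      | succ m ihm =>
        rw [List.replicate_succ', ← List.append_assoc, eL_append_true, ihm]
    rw [← he]
    exact eL_mem_sbSet (Inv_sb _)
  have hb : ∀ k : ℕ, (ν {eL (sb w)}).toReal ≤ (1/4:ℝ)^k := by
    intro k
    have h3 : ν {eL (sb w)} ≤ ENNReal.ofReal ((α * (1-α))^k) :=
      le_trans (measure_mono (Set.singleton_subset_iff.2 (hmem k))) (hrep k)
    have h4 : (α * (1-α))^k ≤ (1/4:ℝ)^k := by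
      apply pow_le_pow_left₀ (by nlinarith) (by nlinarith)
    calc (ν {eL (sb w)}).toReal ≤ ((ENNReal.ofReal ((α * (1-α))^k))).toReal :=
          ENNReal.toReal_mono ENNReal.ofReal_ne_top h3
      _ = (α * (1-α))^k := ENNReal.toReal_ofReal (pow_nonneg (by nlinarith) k)
      _ ≤ (1/4:ℝ)^k := h4
  have hlim : Filter.Tendsto (fun k : ℕ => (1/4:ℝ)^k) Filter.atTop (nhds 0) := by
    apply tendsto_pow_atTop_nhds_zero_of_lt_one <;> norm_num
  have : (ν {eL (sb w)}).toReal ≤ 0 := ge_of_tendsto' hlim hb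
  have h0 : (ν {eL (sb w)}).toReal = 0 := le_antisymm this ENNReal.toReal_nonneg
  exact (ENNReal.toReal_eq_zero_iff _).1 h0 |>.resolve_right (mass_ne_top hν _)

lemma null_eR (hν : IsSternBrocotMeasure α ν) (h1 : 1/2 ≤ α) (h2 : α ≤ 1) :
    ∀ (w : List Bool), true ∈ w → ν {eR (sb w)} = 0 := by
  intro w
  induction w using List.reverseRecOn with
  | nil => intro h; simp at h
  | append_singleton u x ih =>
    intro h
    cases x
    · -- last letter false
      rw [eR_append_false]
      have : true ∈ u := by
        rcases List.mem_append.1 h with h' | h'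
        · exact h'
        · simp at h'
      exact ih this
    · rw [eR_true_eq_eL_false]
      exact null_eL hν h1 h2 _

/-- splitting of the mass of an interval into its two children -/
lemma mass_split (hν : IsSternBrocotMeasure α ν) (h1 : 1/2 ≤ α) (h2 : α ≤ 1) (w : List Bool) :
    ν (sbSet (sb (w ++ [true]))) + ν (sbSet (sb (w ++ [false]))) = ν (sbSet (sb w)) := by
  set M := eL (sb (w ++ [false])) with hM
  have hLM : eL (sb w) ≤ M := eL_append w [false]
  have hnullM : ν {M} = 0 := null_eL hν h1 h2 _
  have hT : ν (sbSet (sb (w ++ [true]))) = ν (Set.Ico (eL (sb w)) M) := by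
    rw [sbSetT_eq w, meas_Icc_eq_Ico hnullM]
  rcases hs : sb w with ⟨⟨a, b⟩, c, d⟩
  rcases Nat.eq_zero_or_pos d with hd | hd
  · -- unbounded interval
    subst hd
    have hSw : sbSet ((a,b),(c,0)) = Set.Ici (eL (sb w)) := by
      rw [← hs]
      exact sbSet_eq_Ici (by rw [hs])
    have hSF : sbSet (sb (w ++ [false])) = Set.Ici M :=
      sbSet_eq_Ici (by rw [sb_append_false hs])
    rw [hT, hSF, hSw, ← measure_union disj_Ico_Ici measurableSet_Ici,
      Set.Ico_union_Ici_eq_Ici hLM]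
  · -- bounded interval
    have hdw : (sb w).2.2 ≠ 0 := by rw [hs]; show d ≠ 0; omega
    have hSw : sbSet ((a,b),(c,d)) = Set.Icc (eL (sb w)) (eR (sb w)) := by
      rw [← hs]
      exact sbSet_eq_Icc hdw
    have hdF : (sb (w ++ [false])).2.2 ≠ 0 := by
      rw [sb_append_false hs]; show d ≠ 0; omega
    have hSF : sbSet (sb (w ++ [false])) = Set.Icc M (eR (sb w)) := by
      rw [sbSet_eq_Icc hdF, hM, eR_append_false]
    have hMR : M ≤ eR (sb w) := by
      rw [hM, ← eR_true_eq_eL_false, show eR (sb w) = eR ((a,b),(c,d)) by rw [hs],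
        show sb (w ++ [true]) = ((a,b),(a+c,b+d)) from sb_append_true hs]
      exact med_le_eR (by rw [← hs]; exact Inv_sb w) hd
    rw [hT, hSF, hSw, ← measure_union disj_Ico_Icc measurableSet_Icc,
      Set.Ico_union_Icc_eq_Icc hLM hMR]

/- real-valued versions -/

lemma mr_T (hν : IsSternBrocotMeasure α ν) (h1 : 1/2 ≤ α) (h2 : α ≤ 1) (w : List Bool) :
    (ν (sbSet (sb (w ++ [true])))).toReal = g α w.length * (ν (sbSet (sb w))).toReal := by
  rw [mass_T hν, ENNReal.toReal_mul, ENNReal.toReal_ofReal (g_nonneg h1 h2 _)]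

lemma mr_F (hν : IsSternBrocotMeasure α ν) (h1 : 1/2 ≤ α) (h2 : α ≤ 1) (w : List Bool) :
    (ν (sbSet (sb (w ++ [false])))).toReal
      = (1 - g α w.length) * (ν (sbSet (sb w))).toReal := by
  have hs := mass_split hν h1 h2 w
  have := congrArg ENNReal.toReal hs
  rw [ENNReal.toReal_add (mass_ne_top hν _) (mass_ne_top hν _)] at this
  rw [mr_T hν h1 h2] at this
  linarith

end SBAux

namespace SBAux

variable {α : ℝ} {ν : Measure ℝ}

lemma sbSet_T : sbSet (sb [true]) = Set.Icc (0:ℝ) 1 := by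
  rw [show ([true] : List Bool) = [] ++ [true] by rfl, sbSetT_eq]
  have e1 : eL (sb []) = 0 := by rw [sb_nil]; norm_num [eL]
  have e2 : eL (sb ([] ++ [false])) = 1 := by
    rw [show ([] : List Bool) ++ [false] = [false] by rfl, sb_F]
    norm_num [eL]
  rw [e1, e2]

lemma sbSet_F : sbSet (sb [false]) = Set.Ici (1:ℝ) := by
  rw [sb_F, sbSet_eq_Ici rfl]
  norm_num [eL]

lemma eL_T : eL (sb [true]) = 0 := by rw [sb_T]; norm_num [eL]
lemma eL_F : eL (sb [false]) = 1 := by rw [sb_F]; norm_num [eL]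

lemma mr_base_T (hν : IsSternBrocotMeasure α ν) (h2 : α ≤ 1) :
    (ν (sbSet (sb [true]))).toReal = 1 - α := by
  rw [sbSet_T, hν.2.2.1, ENNReal.toReal_ofReal (by linarith)]

lemma mr_base_F (hν : IsSternBrocotMeasure α ν) (h0 : 0 ≤ α) :
    (ν (sbSet (sb [false]))).toReal = α := by
  rw [sbSet_F, hν.2.2.2.1, ENNReal.toReal_ofReal h0]

lemma bridgeA (hν : IsSternBrocotMeasure α ν) (h1 : 1/2 ≤ α) (h2 : α ≤ 1) :
    ∀ (v w : List Bool), true ∈ (w ++ v) →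
      (ν (Set.Icc (eL (sb w)) (eR (sb (w ++ v))))).toReal
        = (ν (sbSet (sb w))).toReal * Ple α w.length v := by
  intro v
  induction v with
  | nil =>
    intro w h
    rw [List.append_nil] at h ⊢
    rw [← sbSet_eq_Icc (by have := sb_d_pos h; omega)]
    simp [Ple]
  | cons x v ih =>
    intro w h
    have assoc : w ++ x :: v = (w ++ [x]) ++ v := by simp
    cases x
    · -- x = false
      have h' : true ∈ (w ++ [false]) ++ v := by
        rw [← assoc]; exact h
      set M := eL (sb (w ++ [false])) with hM
      set X := eR (sb ((w ++ [false]) ++ v)) with hX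
      have hLM : eL (sb w) ≤ M := eL_append w [false]
      have hMX : M ≤ X := by
        refine le_trans (eL_append (w ++ [false]) v) (eL_le_eR_sb h')
      have hsplit : Set.Icc (eL (sb w)) X = Set.Ico (eL (sb w)) M ∪ Set.Icc M X :=
        (Set.Ico_union_Icc_eq_Icc hLM hMX).symm
      have hnullM : ν {M} = 0 := null_eL hν h1 h2 _
      rw [assoc, ← hX, hsplit, measure_union disj_Ico_Icc measurableSet_Icc,
        ENNReal.toReal_add (mass_ne_top hν _) (mass_ne_top hν _)]
      have e1 : (ν (Set.Ico (eL (sb w)) M)).toReal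
          = g α w.length * (ν (sbSet (sb w))).toReal := by
        rw [← meas_Icc_eq_Ico hnullM, ← sbSetT_eq w, mr_T hν h1 h2]
      have e2 : (ν (Set.Icc M X)).toReal
          = (ν (sbSet (sb (w ++ [false])))).toReal * Ple α (w ++ [false]).length v := by
        rw [hM, hX]
        exact ih (w ++ [false]) h'
      rw [e1, e2, mr_F hν h1 h2]
      have hlen : (w ++ [false]).length = w.length + 1 := by simp
      rw [hlen]
      show _ = (ν (sbSet (sb w))).toReal * Ple α w.length (false :: v)
      simp only [Ple, if_false, Bool.false_eq_true]
      ring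
    · -- x = true
      have h' : true ∈ (w ++ [true]) ++ v := by simp
      rw [assoc, ← eL_append_true w, ih (w ++ [true]) h', mr_T hν h1 h2]
      have hlen : (w ++ [true]).length = w.length + 1 := by simp
      rw [hlen]
      show _ = (ν (sbSet (sb w))).toReal * Ple α w.length (true :: v)
      simp only [Ple, if_true]
      ring

lemma bridgeB (hν : IsSternBrocotMeasure α ν) (h1 : 1/2 ≤ α) (h2 : α ≤ 1) :
    ∀ (v w : List Bool),
      (ν (Set.Ico (eL (sb w)) (eL (sb (w ++ v))))).toReal
        = (ν (sbSet (sb w))).toReal * Plt α w.length v := by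
  intro v
  induction v with
  | nil =>
    intro w
    rw [List.append_nil]
    simp [Plt]
  | cons x v ih =>
    intro w
    have assoc : w ++ x :: v = (w ++ [x]) ++ v := by simp
    cases x
    · set M := eL (sb (w ++ [false])) with hM
      set Y := eL (sb ((w ++ [false]) ++ v)) with hY
      have hLM : eL (sb w) ≤ M := eL_append w [false]
      have hMY : M ≤ Y := eL_append (w ++ [false]) v
      have hsplit : Set.Ico (eL (sb w)) Y = Set.Ico (eL (sb w)) M ∪ Set.Ico M Y :=
        (Set.Ico_union_Ico_eq_Ico hLM hMY).symm
      have hnullM : ν {M} = 0 := null_eL hν h1 h2 _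
      rw [assoc, ← hY, hsplit, measure_union disj_Ico_Ico measurableSet_Ico,
        ENNReal.toReal_add (mass_ne_top hν _) (mass_ne_top hν _)]
      have e1 : (ν (Set.Ico (eL (sb w)) M)).toReal
          = g α w.length * (ν (sbSet (sb w))).toReal := by
        rw [← meas_Icc_eq_Ico hnullM, ← sbSetT_eq w, mr_T hν h1 h2]
      have e2 : (ν (Set.Ico M Y)).toReal
          = (ν (sbSet (sb (w ++ [false])))).toReal * Plt α (w ++ [false]).length v := by
        rw [hM, hY]
        exact ih (w ++ [false])
      rw [e1, e2, mr_F hν h1 h2]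
      have hlen : (w ++ [false]).length = w.length + 1 := by simp
      rw [hlen]
      show _ = (ν (sbSet (sb w))).toReal * Plt α w.length (false :: v)
      simp only [Plt, if_false, Bool.false_eq_true]
      ring
    · rw [assoc, ← eL_append_true w, ih (w ++ [true]), mr_T hν h1 h2]
      have hlen : (w ++ [true]).length = w.length + 1 := by simp
      rw [hlen]
      show _ = (ν (sbSet (sb w))).toReal * Plt α w.length (true :: v)
      simp only [Plt, if_true]
      ring

end SBAux

namespace SBAux

variable {α : ℝ} {ν : Measure ℝ}

/-- canonical sequence of Stern-Brocot words around `t` -/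
def wseq (t : ℝ) : ℕ → List Bool
  | 0 => []
  | n+1 =>
    if t < eL (sb (wseq t n ++ [false])) then wseq t n ++ [true] else wseq t n ++ [false]

lemma d_append_false (w : List Bool) : (sb (w ++ [false])).2.2 = (sb w).2.2 := by
  rcases hs : sb w with ⟨⟨a, b⟩, c, d⟩
  simp [sb_append_false hs, hs]

lemma dT_ne (w : List Bool) : (sb (w ++ [true])).2.2 ≠ 0 := dT_pos w

lemma wseq_inv {t : ℝ} (ht : 1 < t) :
    ∀ n, eL (sb (wseq t n)) ≤ t ∧ ((sb (wseq t n)).2.2 ≠ 0 → t < eR (sb (wseq t n))) := by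
  intro n
  induction n with
  | zero =>
    constructor
    · rw [show wseq t 0 = [] from rfl, sb_nil]
      norm_num [eL]
      linarith
    · intro h
      exact absurd (by rw [show wseq t 0 = [] from rfl, sb_nil] : (sb (wseq t 0)).2.2 = 0) h
  | succ n ih =>
    obtain ⟨ih1, ih2⟩ := ih
    rw [show wseq t (n+1) =
      (if t < eL (sb (wseq t n ++ [false])) then wseq t n ++ [true] else wseq t n ++ [false])
      from rfl]
    by_cases hc : t < eL (sb (wseq t n ++ [false]))
    · rw [if_pos hc]
      refine ⟨by rw [eL_append_true]; exact ih1, fun _ => ?_⟩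
      rw [eR_true_eq_eL_false]
      exact hc
    · rw [if_neg hc]
      push_neg at hc
      refine ⟨hc, fun hd => ?_⟩
      rw [eR_append_false]
      exact ih2 (by rw [d_append_false] at hd; exact hd)

lemma wseq_steps (t : ℝ) (n k : ℕ) : ∃ u, wseq t (n + k) = wseq t n ++ u ∧ u.length = k := by
  induction k with
  | zero => exact ⟨[], by simp⟩
  | succ k ih =>
    obtain ⟨u, hu, hl⟩ := ih
    rw [show n + (k+1) = (n+k) + 1 from rfl]
    by_cases hc : t < eL (sb (wseq t (n+k) ++ [false]))
    · exact ⟨u ++ [true], by rw [show wseq t ((n+k)+1) =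
        (if t < eL (sb (wseq t (n+k) ++ [false])) then wseq t (n+k) ++ [true]
          else wseq t (n+k) ++ [false]) from rfl, if_pos hc, hu, List.append_assoc], by simp [hl]⟩
    · exact ⟨u ++ [false], by rw [show wseq t ((n+k)+1) =
        (if t < eL (sb (wseq t (n+k) ++ [false])) then wseq t (n+k) ++ [true]
          else wseq t (n+k) ++ [false]) from rfl, if_neg hc, hu, List.append_assoc], by simp [hl]⟩

lemma wseq_all_false (t : ℝ) :
    ∀ n, true ∈ wseq t n ∨ wseq t n = List.replicate n false := by
  intro n
  induction n with
  | zero => exact Or.inr rfl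
  | succ n ih =>
    have hstep : wseq t (n+1) = wseq t n ++ [true] ∨ wseq t (n+1) = wseq t n ++ [false] := by
      rw [show wseq t (n+1) =
        (if t < eL (sb (wseq t n ++ [false])) then wseq t n ++ [true] else wseq t n ++ [false])
        from rfl]
      by_cases hc : t < eL (sb (wseq t n ++ [false]))
      · exact Or.inl (if_pos hc)
      · exact Or.inr (if_neg hc)
    rcases ih with h | h
    · left
      rcases hstep with h' | h' <;> rw [h'] <;> simp [h]
    · rcases hstep with h' | h'
      · left; rw [h', h]; simp
      · right; rw [h', h, ← List.replicate_succ']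

lemma wseq_true_mem {t : ℝ} {n : ℕ} (ht : 1 < t) (hn : t < n) : true ∈ wseq t n := by
  rcases wseq_all_false t n with h | h
  · exact h
  · exfalso
    have h1 := (wseq_inv ht n).1
    rw [h, sb_repF] at h1
    have : eL ((n,1),((1:ℕ),(0:ℕ))) = (n:ℝ) := by norm_num [eL]
    rw [this] at h1
    linarith

lemma wseq_head {t : ℝ} (ht : 1 < t) : ∀ n, 1 ≤ n → ∃ u, wseq t n = false :: u := by
  intro n
  induction n with
  | zero => intro h; omega
  | succ n ih =>
    intro _
    rcases Nat.eq_zero_or_pos n with rfl | hn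
    · refine ⟨[], ?_⟩
      rw [show wseq t 1 =
        (if t < eL (sb (wseq t 0 ++ [false])) then wseq t 0 ++ [true] else wseq t 0 ++ [false])
        from rfl]
      have : eL (sb (wseq t 0 ++ [false])) = 1 := by
        rw [show wseq t 0 ++ [false] = [false] from rfl, eL_F]
      rw [this, if_neg (by linarith)]
      rfl
    · obtain ⟨u, hu⟩ := ih hn
      rw [show wseq t (n+1) =
        (if t < eL (sb (wseq t n ++ [false])) then wseq t n ++ [true] else wseq t n ++ [false])
        from rfl]
      by_cases hc : t < eL (sb (wseq t n ++ [false]))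
      · exact ⟨u ++ [true], by rw [if_pos hc, hu]; rfl⟩
      · exact ⟨u ++ [false], by rw [if_neg hc, hu]; rfl⟩

/-- the right endpoints squeeze down to `t` -/
lemma wseq_eR_close {t : ℝ} (ht : 1 < t) {N : ℕ} (hN : t < N) (k : ℕ) :
    eR (sb (wseq t (N + k))) ≤ t + 1/(k+1) := by
  have hmem : true ∈ wseq t (N + k) := by
    obtain ⟨u, hu, _⟩ := wseq_steps t N k
    rw [hu]
    exact List.mem_append.2 (Or.inl (wseq_true_mem ht hN))
  have hW := wseq_inv ht (N + k)
  have hd : (sb (wseq t (N + k))).2.2 ≠ 0 := by have := sb_d_pos hmem; omega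
  -- denominators grow
  have hbd : k + 1 ≤ (sb (wseq t (N + k))).1.2 * (sb (wseq t (N + k))).2.2 := by
    obtain ⟨u, hu, hl⟩ := wseq_steps t N k
    have hdN : 1 ≤ (sb (wseq t N)).2.2 := sb_d_pos (wseq_true_mem ht hN)
    have hbN : 1 ≤ (sb (wseq t N)).1.2 := (Inv_sb _).2.1
    have := bd_grow (Inv_sb (wseq t N)) hdN u
    rw [hu, sb_append]
    calc k + 1 ≤ (sb (wseq t N)).1.2 * (sb (wseq t N)).2.2 + u.length := by
          have : 1 ≤ (sb (wseq t N)).1.2 * (sb (wseq t N)).2.2 := Nat.one_le_iff_ne_zero.2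
            (by positivity)
          omega
      _ ≤ _ := this
  -- width bound
  rcases hs : sb (wseq t (N + k)) with ⟨⟨a, b⟩, c, d⟩
  have hInv : Inv ((a,b),(c,d)) := by rw [← hs]; exact Inv_sb _
  have hd' : 1 ≤ d := by rw [hs] at hd; simp at hd; omega
  have hw := width hInv hd'
  have hbd' : (k:ℝ) + 1 ≤ (b:ℝ) * d := by
    rw [hs] at hbd
    simp only at hbd
    exact_mod_cast hbd
  have hwle : 1 / ((b:ℝ)*d) ≤ 1/(k+1) := by
    apply one_div_le_one_div_of_le (by positivity) hbd'
  have heL : eL ((a,b),(c,d)) ≤ t := by rw [← hs]; exact hW.1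
  have : eR ((a,b),(c,d)) = eL ((a,b),(c,d)) + 1/((b:ℝ)*d) := by linarith [hw]
  rw [hs] at *
  linarith

/-- the key measure domination -/
lemma dom (hν : IsSternBrocotMeasure α ν) (h1 : 1/2 ≤ α) (h2 : α ≤ 1)
    {t : ℝ} (ht : 1 < t) : ν (Set.Ico 0 (1/t)) ≤ ν (Set.Ioi t) := by
  haveI := hν.1
  set N : ℕ := ⌈t⌉₊ + 1 with hN
  have htN : t < N := by
    have := Nat.le_ceil t
    have : t ≤ (⌈t⌉₊ : ℝ) := this
    push_cast [hN]
    linarith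
  -- the approximating sets
  set Z : ℕ → ℝ := fun k => eR (sb (wseq t (N + k))) with hZ
  have hmem : ∀ k, true ∈ wseq t (N + k) := by
    intro k
    obtain ⟨u, hu, _⟩ := wseq_steps t N k
    rw [hu]; exact List.mem_append.2 (Or.inl (wseq_true_mem ht htN))
  have hd : ∀ k, (sb (wseq t (N + k))).2.2 ≠ 0 := fun k => by have := sb_d_pos (hmem k); omega
  have hZt : ∀ k, t < Z k := fun k => (wseq_inv ht (N+k)).2 (hd k)
  have hZpos : ∀ k, 0 < Z k := fun k => lt_trans (by linarith) (hZt k)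
  have hZanti : ∀ k, Z (k+1) ≤ Z k := by
    intro k
    have hstep : wseq t (N + (k+1)) = wseq t (N+k) ++ [true]
        ∨ wseq t (N + (k+1)) = wseq t (N+k) ++ [false] := by
      rw [show N + (k+1) = (N+k) + 1 from rfl]
      rw [show wseq t ((N+k)+1) =
        (if t < eL (sb (wseq t (N+k) ++ [false])) then wseq t (N+k) ++ [true]
          else wseq t (N+k) ++ [false]) from rfl]
      by_cases hc : t < eL (sb (wseq t (N+k) ++ [false]))
      · exact Or.inl (if_pos hc)
      · exact Or.inr (if_neg hc)
    have key : ∀ x, eR (sb (wseq t (N+k) ++ [x])) ≤ eR (sb (wseq t (N+k))) := by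
      intro x
      rw [sb_append]
      exact eR_sbGo_le (Inv_sb _) (by have := hd k; omega) [x]
    rcases hstep with h | h <;> rw [hZ] <;> simp only <;> rw [h] <;> exact key _
  -- each step inequality
  have hstep : ∀ k, ν (Set.Ico 0 (1/(Z k))) ≤ ν (Set.Ioi t) := by
    intro k
    obtain ⟨u, huW⟩ := wseq_head ht (N + k) (by omega)
    have humem : true ∈ u := by
      have := hmem k
      rw [huW] at this
      simpa using this
    -- left piece: Ico 0 (1/Z k) has mass (1-α) * Plt α 1 (u.map not)
    have hflip : sb ((wseq t (N+k)).map not) = swapI (sb (wseq t (N+k))) := sb_flip _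
    have hZinv : 1/(Z k) = eL (sb ((wseq t (N+k)).map not)) := by
      rw [hflip]
      rcases hs : sb (wseq t (N+k)) with ⟨⟨a, b⟩, c, d⟩
      rw [hZ]
      simp only
      rw [hs]
      show 1 / eR ((a,b),(c,d)) = eL ((d,c),(b,a))
      unfold eL eR
      simp only
      rw [one_div_div]
    have hmapnot : (wseq t (N+k)).map not = [true] ++ u.map not := by
      rw [huW]; rfl
    have hL : (ν (Set.Ico 0 (1/(Z k)))).toReal = (1-α) * Plt α 1 (u.map not) := by
      rw [hZinv, hmapnot, show (0:ℝ) = eL (sb [true]) from eL_T.symm,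
        bridgeB hν h1 h2 (u.map not) [true], mr_base_T hν h2]
      rfl
    -- right piece
    have hzW : Z k = eR (sb ([false] ++ u)) := by rw [hZ]; simp only; rw [huW]; rfl
    have hIcc : (ν (Set.Icc 1 (Z k))).toReal = α * Ple α 1 u := by
      rw [hzW, show (1:ℝ) = eL (sb [false]) from eL_F.symm,
        bridgeA hν h1 h2 u [false] (by simp [humem]), mr_base_F hν (by linarith)]
      rfl
    have hnullZ : ν {Z k} = 0 := by
      rw [hzW]
      exact null_eR hν h1 h2 _ (by simp [humem])
    have hnull1 : ν ({1} : Set ℝ) = 0 := by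
      have := null_eL hν h1 h2 [false]
      rw [eL_F] at this
      exact this
    -- assemble : ν (Ici (Z k)) = α (1 - Ple α 1 u)
    have hIco01 : (ν (Set.Ico (0:ℝ) 1)).toReal = 1 - α := by
      rw [← meas_Icc_eq_Ico hnull1, hν.2.2.1, ENNReal.toReal_ofReal (by linarith)]
    have hIco1Z : (ν (Set.Ico (1:ℝ) (Z k))).toReal = α * Ple α 1 u := by
      rw [← meas_Icc_eq_Ico hnullZ, hIcc]
    have hZ1 : (1:ℝ) ≤ Z k := by have := hZt k; linarith
    have hsplit0 : ν (Set.Ico (0:ℝ) (Z k)) = ν (Set.Ico (0:ℝ) 1) + ν (Set.Ico (1:ℝ) (Z k)) := by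
      rw [← measure_union disj_Ico_Ico measurableSet_Ico,
        Set.Ico_union_Ico_eq_Ico (by norm_num) hZ1]
    have hIio : ν (Set.Iio (Z k)) = ν (Set.Ico 0 (Z k)) := by
      have hset : Set.Iio (Z k) = Set.Iio 0 ∪ Set.Ico 0 (Z k) := by
        ext x
        simp only [Set.mem_Iio, Set.mem_union, Set.mem_Ico]
        constructor
        · intro hx
          rcases lt_or_ge x 0 with h | h
          · exact Or.inl h
          · exact Or.inr ⟨h, hx⟩
        · rintro (h | ⟨_, h⟩)
          · exact lt_of_lt_of_le h (by positivity)
          · exact h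
      have hdisj : Disjoint (Set.Iio (0:ℝ)) (Set.Ico (0:ℝ) (Z k)) := by
        rw [Set.disjoint_left]
        intro x hx hx'
        exact absurd hx'.1 (not_le.2 hx)
      rw [hset, measure_union hdisj measurableSet_Ico, hν.2.1, zero_add]
    have htot : (ν (Set.Iio (Z k))).toReal + (ν (Set.Ici (Z k))).toReal = 1 := by
      have hcompl := measure_add_measure_compl (measurableSet_Iio (a := Z k)) (μ := ν)
      rw [Set.compl_Iio, measure_univ] at hcompl
      have := congrArg ENNReal.toReal hcompl
      rw [ENNReal.toReal_add (mass_ne_top hν _) (mass_ne_top hν _)] at this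
      simpa using this
    have hIioR : (ν (Set.Iio (Z k))).toReal = (1 - α) + α * Ple α 1 u := by
      rw [hIio, hsplit0, ENNReal.toReal_add (mass_ne_top hν _) (mass_ne_top hν _),
        hIco01, hIco1Z]
    have hIciR : (ν (Set.Ici (Z k))).toReal = α - α * Ple α 1 u := by linarith
    -- the combinatorial inequality B'
    have hg1 : g α 1 = α := by simp [g]
    have hcomb := ((comb h1 h2 u 1).2 (by rw [hg1]; exact h1)).2
    rw [hg1] at hcomb
    -- conclude the step
    have hle : (ν (Set.Ico 0 (1/(Z k)))).toReal ≤ (ν (Set.Ici (Z k))).toReal := by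
      rw [hL, hIciR]
      linarith
    have hle' : ν (Set.Ico 0 (1/(Z k))) ≤ ν (Set.Ici (Z k)) :=
      (ENNReal.toReal_le_toReal (mass_ne_top hν _) (mass_ne_top hν _)).1 hle
    refine le_trans hle' (measure_mono fun x hx => ?_)
    exact lt_of_lt_of_le (hZt k) hx
  -- now take the union
  have hmono : Monotone (fun k => Set.Ico (0:ℝ) (1/(Z k))) := by
    apply monotone_nat_of_le_succ
    intro k
    apply Set.Ico_subset_Ico_right
    exact one_div_le_one_div_of_le (hZpos (k+1)) (hZanti k)
  have huni : Set.Ico (0:ℝ) (1/t) = ⋃ k, Set.Ico (0:ℝ) (1/(Z k)) := by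
    ext x
    simp only [Set.mem_Ico, Set.mem_iUnion]
    constructor
    · rintro ⟨hx0, hxt⟩
      rcases eq_or_lt_of_le hx0 with rfl | hxpos
      · exact ⟨0, le_refl _, one_div_pos.2 (hZpos 0)⟩
      · have hxinv : t < 1/x := by
          rw [lt_div_iff₀ hxpos]
          calc t * x < t * (1/t) := by
                apply mul_lt_mul_of_pos_left hxt (by linarith)
            _ = 1 := by field_simp
        have hpos : 0 < 1/x - t := by linarith
        obtain ⟨k, hk⟩ := exists_nat_gt (1/(1/x - t))
        have hk1 : 1/((k:ℝ)+1) < 1/x - t := by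
          rw [div_lt_iff₀ (by positivity)]
          rw [div_lt_iff₀ hpos] at hk
          nlinarith
        have hZk : Z k < 1/x := by
          have := wseq_eR_close ht htN k
          rw [hZ]
          simp only
          push_cast at this ⊢
          linarith
        refine ⟨k, hx0, ?_⟩
        calc x = 1/(1/x) := by field_simp
          _ < 1/(Z k) := by
              apply one_div_lt_one_div_of_lt (hZpos k) hZk
    · rintro ⟨k, hx0, hxk⟩
      refine ⟨hx0, lt_trans hxk ?_⟩
      exact one_div_lt_one_div_of_lt (by linarith) (hZt k)
  rw [huni, Directed.measure_iUnion hmono.directed_le]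
  exact iSup_le hstep

end SBAux

namespace SBAux

variable {α : ℝ} {ν : Measure ℝ}

lemma mr_le_one (hν : IsSternBrocotMeasure α ν) (s : Set ℝ) : (ν s).toReal ≤ 1 := by
  have := mass_le_one hν s
  calc (ν s).toReal ≤ (1 : ENNReal).toReal := ENNReal.toReal_mono (by simp) this
    _ = 1 := by simp

lemma mrFF (hν : IsSternBrocotMeasure α ν) (h1 : 1/2 ≤ α) (h2 : α ≤ 1) (u : List Bool) :
    (ν (sbSet (sb (u ++ [false, false])))).toReal
      = (α * (1-α)) * (ν (sbSet (sb u))).toReal := by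
  have e : u ++ [false, false] = (u ++ [false]) ++ [false] := by simp
  rw [e, mr_F hν h1 h2, mr_F hν h1 h2]
  have hlen : (u ++ [false]).length = u.length + 1 := by simp
  rw [hlen, g_succ]
  unfold g
  split <;> ring

lemma mr_repF (hν : IsSternBrocotMeasure α ν) (h1 : 1/2 ≤ α) (h2 : α ≤ 1) (k : ℕ) :
    (ν (sbSet (sb (List.replicate (2*k) false)))).toReal ≤ (1/4:ℝ)^k := by
  induction k with
  | zero => simpa using mr_le_one hν _
  | succ k ih =>
    have e1 : List.replicate (2*(k+1)) false
        = List.replicate (2*k) false ++ [false, false] := by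
      rw [show 2*(k+1) = 2*k + 2 by ring, List.replicate_add]
      rfl
    rw [e1, mrFF hν h1 h2]
    have hnn : (0:ℝ) ≤ (ν (sbSet (sb (List.replicate (2*k) false)))).toReal :=
      ENNReal.toReal_nonneg
    have hq : α * (1-α) ≤ 1/4 := by nlinarith
    have hq0 : 0 ≤ α * (1-α) := by nlinarith
    calc α * (1-α) * (ν (sbSet (sb (List.replicate (2*k) false)))).toReal
        ≤ (1/4) * (1/4:ℝ)^k := by
          apply mul_le_mul hq ih hnn (by norm_num)
      _ = (1/4:ℝ)^(k+1) := by ring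

lemma mr_repT (hν : IsSternBrocotMeasure α ν) (h1 : 1/2 ≤ α) (h2 : α ≤ 1) (k : ℕ) :
    (ν (sbSet (sb (List.replicate (2*k) true)))).toReal ≤ (1/4:ℝ)^k := by
  induction k with
  | zero => simpa using mr_le_one hν _
  | succ k ih =>
    have e1 : List.replicate (2*(k+1)) true
        = List.replicate (2*k) true ++ [true, true] := by
      rw [show 2*(k+1) = 2*k + 2 by ring, List.replicate_add]
      rfl
    have hTT : (ν (sbSet (sb (List.replicate (2*k) true ++ [true, true])))).toReal
        = (α * (1-α)) * (ν (sbSet (sb (List.replicate (2*k) true)))).toReal := by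
      have e : List.replicate (2*k) true ++ [true, true]
          = (List.replicate (2*k) true ++ [true]) ++ [true] := by simp
      rw [e, mr_T hν h1 h2, mr_T hν h1 h2]
      have hlen : (List.replicate (2*k) true ++ [true]).length
          = (List.replicate (2*k) true).length + 1 := by simp
      rw [hlen, g_succ]
      unfold g
      split <;> ring
    rw [e1, hTT]
    have hnn : (0:ℝ) ≤ (ν (sbSet (sb (List.replicate (2*k) true)))).toReal :=
      ENNReal.toReal_nonneg
    calc α * (1-α) * (ν (sbSet (sb (List.replicate (2*k) true)))).toReal
        ≤ (1/4) * (1/4:ℝ)^k := by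
          apply mul_le_mul (by nlinarith) ih hnn (by norm_num)
      _ = (1/4:ℝ)^(k+1) := by ring

lemma tail_high (hν : IsSternBrocotMeasure α ν) (h1 : 1/2 ≤ α) (h2 : α ≤ 1) (k : ℕ) :
    (ν (Set.Ici ((2*k : ℕ) : ℝ))).toReal ≤ (1/4:ℝ)^k := by
  have hset : sbSet (sb (List.replicate (2*k) false)) = Set.Ici ((2*k : ℕ) : ℝ) := by
    rw [sb_repF, sbSet_eq_Ici rfl]
    norm_num [eL]
  rw [← hset]
  exact mr_repF hν h1 h2 k

lemma tail_low (hν : IsSternBrocotMeasure α ν) (h1 : 1/2 ≤ α) (h2 : α ≤ 1) {k : ℕ}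
    (hk : 1 ≤ k) : (ν (Set.Icc (0:ℝ) (1/((2*k : ℕ) : ℝ)))).toReal ≤ (1/4:ℝ)^k := by
  have hset : sbSet (sb (List.replicate (2*k) true)) = Set.Icc (0:ℝ) (1/((2*k:ℕ):ℝ)) := by
    rw [sb_repT, sbSet_eq_Icc (by show 2*k ≠ 0; omega)]
    norm_num [eL, eR]
  rw [← hset]
  exact mr_repT hν h1 h2 k

lemma quarter_pow {k : ℕ} {s : ℝ} (h : Real.exp s < 2*k + 2) :
    (1/4:ℝ)^k ≤ 4 * Real.exp (-s) := by
  have hk1 : (k:ℝ) + 1 ≤ (2:ℝ)^k := by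
    exact_mod_cast Nat.succ_le_of_lt (Nat.lt_two_pow_self (n := k))
  have h24 : (2:ℝ)^k ≤ (4:ℝ)^k := pow_le_pow_left₀ (by norm_num) (by norm_num) k
  have hexp4 : Real.exp s ≤ 4 * (4:ℝ)^k := by nlinarith
  rw [Real.exp_neg]
  rw [show (4:ℝ) * (Real.exp s)⁻¹ = 4 / Real.exp s by ring, le_div_iff₀ (Real.exp_pos s)]
  calc (1/4:ℝ)^k * Real.exp s ≤ (1/4:ℝ)^k * (4 * 4^k) := by
        apply mul_le_mul_of_nonneg_left hexp4 (by positivity)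
    _ = 4 * ((1/4:ℝ) * 4)^k := by rw [mul_pow]; ring
    _ = 4 := by norm_num

lemma tail_bound_high (hν : IsSternBrocotMeasure α ν) (h1 : 1/2 ≤ α) (h2 : α ≤ 1)
    {s : ℝ} (hs : 0 < s) :
    ν (Set.Ioi (Real.exp s)) ≤ ENNReal.ofReal (4 * Real.exp (-s)) := by
  set k := ⌊Real.exp s / 2⌋₊ with hk
  have h2k : 2*(k:ℝ) ≤ Real.exp s := by
    have := Nat.floor_le (by positivity : (0:ℝ) ≤ Real.exp s / 2)
    rw [← hk] at this
    linarith
  have h2k2 : Real.exp s < 2*(k:ℝ) + 2 := by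
    have := Nat.lt_floor_add_one (Real.exp s / 2)
    rw [← hk] at this
    linarith
  have hsub : Set.Ioi (Real.exp s) ⊆ Set.Ici ((2*k:ℕ):ℝ) := by
    intro x hx
    simp only [Set.mem_Ioi] at hx
    have : ((2*k:ℕ):ℝ) = 2*(k:ℝ) := by push_cast; ring
    rw [Set.mem_Ici, this]
    linarith
  calc ν (Set.Ioi (Real.exp s)) ≤ ν (Set.Ici ((2*k:ℕ):ℝ)) := measure_mono hsub
    _ ≤ ENNReal.ofReal ((1/4:ℝ)^k) :=
        (ENNReal.le_ofReal_iff_toReal_le (mass_ne_top hν _) (by positivity)).2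
          (tail_high hν h1 h2 k)
    _ ≤ ENNReal.ofReal (4 * Real.exp (-s)) :=
        ENNReal.ofReal_le_ofReal (quarter_pow h2k2)

lemma tail_bound_low (hν : IsSternBrocotMeasure α ν) (h1 : 1/2 ≤ α) (h2 : α ≤ 1)
    {s : ℝ} (hs : 0 < s) :
    ν (Set.Ioo 0 (Real.exp (-s))) ≤ ENNReal.ofReal (4 * Real.exp (-s)) := by
  set k := ⌊Real.exp s / 2⌋₊ with hk
  have h2k2 : Real.exp s < 2*(k:ℝ) + 2 := by
    have := Nat.lt_floor_add_one (Real.exp s / 2)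
    rw [← hk] at this
    linarith
  rcases Nat.eq_zero_or_pos k with hk0 | hk1
  · -- exp s < 2, so 4 exp (-s) > 2 ≥ 1
    have : Real.exp s < 2 := by rw [hk0] at h2k2; push_cast at h2k2; linarith
    have hbig : (1:ℝ) ≤ 4 * Real.exp (-s) := by
      rw [Real.exp_neg]
      rw [show (4:ℝ) * (Real.exp s)⁻¹ = 4 / Real.exp s by ring,
        le_div_iff₀ (Real.exp_pos s)]
      linarith
    calc ν (Set.Ioo 0 (Real.exp (-s))) ≤ 1 := mass_le_one hν _
      _ = ENNReal.ofReal 1 := by simp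
      _ ≤ ENNReal.ofReal (4 * Real.exp (-s)) := ENNReal.ofReal_le_ofReal hbig
  · have h2k : 2*(k:ℝ) ≤ Real.exp s := by
      have := Nat.floor_le (by positivity : (0:ℝ) ≤ Real.exp s / 2)
      rw [← hk] at this
      linarith
    have h2kpos : (0:ℝ) < 2*(k:ℝ) := by
      have : (1:ℝ) ≤ (k:ℝ) := by exact_mod_cast hk1
      linarith
    have hsub : Set.Ioo 0 (Real.exp (-s)) ⊆ Set.Icc (0:ℝ) (1/((2*k:ℕ):ℝ)) := by
      intro x hx
      obtain ⟨hx0, hx1⟩ := hx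
      constructor
      · linarith
      · have hcast : ((2*k:ℕ):ℝ) = 2*(k:ℝ) := by push_cast; ring
        rw [hcast]
        have : Real.exp (-s) ≤ 1/(2*(k:ℝ)) := by
          rw [Real.exp_neg, inv_eq_one_div]
          exact one_div_le_one_div_of_le h2kpos h2k
        linarith
    calc ν (Set.Ioo 0 (Real.exp (-s))) ≤ ν (Set.Icc (0:ℝ) (1/((2*k:ℕ):ℝ))) :=
          measure_mono hsub
      _ ≤ ENNReal.ofReal ((1/4:ℝ)^k) :=
          (ENNReal.le_ofReal_iff_toReal_le (mass_ne_top hν _) (by positivity)).2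
            (tail_low hν h1 h2 hk1)
      _ ≤ ENNReal.ofReal (4 * Real.exp (-s)) :=
          ENNReal.ofReal_le_ofReal (quarter_pow h2k2)

end SBAux

namespace SBAux

variable {α : ℝ} {ν : Measure ℝ}

lemma one_lt_exp' {s : ℝ} (hs : 0 < s) : (1:ℝ) < Real.exp s := by
  rw [show (1:ℝ) = Real.exp 0 by simp]
  exact Real.exp_lt_exp.2 hs

lemma integral_log_pos (hν : IsSternBrocotMeasure α ν) (hlt : 1/2 < α) (h2 : α ≤ 1) :
    0 < ∫ x, Real.log x ∂ν := by
  haveI := hν.1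
  have h1 : 1/2 ≤ α := le_of_lt hlt
  set fp : ℝ → ℝ := fun x => max (Real.log x) 0 with hfp
  set fm : ℝ → ℝ := fun x => max (-Real.log x) 0 with hfm
  have hfp_m : Measurable fp := Real.measurable_log.max measurable_const
  have hfm_m : Measurable fm := Real.measurable_log.neg.max measurable_const
  have hfp_nn : 0 ≤ᵐ[ν] fp := Filter.Eventually.of_forall fun x => le_max_right _ _
  have hfm_nn : 0 ≤ᵐ[ν] fm := Filter.Eventually.of_forall fun x => le_max_right _ _
  have hlcp : ∫⁻ x, ENNReal.ofReal (fp x) ∂ν = ∫⁻ s in Set.Ioi 0, ν {x | s < fp x} :=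
    lintegral_eq_lintegral_meas_lt ν hfp_nn hfp_m.aemeasurable
  have hlcm : ∫⁻ x, ENNReal.ofReal (fm x) ∂ν = ∫⁻ s in Set.Ioi 0, ν {x | s < fm x} :=
    lintegral_eq_lintegral_meas_lt ν hfm_nn hfm_m.aemeasurable
  -- identification of the superlevel sets
  have hsetp : ∀ s : ℝ, 0 < s → ν {x | s < fp x} = ν (Set.Ioi (Real.exp s)) := by
    intro s hs
    apply le_antisymm
    · have hstep : ν {x | s < fp x} ≤ ν (Set.Ioi (Real.exp s) ∪ Set.Iio 0) := by
        apply measure_mono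
        intro x hx
        simp only [Set.mem_setOf_eq, hfp, lt_max_iff] at hx
        have hlog : s < Real.log x := by
          rcases hx with h' | h'
          · exact h'
          · linarith
        rcases lt_or_ge x 0 with h | h
        · exact Or.inr h
        · left
          rcases eq_or_lt_of_le h with rfl | hpos
          · rw [Real.log_zero] at hlog; linarith
          · exact Set.mem_Ioi.2 ((Real.lt_log_iff_exp_lt hpos).1 hlog)
      refine le_trans hstep (le_trans (measure_union_le _ _) ?_)
      rw [hν.2.1, add_zero]
    · apply measure_mono
      intro x hx
      have hxpos : 0 < x := lt_trans (Real.exp_pos s) hx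
      have : s < Real.log x := (Real.lt_log_iff_exp_lt hxpos).2 hx
      simp only [Set.mem_setOf_eq, hfp, lt_max_iff]
      exact Or.inl this
  have hsetm : ∀ s : ℝ, 0 < s → ν {x | s < fm x} = ν (Set.Ioo 0 (Real.exp (-s))) := by
    intro s hs
    apply le_antisymm
    · have hstep : ν {x | s < fm x} ≤ ν (Set.Ioo 0 (Real.exp (-s)) ∪ Set.Iio 0) := by
        apply measure_mono
        intro x hx
        simp only [Set.mem_setOf_eq, hfm, lt_max_iff] at hx
        have hlog : Real.log x < -s := by
          rcases hx with h' | h'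
          · linarith
          · linarith
        rcases lt_or_ge x 0 with h | h
        · exact Or.inr h
        · left
          rcases eq_or_lt_of_le h with rfl | hpos
          · rw [Real.log_zero] at hlog; linarith
          · exact ⟨hpos, (Real.log_lt_iff_lt_exp hpos).1 hlog⟩
      refine le_trans hstep (le_trans (measure_union_le _ _) ?_)
      rw [hν.2.1, add_zero]
    · apply measure_mono
      intro x hx
      have : Real.log x < -s := (Real.log_lt_iff_lt_exp hx.1).2 hx.2
      simp only [Set.mem_setOf_eq, hfm, lt_max_iff]
      left
      linarith
  set Ip := ∫⁻ s in Set.Ioi (0:ℝ), ν {x | s < fp x} with hIp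
  set Im := ∫⁻ s in Set.Ioi (0:ℝ), ν {x | s < fm x} with hIm
  -- finiteness
  have hbound : ∫⁻ s in Set.Ioi (0:ℝ), ENNReal.ofReal (4 * Real.exp (-s)) < ⊤ := by
    have hint : IntegrableOn (fun s : ℝ => 4 * Real.exp (-s)) (Set.Ioi 0) := by
      have h := exp_neg_integrableOn_Ioi 0 (by norm_num : (0:ℝ) < 1)
      have heq : (fun x : ℝ => Real.exp (-1 * x)) = fun x : ℝ => Real.exp (-x) := by
        funext x; norm_num
      rw [heq] at h
      exact h.const_mul 4
    have hnn : 0 ≤ᵐ[volume.restrict (Set.Ioi (0:ℝ))] (fun s => 4 * Real.exp (-s)) :=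
      Filter.Eventually.of_forall (fun s => by positivity)
    exact (hasFiniteIntegral_iff_ofReal hnn).1 hint.2
  have hImtop : Im < ⊤ := by
    rw [hIm]
    refine lt_of_le_of_lt (setLIntegral_mono' measurableSet_Ioi fun s hs => ?_) hbound
    rw [hsetm s hs]
    exact tail_bound_low hν h1 h2 hs
  have hIptop : Ip < ⊤ := by
    rw [hIp]
    refine lt_of_le_of_lt (setLIntegral_mono' measurableSet_Ioi fun s hs => ?_) hbound
    rw [hsetp s hs]
    exact tail_bound_high hν h1 h2 hs
  -- choice of s₀
  have hIoi1 : ν (Set.Ioi (1:ℝ)) = ENNReal.ofReal α := by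
    have hnull1 : ν ({1} : Set ℝ) = 0 := by
      have := null_eL hν h1 h2 [false]
      rw [eL_F] at this
      exact this
    apply le_antisymm
    · rw [← hν.2.2.2.1]
      exact measure_mono Set.Ioi_subset_Ici_self
    · rw [← hν.2.2.2.1]
      calc ν (Set.Ici (1:ℝ)) ≤ ν (Set.Ioi 1 ∪ {1}) := by
            apply measure_mono
            intro x hx
            rcases eq_or_lt_of_le (Set.mem_Ici.1 hx) with h | h
            · exact Or.inr (by simp [h.symm])
            · exact Or.inl h
        _ ≤ ν (Set.Ioi 1) + ν {1} := measure_union_le _ _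
        _ = ν (Set.Ioi 1) := by rw [hnull1, add_zero]
  have hexists : ∃ n : ℕ, ENNReal.ofReal (1-α) < ν (Set.Ioi (Real.exp (1/(n+1)))) := by
    have hmono : Monotone (fun n : ℕ => Set.Ioi (Real.exp (1/((n:ℝ)+1)))) := by
      apply monotone_nat_of_le_succ
      intro n
      apply Set.Ioi_subset_Ioi
      apply Real.exp_le_exp.2
      apply one_div_le_one_div_of_le (by positivity)
      push_cast
      linarith
    have huni : Set.Ioi (1:ℝ) = ⋃ n : ℕ, Set.Ioi (Real.exp (1/((n:ℝ)+1))) := by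
      ext x
      simp only [Set.mem_Ioi, Set.mem_iUnion]
      constructor
      · intro hx
        have hlx : 0 < Real.log x := Real.log_pos hx
        obtain ⟨n, hn⟩ := exists_nat_one_div_lt hlx
        refine ⟨n, ?_⟩
        calc Real.exp (1/((n:ℝ)+1)) < Real.exp (Real.log x) := Real.exp_lt_exp.2 hn
          _ = x := Real.exp_log (by linarith)
      · rintro ⟨n, hn⟩
        have : (1:ℝ) < Real.exp (1/((n:ℝ)+1)) := one_lt_exp' (by positivity)
        linarith
    have hsup : (⨆ n : ℕ, ν (Set.Ioi (Real.exp (1/((n:ℝ)+1))))) = ENNReal.ofReal α := by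
      rw [← hmono.directed_le.measure_iUnion, ← huni, hIoi1]
    have hlt' : ENNReal.ofReal (1-α) < ⨆ n : ℕ, ν (Set.Ioi (Real.exp (1/((n:ℝ)+1)))) := by
      rw [hsup]
      exact (ENNReal.ofReal_lt_ofReal_iff (by linarith)).2 (by linarith)
    exact lt_iSup_iff.1 hlt'
  obtain ⟨n₀, hn₀⟩ := hexists
  set s₀ : ℝ := 1/((n₀:ℝ)+1) with hs₀def
  have hs₀pos : 0 < s₀ := by positivity
  set A₀ := ν (Set.Ioi (Real.exp s₀)) with hA₀
  have hA₀gt : ENNReal.ofReal (1-α) < A₀ := hn₀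
  set δ := A₀ - ENNReal.ofReal (1-α) with hδ
  have hδpos : δ ≠ 0 := by
    rw [hδ]
    exact (tsub_pos_of_lt hA₀gt).ne'
  -- pointwise comparisons
  have hball : ∀ s : ℝ, 0 < s → ν {x | s < fm x} ≤ ν {x | s < fp x} := by
    intro s hs
    rw [hsetm s hs, hsetp s hs]
    have hsub : Set.Ioo 0 (Real.exp (-s)) ⊆ Set.Ico 0 (1/(Real.exp s)) := by
      intro x hx
      refine ⟨le_of_lt hx.1, ?_⟩
      have he : (1:ℝ)/Real.exp s = Real.exp (-s) := by
        rw [Real.exp_neg, inv_eq_one_div]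
      rw [he]
      exact hx.2
    calc ν (Set.Ioo 0 (Real.exp (-s))) ≤ ν (Set.Ico 0 (1/Real.exp s)) := measure_mono hsub
      _ ≤ ν (Set.Ioi (Real.exp s)) := dom hν h1 h2 (one_lt_exp' hs)
  have hball2 : ∀ s ∈ Set.Ioc (0:ℝ) s₀, ν {x | s < fm x} + δ ≤ ν {x | s < fp x} := by
    intro s hs
    obtain ⟨hs0, hss₀⟩ := hs
    have hm_le : ν {x | s < fm x} ≤ ENNReal.ofReal (1-α) := by
      rw [hsetm s hs0, ← hν.2.2.1]
      apply measure_mono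
      intro x hx
      obtain ⟨h1x, h2x⟩ := hx
      have hle1 : Real.exp (-s) ≤ 1 := by
        rw [show (1:ℝ) = Real.exp 0 by simp]
        exact Real.exp_le_exp.2 (by linarith)
      exact ⟨le_of_lt h1x, by linarith⟩
    calc ν {x | s < fm x} + δ ≤ ENNReal.ofReal (1-α) + δ := add_le_add_left hm_le δ
      _ = A₀ := by rw [hδ]; exact add_tsub_cancel_of_le (le_of_lt hA₀gt)
      _ ≤ ν (Set.Ioi (Real.exp s)) :=
          measure_mono (Set.Ioi_subset_Ioi (Real.exp_le_exp.2 hss₀))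
      _ = ν {x | s < fp x} := (hsetp s hs0).symm
  -- integral comparison
  have hsplit : Set.Ioi (0:ℝ) = Set.Ioc 0 s₀ ∪ Set.Ioi s₀ :=
    (Set.Ioc_union_Ioi_eq_Ioi (le_of_lt hs₀pos)).symm
  have hdisj : Disjoint (Set.Ioc (0:ℝ) s₀) (Set.Ioi s₀) := by
    rw [Set.disjoint_left]
    intro s hs hs'
    exact absurd hs.2 (not_le.2 hs')
  have key : Im + δ * ENNReal.ofReal s₀ ≤ Ip := by
    rw [hIp, hIm, hsplit, lintegral_union measurableSet_Ioi hdisj,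
      lintegral_union measurableSet_Ioi hdisj]
    have e1 : (∫⁻ s in Set.Ioc (0:ℝ) s₀, ν {x | s < fm x}) + δ * ENNReal.ofReal s₀
        ≤ ∫⁻ s in Set.Ioc (0:ℝ) s₀, ν {x | s < fp x} := by
      have hc : δ * ENNReal.ofReal s₀ = ∫⁻ _ in Set.Ioc (0:ℝ) s₀, δ := by
        rw [setLIntegral_const, Real.volume_Ioc]
        congr 1
        rw [sub_zero]
      rw [hc, ← lintegral_add_right _ measurable_const]
      exact setLIntegral_mono' measurableSet_Ioc hball2
    have e2 : (∫⁻ s in Set.Ioi s₀, ν {x | s < fm x})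
        ≤ ∫⁻ s in Set.Ioi s₀, ν {x | s < fp x} :=
      setLIntegral_mono' measurableSet_Ioi fun s hs => hball s (lt_trans hs₀pos hs)
    calc (∫⁻ s in Set.Ioc (0:ℝ) s₀, ν {x | s < fm x})
          + (∫⁻ s in Set.Ioi s₀, ν {x | s < fm x}) + δ * ENNReal.ofReal s₀
        = ((∫⁻ s in Set.Ioc (0:ℝ) s₀, ν {x | s < fm x}) + δ * ENNReal.ofReal s₀)
          + (∫⁻ s in Set.Ioi s₀, ν {x | s < fm x}) := by
          rw [add_right_comm]
      _ ≤ _ := add_le_add e1 e2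
  have hlt_int : Im < Ip := by
    have hpos : δ * ENNReal.ofReal s₀ ≠ 0 :=
      mul_ne_zero hδpos (by simp [ENNReal.ofReal_pos.2 hs₀pos, (ENNReal.ofReal_pos.2 hs₀pos).ne'])
    calc Im < Im + δ * ENNReal.ofReal s₀ := ENNReal.lt_add_right (ne_of_lt hImtop) hpos
      _ ≤ Ip := key
  -- back to Bochner integrals
  have hfm_int : Integrable fm ν :=
    ⟨hfm_m.aestronglyMeasurable, by rw [hasFiniteIntegral_iff_ofReal hfm_nn, hlcm]; exact hImtop⟩
  have hfp_int : Integrable fp ν :=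
    ⟨hfp_m.aestronglyMeasurable, by rw [hasFiniteIntegral_iff_ofReal hfp_nn, hlcp]; exact hIptop⟩
  have hlogfun : ∫ x, Real.log x ∂ν = ∫ x, (fp x - fm x) ∂ν := by
    apply integral_congr_ae
    apply Filter.Eventually.of_forall
    intro x
    rw [hfp, hfm]
    simp only
    exact (max_zero_sub_max_neg_zero_eq_self (Real.log x)).symm
  rw [hlogfun, integral_sub hfp_int hfm_int]
  have hip : ∫ x, fp x ∂ν = Ip.toReal := by
    rw [integral_eq_lintegral_of_nonneg_ae hfp_nn hfp_m.aestronglyMeasurable, hlcp]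
  have him : ∫ x, fm x ∂ν = Im.toReal := by
    rw [integral_eq_lintegral_of_nonneg_ae hfm_nn hfm_m.aestronglyMeasurable, hlcm]
  rw [hip, him]
  have : Im.toReal < Ip.toReal :=
    (ENNReal.toReal_lt_toReal (ne_of_lt hImtop) (ne_of_lt hIptop)).2 hlt_int
  linarith

end SBAux

/-- For `α ∈ (1/2,1]`, `∫ log x dν_α(x) > 0`; consequently the Lyapunov exponent
`γ_p = ∫ log x dν_{α(p)}(x)` of the linear random Fibonacci sequence, with
`α(p) = (3p - 2 + √(5p² - 8p + 4))/(2p)`, is strictly positive for every `p ∈ (0,1)`. -/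
theorem sternBrocotMeasure_integral_log_pos :
    (∀ α : ℝ, 1 / 2 < α → α ≤ 1 → ∀ ν : Measure ℝ, IsSternBrocotMeasure α ν →
      0 < ∫ x, Real.log x ∂ν) ∧
    (∀ p : ℝ, 0 < p → p < 1 → ∀ ν : Measure ℝ,
      IsSternBrocotMeasure ((3 * p - 2 + Real.sqrt (5 * p ^ 2 - 8 * p + 4)) / (2 * p)) ν →
      0 < ∫ x, Real.log x ∂ν) := by
  constructor
  · intro α hα2 hα1 ν hν
    exact SBAux.integral_log_pos hν hα2 hα1
  · intro p hp0 hp1 ν hν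
    have hDpos : (0:ℝ) < 5 * p ^ 2 - 8 * p + 4 := by nlinarith
    have hsq : Real.sqrt (5 * p ^ 2 - 8 * p + 4) < 2 - p := by
      rw [show (2:ℝ) - p = Real.sqrt ((2 - p)^2) from (Real.sqrt_sq (by linarith)).symm]
      apply Real.sqrt_lt_sqrt (le_of_lt hDpos)
      nlinarith
    have hsq2 : 2 - 2*p < Real.sqrt (5 * p ^ 2 - 8 * p + 4) := by
      rw [show (2:ℝ) - 2*p = Real.sqrt ((2 - 2*p)^2) from (Real.sqrt_sq (by linarith)).symm]
      apply Real.sqrt_lt_sqrt (by positivity)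
      nlinarith
    have h2p : (0:ℝ) < 2 * p := by linarith
    have hα2 : 1/2 < (3 * p - 2 + Real.sqrt (5 * p ^ 2 - 8 * p + 4)) / (2 * p) := by
      rw [lt_div_iff₀ h2p]
      linarith
    have hα1 : (3 * p - 2 + Real.sqrt (5 * p ^ 2 - 8 * p + 4)) / (2 * p) ≤ 1 := by
      rw [div_le_one h2p]
      linarith
    exact SBAux.integral_log_pos hν hα2 hα1
end
end

section
/- Let k ≥ 3 and let y = y₃y₄⋯y_k be a word over {R, L} with y₃ = R and with no two consecutive letters L. Define integers g₁ = g₂ = 1 and, for 3 ≤ i ≤ k, g_i = g_{i−1} + g_{i−2} if y_i = R and g_i = g_{i−1} − g_{i−2} if y_i = L. Let Ry be the word y preceded by one extra letter R, decompose Ry uniquely as a concatenation of pieces, each piece being either RL or R, insert a cutting between every two successive identical pieces, and let a₁, a₂, …, a_ℓ be the numbers of pieces of the resulting blocks enumerated from the last block to the first. Then g_{k−1} > 0, g_k > 0, and g_k / g_{k−1} equals the continued fraction [0; a₁, a₂, …, a_ℓ] = 1/(a₁ + 1/(a₂ + ⋯ + 1/a_ℓ)) if the last piece of Ry is RL, and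 equals [a₁; a₂, …, a_ℓ] = a₁ + 1/(a₂ + ⋯ + 1/a_ℓ) if the last piece of Ry is R. -/
noncomputable section

/-- Labels along a path in the tree: starting from the pair `(g_{i-1}, g_i)`, each letter
(`true` = `R`, `false` = `L`) produces the next label, by addition for `R` and subtraction
for `L`. The result is the pair of the last two labels. -/
def gPair : ℤ × ℤ → List Bool → ℤ × ℤ
  | p, [] => p
  | (a, b), (c :: l) => gPair (b, if c then b + a else b - a) l

/-- The word spelled by a list of pieces, each piece being `R` (`true`) or `RL` (`false`);
letters: `true` = `R`, `false` = `L`. -/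
def piecesToWord : List Bool → List Bool
  | [] => []
  | true :: ps => true :: piecesToWord ps
  | false :: ps => true :: false :: piecesToWord ps

/-- Sizes of the blocks of a list of pieces, enumerated from the first block to the last one:
a cutting is inserted between every two successive *identical* pieces, and the blocks are the
maximal runs between cuttings. -/
def blockSizes : List Bool → List ℕ
  | [] => []
  | [_] => [1]
  | a :: b :: l =>
    match blockSizes (b :: l) with
    | n :: ns => if a = b then 1 :: n :: ns else (n + 1) :: ns
    | [] => [1]

/-- Value of the continued fraction `[a₁; a₂, …, a_ℓ] = a₁ + 1/(a₂ + 1/(⋯ + 1/a_ℓ))`. -/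
def contFrac : List ℕ → ℝ
  | [] => 0
  | [a] => a
  | a :: l => (a : ℝ) + 1 / contFrac l

/-- A word (over `{R, L}`, `true` = `R`, `false` = `L`) has no two consecutive letters `L`. -/
def NoLL (y : List Bool) : Prop := y.Chain' fun a b => a = true ∨ b = true

def pMap (q : Bool) (p : ℤ × ℤ) : ℤ × ℤ := if q then (p.2, p.1 + p.2) else (p.1 + p.2, p.1)

def appP : List Bool → ℤ × ℤ → ℤ × ℤ
  | [], p => p
  | q :: qs, p => appP qs (pMap q p)

lemma appP_snoc (ps : List Bool) (q : Bool) (p : ℤ × ℤ) :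
    appP (ps ++ [q]) p = pMap q (appP ps p) := by
  induction ps generalizing p with
  | nil => rfl
  | cons a l ih => simp [appP, ih]

lemma gPair_pieces (ps : List Bool) (p : ℤ × ℤ) :
    gPair p (piecesToWord ps) = appP ps p := by
  induction ps generalizing p with
  | nil => rfl
  | cons q qs ih =>
    obtain ⟨a, b⟩ := p
    cases q <;> simp [piecesToWord, gPair, appP, pMap, ih, add_comm]

lemma blockSizes_cons_cons (a b : Bool) (l : List Bool) :
    blockSizes (a :: b :: l) =
      match blockSizes (b :: l) with
      | n :: ns => if a = b then 1 :: n :: ns else (n + 1) :: ns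
      | [] => [1] := rfl

lemma blockSizes_ne_nil : ∀ (l : List Bool), l ≠ [] → blockSizes l ≠ []
  | [], h => absurd rfl h
  | [a], _ => by simp [blockSizes]
  | a :: b :: l, _ => by
    rw [blockSizes_cons_cons]
    rcases h : blockSizes (b :: l) with _ | ⟨n, ns⟩ <;> simp
    split <;> simp

lemma contFrac_cons (a : ℕ) (l : List ℕ) (h : l ≠ []) :
    contFrac (a :: l) = a + 1 / contFrac l := by
  cases l with
  | nil => exact absurd rfl h
  | cons b t => rfl

lemma contFrac_succ (n : ℕ) (ns : List ℕ) :
    contFrac ((n + 1) :: ns) = 1 + contFrac (n :: ns) := by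
  cases ns with
  | nil => simp [contFrac]; push_cast; ring
  | cons b t =>
    rw [contFrac_cons (n+1) (b::t) (by simp), contFrac_cons n (b::t) (by simp)]
    push_cast; ring

lemma contFrac_one_le : ∀ (l : List ℕ), l ≠ [] → (∀ x ∈ l, 1 ≤ x) → 1 ≤ contFrac l
  | [], h, _ => absurd rfl h
  | [a], _, h1 => by simpa [contFrac] using by exact_mod_cast h1 a (by simp)
  | a :: b :: t, _, h1 => by
    rw [contFrac_cons _ _ (by simp)]
    have hb : (1:ℝ) ≤ contFrac (b :: t) := contFrac_one_le (b :: t) (by simp)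
      (fun x hx => h1 x (by simp at hx ⊢; tauto))
    have ha : (1:ℝ) ≤ a := by exact_mod_cast h1 a (by simp)
    nlinarith [one_div_nonneg.mpr (le_trans zero_le_one hb)]

lemma blockSizes_one_le : ∀ (l : List Bool), ∀ x ∈ blockSizes l, 1 ≤ x
  | [] => by simp [blockSizes]
  | [a] => by simp [blockSizes]
  | a :: b :: l => by
    have ih := blockSizes_one_le (b :: l)
    intro x hx
    rw [blockSizes_cons_cons] at hx
    rcases h : blockSizes (b :: l) with _ | ⟨n, ns⟩ <;> rw [h] at hx ih
    · simp at hx; omega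
    · by_cases hab : a = b <;> simp [hab] at hx
      · rcases hx with rfl | rfl | h1
        · exact le_refl 1
        · exact ih x (by simp)
        · exact ih x (by simp [h1])
      · rcases hx with rfl | h1
        · have := ih n (by simp); omega
        · exact ih x (by simp [h1])

def snocBS : List ℕ → List ℕ
  | [] => [1]
  | [n] => [n + 1]
  | n :: ns => n :: snocBS ns

lemma snocBS_cons_cons (a b : ℕ) (l : List ℕ) :
    snocBS (a :: b :: l) = a :: snocBS (b :: l) := rfl

lemma snocBS_append : ∀ (xs : List ℕ) (n : ℕ), snocBS (xs ++ [n]) = xs ++ [n + 1]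
  | [], n => rfl
  | x :: xs, n => by
    cases xs with
    | nil => rfl
    | cons y ys =>
      have := snocBS_append (y :: ys) n
      simp only [List.cons_append, snocBS_cons_cons]
      rw [← List.cons_append, this]
      simp

lemma blockSizes_snoc : ∀ (l : List Bool) (a : Bool),
    blockSizes (l ++ [a]) =
      if l.getLast? = some a then blockSizes l ++ [1] else snocBS (blockSizes l)
  | [], a => by simp [blockSizes, snocBS]
  | [c], a => by
    by_cases h : c = a <;> simp [blockSizes, blockSizes_cons_cons, snocBS, h]
  | c :: d :: t, a => by
    have ih := blockSizes_snoc (d :: t) a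
    obtain ⟨m, ms, hB⟩ : ∃ m ms, blockSizes (d :: t) = m :: ms := by
      rcases h : blockSizes (d :: t) with _ | ⟨m, ms⟩
      · exact absurd h (blockSizes_ne_nil _ (by simp))
      · exact ⟨m, ms, rfl⟩
    simp only [List.cons_append] at ih ⊢
    rw [blockSizes_cons_cons c d (t ++ [a]), blockSizes_cons_cons c d t, ih,
        List.getLast?_cons_cons, hB]
    by_cases hla : (d :: t).getLast? = some a
    · rw [if_pos hla, if_pos hla]
      by_cases hcd : c = d <;> simp [hcd]
    · rw [if_neg hla, if_neg hla]
      cases ms with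
      | nil => by_cases hcd : c = d <;> simp [hcd, snocBS]
      | cons e es =>
        rw [snocBS_cons_cons]
        by_cases hcd : c = d <;> simp [hcd, snocBS_cons_cons]

lemma blockSizes_reverse : ∀ (l : List Bool), blockSizes l.reverse = (blockSizes l).reverse
  | [] => rfl
  | c :: l' => by
    have ih := blockSizes_reverse l'
    rw [List.reverse_cons, blockSizes_snoc, List.getLast?_reverse, ih]
    cases l' with
    | nil => simp [blockSizes, snocBS]
    | cons d t =>
      obtain ⟨m, ms, hB⟩ : ∃ m ms, blockSizes (d :: t) = m :: ms := by
        rcases h : blockSizes (d :: t) with _ | ⟨m, ms⟩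
        · exact absurd h (blockSizes_ne_nil _ (by simp))
        · exact ⟨m, ms, rfl⟩
      rw [blockSizes_cons_cons, hB]
      by_cases hcd : c = d
      · rw [List.head?_cons, if_pos (by rw [hcd])]
        simp [hcd]
      · rw [List.head?_cons, if_neg (by simpa using Ne.symm hcd),
            List.reverse_cons, snocBS_append]
        simp [hcd]

lemma main_lemma (ps : List Bool) : ps ≠ [] → ps.head? = some true →
    0 < (appP ps (0, 1)).1 ∧ 0 < (appP ps (0, 1)).2 ∧
    (((appP ps (0, 1)).2 : ℝ) / ((appP ps (0, 1)).1 : ℝ) =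
      if ps.getLast? = some false then 1 / contFrac (blockSizes ps).reverse
      else contFrac (blockSizes ps).reverse) := by
  induction ps using List.reverseRecOn with
  | nil => intro h; exact absurd rfl h
  | append_singleton l q ih =>
    intro _ hh
    rcases eq_or_ne l [] with rfl | hne
    · simp only [List.nil_append, List.head?_cons, Option.some.injEq] at hh
      subst hh
      norm_num [appP, pMap, blockSizes, contFrac]
    · have hh' : l.head? = some true := by
        cases l with
        | nil => exact absurd rfl hne
        | cons x xs => simpa using hh
      obtain ⟨ha, hb, hr⟩ := ih hne hh'
      obtain ⟨p₀, hgl⟩ : ∃ p₀, l.getLast? = some p₀ := by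
        cases l with
        | nil => exact absurd rfl hne
        | cons x xs => exact ⟨_, List.getLast?_eq_getLast (l := x :: xs) (by simp)⟩
      obtain ⟨n, ns, hD⟩ : ∃ n ns, (blockSizes l).reverse = n :: ns := by
        rcases h : (blockSizes l).reverse with _ | ⟨n, ns⟩
        · exact absurd (by simpa using h) (blockSizes_ne_nil l hne)
        · exact ⟨n, ns, rfl⟩
      have hBL : blockSizes l = ns.reverse ++ [n] := by
        rw [← List.reverse_reverse (blockSizes l), hD]; simp
      have hle : ∀ x ∈ (n :: ns), 1 ≤ x := by
        intro x hx
        have hx2 : x ∈ (blockSizes l).reverse := by rw [hD]; exact hx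
        exact blockSizes_one_le l x (List.mem_reverse.mp hx2)
      set C := contFrac (n :: ns) with hCdef
      have hC : (1 : ℝ) ≤ C := contFrac_one_le _ (by simp) hle
      have hC0 : (0 : ℝ) < C := lt_of_lt_of_le one_pos hC
      have hC0' : C ≠ 0 := ne_of_gt hC0
      have hglq : (l ++ [q]).getLast? = some q := by simp
      have hbs := blockSizes_snoc l q
      rw [appP_snoc]
      set A := appP l (0, 1) with hA
      have hα : (0 : ℝ) < (A.1 : ℝ) := by exact_mod_cast ha
      have hβ : (0 : ℝ) < (A.2 : ℝ) := by exact_mod_cast hb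
      have hα0 : (A.1 : ℝ) ≠ 0 := ne_of_gt hα
      have hβ0 : (A.2 : ℝ) ≠ 0 := ne_of_gt hβ
      rw [hgl, hD] at hr
      rw [hgl] at hbs
      have hpos1 : 0 < A.1 + A.2 := by omega
      cases q
      · -- q = false : new pair (A.1 + A.2, A.1)
        refine ⟨hpos1, ha, ?_⟩
        have hproj : pMap false A = (A.1 + A.2, A.1) := rfl
        rw [hglq, if_pos rfl, hproj]
        simp only [Prod.fst, Prod.snd]
        push_cast
        cases p₀
        · -- last of l = false : same piece, new block of size 1
          rw [if_pos rfl] at hr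
          rw [if_pos rfl] at hbs
          have hbs' : (blockSizes (l ++ [false])).reverse = 1 :: n :: ns := by
            rw [hbs, List.reverse_append, hD]; rfl
          rw [hbs', contFrac_cons 1 (n :: ns) (by simp), ← hCdef]
          push_cast
          have hab : (A.1 : ℝ) = A.2 * C := by
            rw [div_eq_div_iff hα0 hC0'] at hr
            linarith [hr]
          rw [hab]
          have h1 : (0 : ℝ) < 1 + 1 / C := by
            have := one_div_pos.mpr hC0; linarith
          have h2 : (0 : ℝ) < (A.2 : ℝ) * C + A.2 := by
            have := mul_pos hβ hC0; linarith
          rw [div_eq_div_iff (ne_of_gt h2) (ne_of_gt h1)]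
          field_simp
        · -- last of l = true : different piece, last block grows
          rw [if_neg (by simp)] at hr
          rw [if_neg (by simp)] at hbs
          have hbs' : (blockSizes (l ++ [false])).reverse = (n + 1) :: ns := by
            rw [hbs, hBL, snocBS_append, List.reverse_append]; simp
          rw [hbs', contFrac_succ, ← hCdef]
          have hab : (A.2 : ℝ) = C * A.1 := by
            rw [div_eq_iff hα0] at hr; exact hr
          rw [hab]
          have h1 : (0 : ℝ) < 1 + C := by linarith
          have h2 : (0 : ℝ) < (A.1 : ℝ) + C * A.1 := by
            have := mul_pos hC0 hα; linarith
          rw [div_eq_div_iff (ne_of_gt h2) (ne_of_gt h1)]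
          ring
      · -- q = true : new pair (A.2, A.1 + A.2)
        refine ⟨hb, hpos1, ?_⟩
        have hproj : pMap true A = (A.2, A.1 + A.2) := rfl
        rw [hglq, if_neg (by simp), hproj]
        simp only [Prod.fst, Prod.snd]
        push_cast
        cases p₀
        · -- last of l = false : different piece, last block grows
          rw [if_pos rfl] at hr
          rw [if_neg (by simp)] at hbs
          have hbs' : (blockSizes (l ++ [true])).reverse = (n + 1) :: ns := by
            rw [hbs, hBL, snocBS_append, List.reverse_append]; simp
          rw [hbs', contFrac_succ, ← hCdef]
          have hab : (A.1 : ℝ) = A.2 * C := by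
            rw [div_eq_div_iff hα0 hC0'] at hr
            linarith [hr]
          rw [hab]
          rw [div_eq_iff hβ0]
          ring
        · -- last of l = true : same piece, new block of size 1
          rw [if_neg (by simp)] at hr
          rw [if_pos rfl] at hbs
          have hbs' : (blockSizes (l ++ [true])).reverse = 1 :: n :: ns := by
            rw [hbs, List.reverse_append, hD]; rfl
          rw [hbs', contFrac_cons 1 (n :: ns) (by simp), ← hCdef]
          push_cast
          have hab : (A.2 : ℝ) = C * A.1 := by
            rw [div_eq_iff hα0] at hr; exact hr
          rw [hab]
          have h2 : (0 : ℝ) < C * A.1 := mul_pos hC0 hα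
          rw [div_eq_iff (ne_of_gt h2)]
          field_simp
          ring

/-- Labels and continued fractions: let `y = y₃⋯y_k` be a word starting with `R` with no two
consecutive `L`'s, let `g₁ = g₂ = 1, g₃, …, g_k` be the labels read along `y`
(addition for `R`, subtraction for `L`), and decompose `Ry` as a list `ps` of pieces
(`R` or `RL`).  Then `g_{k-1} > 0`, `g_k > 0`, and `g_k/g_{k-1}` is the continued fraction
`[0; a₁, …, a_ℓ]` if the last piece is `RL`, and `[a₁; a₂, …, a_ℓ]` if the last piece is `R`,
where `a₁, …, a_ℓ` are the sizes of the blocks of `ps` enumerated from the last block to the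
first one. -/
theorem gPair_div_eq_contFrac
    (y : List Bool) (hy : y ≠ []) (hhead : y.head? = some true) (hnoLL : NoLL y)
    (ps : List Bool) (hps : ps ≠ []) (hdecomp : piecesToWord ps = true :: y) :
    0 < (gPair (1, 1) y).1 ∧ 0 < (gPair (1, 1) y).2 ∧
    ((gPair (1, 1) y).2 : ℝ) / ((gPair (1, 1) y).1 : ℝ) =
      if ps.getLast hps = false then 1 / contFrac (blockSizes ps).reverse
      else contFrac (blockSizes ps).reverse := by
  have hps2 : ps.head? = some true := by
    cases ps with
    | nil => exact absurd rfl hps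
    | cons p rest =>
      cases p
      · exfalso
        have : (true :: false :: piecesToWord rest : List Bool) = true :: y := hdecomp
        have hy2 : y = false :: piecesToWord rest := by
          injection this with _ h2; exact h2.symm
        rw [hy2] at hhead
        simp at hhead
      · rfl
  have h1 : appP ps (0, 1) = gPair (1, 1) y := by
    rw [← gPair_pieces, hdecomp]
    simp [gPair]
  have key := main_lemma ps hps hps2
  rw [h1] at key
  have hlast : (ps.getLast hps = false) = (ps.getLast? = some false) := by
    rw [List.getLast?_eq_getLast hps]; simp
  obtain ⟨k1, k2, k3⟩ := key
  refine ⟨k1, k2, ?_⟩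
  by_cases h : ps.getLast hps = false
  · rw [if_pos h, k3, if_pos (hlast ▸ h)]
  · rw [if_neg h, k3, if_neg (fun hc => h (by rw [hlast]; exact hc))]
end
end
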